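/- arXiv:2001.04128 — 8 statements merged into one kernel-verified Lean document; each statement's English description precedes it below -/
import Mathlib

section
/- For every real γ > 0, writing R(γ) := K_1(γ)/K_2(γ), the quantities B_1(γ) := γ²R³ + 7γR² + (8 − γ²)R − 4γ − 16/γ, B_2(γ) := γR² + 2R − γ − 8/γ, and B_3(γ) := γR² + 4R − γ satisfy: B_1(γ) < 0, B_2(γ) < 0, B_3(γ) > 0, B_1(γ) − B_2(γ) < 0, and B_1(γ) − B_2(γ) − B_3(γ) < 0. Moreover B_1(γ) = (γR² + 3R − γ − 4/γ)·(γR + 4) and B_1(γ) − B_2(γ) − B_3(γ) = (γR² + 3R − γ − 4/γ)·(γR + 2). -/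
open MeasureTheory Real Set Filter

/-- The modified Bessel function of the second kind, via the integral
representation `K_j(γ) = (2^j j!/(2j)!) γ^{-j} ∫_γ^∞ e^{-t}(t²-γ²)^{j-1/2} dt`. -/
noncomputable def besselK (j : ℕ) (γ : ℝ) : ℝ :=
  ((2 : ℝ) ^ j * (Nat.factorial j) / (Nat.factorial (2 * j))) * γ ^ (-(j : ℝ)) *
    ∫ t in Set.Ioi γ, Real.exp (-t) * (t ^ 2 - γ ^ 2) ^ ((j : ℝ) - 1 / 2)

namespace MonatomicAux

/-- `J γ p q = ∫_γ^∞ e^{-t} (t-γ)^p (t+γ)^q dt`. -/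
noncomputable def J (γ p q : ℝ) : ℝ :=
  ∫ t in Set.Ioi γ, Real.exp (-t) * (t - γ) ^ p * (t + γ) ^ q

variable {γ p q : ℝ}

lemma continuousOn_aux (hγ : 0 < γ) (p q : ℝ) :
    ContinuousOn (fun t : ℝ => Real.exp (-t) * (t - γ) ^ p * (t + γ) ^ q) (Set.Ioi γ) := by
  intro t ht
  simp only [Set.mem_Ioi] at ht
  have h1 : (t - γ) ≠ 0 := by intro h; nlinarith
  have h2 : (t + γ) ≠ 0 := by intro h; nlinarith
  apply ContinuousAt.continuousWithinAt
  have c1 : ContinuousAt (fun t : ℝ => Real.exp (-t)) t :=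
    (Real.continuous_exp.comp continuous_neg).continuousAt
  have c2 : ContinuousAt (fun t : ℝ => (t - γ) ^ p) t :=
    ContinuousAt.rpow_const ((continuous_id.sub continuous_const).continuousAt) (Or.inl h1)
  have c3 : ContinuousAt (fun t : ℝ => (t + γ) ^ q) t :=
    ContinuousAt.rpow_const ((continuous_id.add continuous_const).continuousAt) (Or.inl h2)
  exact (c1.mul c2).mul c3


lemma integrableJ (hγ : 0 < γ) (hp : -1 < p) (hp2 : p ≤ 2) (hq2 : q ≤ 2) :
    IntegrableOn (fun t : ℝ => Real.exp (-t) * (t - γ) ^ p * (t + γ) ^ q) (Set.Ioi γ) := by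
  have hsub : Set.Ioc γ (γ + 1) ∪ Set.Ioi (γ + 1) = Set.Ioi γ :=
    Set.Ioc_union_Ioi_eq_Ioi (by linarith)
  rw [← hsub]
  apply MeasureTheory.IntegrableOn.union
  · -- near γ
    have hmeas : AEStronglyMeasurable (fun t : ℝ => Real.exp (-t) * (t - γ) ^ p * (t + γ) ^ q)
        (volume.restrict (Set.Ioc γ (γ + 1))) :=
      ((continuousOn_aux hγ p q).mono Set.Ioc_subset_Ioi_self).aestronglyMeasurable
        measurableSet_Ioc
    have hgint : IntegrableOn (fun t : ℝ => (t - γ) ^ p * max ((2*γ) ^ q) ((2*γ+1) ^ q))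
        (Set.Ioc γ (γ + 1)) := by
      have h := (intervalIntegral.intervalIntegrable_rpow' (a := 0) (b := 1) hp).comp_sub_right γ
      rw [intervalIntegrable_iff_integrableOn_Ioc_of_le (by linarith)] at h
      have h2 : Set.Ioc (0 + γ) (1 + γ) = Set.Ioc γ (γ + 1) := by
        rw [zero_add, add_comm]
      rw [h2] at h
      exact h.mul_const _
    apply Integrable.mono' hgint hmeas
    rw [ae_restrict_iff' measurableSet_Ioc]
    refine Filter.Eventually.of_forall fun t ht => ?_
    obtain ⟨ht1, ht2⟩ := ht
    have hb1 : (0:ℝ) < t - γ := by linarith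
    have hb2 : (0:ℝ) < t + γ := by linarith
    rw [Real.norm_eq_abs, abs_of_nonneg (by positivity)]
    have he : Real.exp (-t) ≤ 1 := by
      rw [show (1:ℝ) = Real.exp 0 by simp]
      exact Real.exp_le_exp.mpr (by linarith)
    have hq : (t + γ) ^ q ≤ max ((2*γ) ^ q) ((2*γ+1) ^ q) := by
      rcases le_or_gt 0 q with hq0 | hq0
      · exact le_trans (Real.rpow_le_rpow hb2.le (by linarith) hq0) (le_max_right _ _)
      · exact le_trans (Real.rpow_le_rpow_of_nonpos (by linarith) (by linarith) hq0.le)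
          (le_max_left _ _)
    calc Real.exp (-t) * (t - γ) ^ p * (t + γ) ^ q
        ≤ 1 * (t - γ) ^ p * max ((2*γ) ^ q) ((2*γ+1) ^ q) :=
          mul_le_mul (mul_le_mul he le_rfl (Real.rpow_nonneg hb1.le p) zero_le_one) hq
            (Real.rpow_nonneg hb2.le q) (by positivity)
      _ = (t - γ) ^ p * max ((2*γ) ^ q) ((2*γ+1) ^ q) := by ring
  · -- at infinity
    have hmeas : AEStronglyMeasurable (fun t : ℝ => Real.exp (-t) * (t - γ) ^ p * (t + γ) ^ q)
        (volume.restrict (Set.Ioi (γ + 1))) :=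
      ((continuousOn_aux hγ p q).mono (Set.Ioi_subset_Ioi (by linarith))).aestronglyMeasurable
        measurableSet_Ioi
    have hgint : IntegrableOn (fun t : ℝ => 4 * (Real.exp (-t) * t ^ ((5:ℝ) - 1)))
        (Set.Ioi (γ + 1)) :=
      ((Real.GammaIntegral_convergent (by norm_num : (0:ℝ) < 5)).mono_set
        (Set.Ioi_subset_Ioi (by linarith))).const_mul 4
    apply Integrable.mono' hgint hmeas
    rw [ae_restrict_iff' measurableSet_Ioi]
    refine Filter.Eventually.of_forall fun t ht => ?_
    simp only [Set.mem_Ioi] at ht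
    have ht0 : (0:ℝ) < t := by linarith
    have hb1 : (1:ℝ) ≤ t - γ := by linarith
    have hb2 : (1:ℝ) ≤ t + γ := by linarith
    rw [Real.norm_eq_abs, abs_of_nonneg (by positivity)]
    have h1 : (t - γ) ^ p ≤ t ^ (2:ℝ) :=
      le_trans (Real.rpow_le_rpow_of_exponent_le hb1 hp2)
        (Real.rpow_le_rpow (by linarith) (by linarith) (by norm_num))
    have h2 : (t + γ) ^ q ≤ (2*t) ^ (2:ℝ) :=
      le_trans (Real.rpow_le_rpow_of_exponent_le hb2 hq2)
        (Real.rpow_le_rpow (by linarith) (by linarith) (by norm_num))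
    have h3 : (2*t) ^ (2:ℝ) = 4 * t ^ (2:ℝ) := by
      rw [Real.mul_rpow (by norm_num) ht0.le,
        show (2:ℝ) ^ (2:ℝ) = (2:ℝ) ^ ((2:ℕ):ℝ) by norm_num, Real.rpow_natCast]
      norm_num
    calc Real.exp (-t) * (t - γ) ^ p * (t + γ) ^ q
        ≤ Real.exp (-t) * t ^ (2:ℝ) * ((2*t) ^ (2:ℝ)) :=
          mul_le_mul (mul_le_mul le_rfl h1 (Real.rpow_nonneg (by linarith) p)
            (Real.exp_pos _).le) h2 (Real.rpow_nonneg (by linarith) q) (by positivity)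
      _ = 4 * (Real.exp (-t) * (t ^ (2:ℝ) * t ^ (2:ℝ))) := by rw [h3]; ring
      _ = 4 * (Real.exp (-t) * t ^ ((5:ℝ) - 1)) := by
          rw [← Real.rpow_add ht0]; norm_num

lemma posJ (hγ : 0 < γ) (hp : -1 < p) (hp2 : p ≤ 2) (hq2 : q ≤ 2) : 0 < J γ p q := by
  rw [J, setIntegral_pos_iff_support_of_nonneg_ae _ (integrableJ hγ hp hp2 hq2)]
  · have hset : (Function.support fun t : ℝ => Real.exp (-t) * (t - γ) ^ p * (t + γ) ^ q)
        ∩ Set.Ioi γ = Set.Ioi γ := by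
      rw [Set.inter_eq_right]
      intro t ht
      simp only [Set.mem_Ioi] at ht
      have h1 : (0:ℝ) < t - γ := by linarith
      have h2 : (0:ℝ) < t + γ := by linarith
      exact Function.mem_support.mpr (by positivity)
    rw [hset, Real.volume_Ioi]
    exact ENNReal.zero_lt_top
  · refine eventually_of_mem (self_mem_ae_restrict measurableSet_Ioi) fun t ht => ?_
    simp only [Set.mem_Ioi] at ht
    have h1 : (0:ℝ) < t - γ := by linarith
    have h2 : (0:ℝ) < t + γ := by linarith
    positivity

lemma splitJ (hγ : 0 < γ) (hp : -1 < p) (hp2 : p ≤ 1) (hq2 : q ≤ 1) :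
    J γ p (q + 1) = J γ (p + 1) q + 2 * γ * J γ p q := by
  have h1 : J γ p (q + 1) = ∫ t in Set.Ioi γ,
      (Real.exp (-t) * (t - γ) ^ (p+1) * (t + γ) ^ q +
        2 * γ * (Real.exp (-t) * (t - γ) ^ p * (t + γ) ^ q)) := by
    rw [J]
    refine setIntegral_congr_fun measurableSet_Ioi fun t ht => ?_
    simp only [Set.mem_Ioi] at ht
    have h1 : (t - γ) ≠ 0 := by intro h; nlinarith
    have h2 : (t + γ) ≠ 0 := by intro h; nlinarith
    rw [Real.rpow_add_one h2, Real.rpow_add_one h1]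
    ring
  rw [h1, integral_add (integrableJ hγ (by linarith) (by linarith) (by linarith))
    ((integrableJ hγ hp (by linarith) (by linarith)).const_mul _), MeasureTheory.integral_const_mul]
  rfl

lemma ibpJ (hγ : 0 < γ) (hp : 0 < p) (hp2 : p ≤ 2) (hq2 : q ≤ 2) :
    p * J γ (p - 1) q + q * J γ p (q - 1) = J γ p q := by
  set F : ℝ → ℝ := fun t => Real.exp (-t) * ((t - γ) ^ p * (t + γ) ^ q) with hF
  set G : ℝ → ℝ := fun t =>
      p * (Real.exp (-t) * (t - γ) ^ (p - 1) * (t + γ) ^ q) +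
      q * (Real.exp (-t) * (t - γ) ^ p * (t + γ) ^ (q - 1)) -
      Real.exp (-t) * (t - γ) ^ p * (t + γ) ^ q with hG
  have i1 := integrableJ (q := q) hγ (by linarith : (-1:ℝ) < p - 1) (by linarith) hq2
  have i2 := integrableJ (q := q - 1) hγ (by linarith : (-1:ℝ) < p) hp2 (by linarith)
  have i3 := integrableJ (q := q) hγ (by linarith : (-1:ℝ) < p) hp2 hq2
  have hGint : IntegrableOn G (Set.Ioi γ) := ((i1.const_mul p).add (i2.const_mul q)).sub i3
  have hderiv : ∀ t ∈ Set.Ioi γ, HasDerivAt F (G t) t := by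
    intro t ht
    simp only [Set.mem_Ioi] at ht
    have h1 : (t - γ) ≠ 0 := by intro h; nlinarith
    have h2 : (t + γ) ≠ 0 := by intro h; nlinarith
    have d1 : HasDerivAt (fun t : ℝ => Real.exp (-t)) (-Real.exp (-t)) t := by
      simpa using ((hasDerivAt_neg t).exp)
    have d2 : HasDerivAt (fun t : ℝ => (t - γ) ^ p) (p * (t - γ) ^ (p - 1)) t := by
      simpa using ((hasDerivAt_id t).sub_const γ).rpow_const (Or.inl h1)
    have d3 : HasDerivAt (fun t : ℝ => (t + γ) ^ q) (q * (t + γ) ^ (q - 1)) t := by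
      simpa using ((hasDerivAt_id t).add_const γ).rpow_const (Or.inl h2)
    have := d1.mul (d2.mul d3)
    convert this using 1
    · rfl
    · rfl
    · rfl
    simp only [hG, Pi.mul_apply]
    ring
  have hcont : ContinuousWithinAt F (Set.Ici γ) γ := by
    apply ContinuousAt.continuousWithinAt
    have c2 : ContinuousAt (fun t : ℝ => (t - γ) ^ p) γ :=
      ContinuousAt.rpow_const ((continuous_id.sub continuous_const).continuousAt)
        (Or.inr hp.le)
    have c3 : ContinuousAt (fun t : ℝ => (t + γ) ^ q) γ :=
      ContinuousAt.rpow_const ((continuous_id.add continuous_const).continuousAt)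
        (Or.inl (by intro h; nlinarith))
    exact ((Real.continuous_exp.comp continuous_neg).continuousAt).mul (c2.mul c3)
  have htends : Tendsto F atTop (nhds 0) := by
    have hbound : ∀ᶠ t in atTop, F t ≤ 4 * (t ^ (4:ℕ) * Real.exp (-t)) := by
      filter_upwards [eventually_ge_atTop (γ + 1)] with t ht
      have ht0 : (0:ℝ) < t := by linarith
      have hb1 : (1:ℝ) ≤ t - γ := by linarith
      have hb2 : (1:ℝ) ≤ t + γ := by linarith
      have hc1 : t ^ (2:ℝ) = t ^ (2:ℕ) := by
        rw [← Real.rpow_natCast t 2]; norm_num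
      have hc2 : (2*t) ^ (2:ℝ) = (2*t) ^ (2:ℕ) := by
        rw [← Real.rpow_natCast (2*t) 2]; norm_num
      have h1 : (t - γ) ^ p ≤ t ^ (2:ℕ) :=
        (le_trans (Real.rpow_le_rpow_of_exponent_le hb1 hp2)
          (Real.rpow_le_rpow (by linarith) (by linarith) (by norm_num))).trans_eq hc1
      have h2 : (t + γ) ^ q ≤ (2*t) ^ (2:ℕ) :=
        (le_trans (Real.rpow_le_rpow_of_exponent_le hb2 hq2)
          (Real.rpow_le_rpow (by linarith) (by linarith) (by norm_num))).trans_eq hc2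
      have key : F t ≤ Real.exp (-t) * (t ^ (2:ℕ) * (2*t) ^ (2:ℕ)) := by
        rw [hF]
        refine mul_le_mul le_rfl (mul_le_mul h1 h2 (Real.rpow_nonneg (by linarith) q)
          (by positivity)) (by positivity) (Real.exp_pos _).le
      refine key.trans (le_of_eq ?_)
      ring
    have hpos : ∀ᶠ t in atTop, 0 ≤ F t := by
      filter_upwards [eventually_ge_atTop (γ + 1)] with t ht
      have hb1 : (0:ℝ) ≤ t - γ := by linarith
      have hb2 : (0:ℝ) ≤ t + γ := by linarith
      rw [hF]
      positivity
    have hg : Tendsto (fun t : ℝ => 4 * (t ^ (4:ℕ) * Real.exp (-t))) atTop (nhds 0) := by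
      simpa using (tendsto_pow_mul_exp_neg_atTop_nhds_zero 4).const_mul 4
    exact squeeze_zero' hpos hbound hg
  have hFγ : F γ = 0 := by
    rw [hF]
    simp [Real.zero_rpow (ne_of_gt hp)]
  have h0 : ∫ t in Set.Ioi γ, G t = 0 - F γ :=
    integral_Ioi_of_hasDerivAt_of_tendsto hcont hderiv hGint htends
  rw [hFγ, sub_zero] at h0
  have hsplit : ∫ t in Set.Ioi γ, G t =
      p * J γ (p - 1) q + q * J γ p (q - 1) - J γ p q := by
    rw [hG]
    have iadd : IntegrableOn (fun t : ℝ =>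
        p * (Real.exp (-t) * (t - γ) ^ (p - 1) * (t + γ) ^ q) +
        q * (Real.exp (-t) * (t - γ) ^ p * (t + γ) ^ (q - 1))) (Set.Ioi γ) :=
      (i1.const_mul p).add (i2.const_mul q)
    rw [integral_sub iadd i3,
      integral_add (i1.const_mul p) (i2.const_mul q),
      MeasureTheory.integral_const_mul, MeasureTheory.integral_const_mul]
    rfl
  rw [hsplit] at h0
  linarith

lemma besselK_one (hγ : 0 < γ) : besselK 1 γ = γ⁻¹ * J γ (1/2) (1/2) := by
  rw [besselK, J]
  have hint : ∫ t in Set.Ioi γ, Real.exp (-t) * (t ^ 2 - γ ^ 2) ^ (((1:ℕ) : ℝ) - 1 / 2) =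
      ∫ t in Set.Ioi γ, Real.exp (-t) * (t - γ) ^ ((1:ℝ)/2) * (t + γ) ^ ((1:ℝ)/2) := by
    refine setIntegral_congr_fun measurableSet_Ioi fun t ht => ?_
    simp only [Set.mem_Ioi] at ht
    have h1 : (0:ℝ) ≤ t - γ := by linarith
    have h2 : (0:ℝ) ≤ t + γ := by linarith
    rw [show t ^ 2 - γ ^ 2 = (t - γ) * (t + γ) by ring,
      Real.mul_rpow h1 h2]
    norm_num
    ring
  rw [hint]
  norm_num [Nat.factorial]
  rw [Real.rpow_neg_one]
  exact Or.inl rfl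

lemma besselK_two (hγ : 0 < γ) : besselK 2 γ = (γ ^ 2)⁻¹ * (J γ (3/2) (3/2) / 3) := by
  rw [besselK, J]
  have hint : ∫ t in Set.Ioi γ, Real.exp (-t) * (t ^ 2 - γ ^ 2) ^ (((2:ℕ) : ℝ) - 1 / 2) =
      ∫ t in Set.Ioi γ, Real.exp (-t) * (t - γ) ^ ((3:ℝ)/2) * (t + γ) ^ ((3:ℝ)/2) := by
    refine setIntegral_congr_fun measurableSet_Ioi fun t ht => ?_
    simp only [Set.mem_Ioi] at ht
    have h1 : (0:ℝ) ≤ t - γ := by linarith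
    have h2 : (0:ℝ) ≤ t + γ := by linarith
    rw [show t ^ 2 - γ ^ 2 = (t - γ) * (t + γ) by ring,
      Real.mul_rpow h1 h2]
    norm_num
    ring
  rw [hint]
  norm_num [Nat.factorial]
  have hγ2 : γ ^ (-2 : ℝ) = (γ ^ 2)⁻¹ := by
    rw [Real.rpow_neg hγ.le]
    congr 1
    rw [show (2:ℝ) = ((2:ℕ):ℝ) by norm_num, Real.rpow_natCast]
  ring

set_option maxHeartbeats 1000000 in
lemma key (γ : ℝ) (hγ : 0 < γ) : ∃ B C : ℝ, besselK 1 γ = γ⁻¹ * B ∧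
    besselK 2 γ = (γ ^ 2)⁻¹ * (C / 3) ∧ 0 < B ∧ 0 < C ∧
    ∃ u : ℝ, C = 3 * B * u ∧ 2 * (γ + 1) ^ 2 < (2 * γ + 1) * u ∧ u < 2 + γ := by
  have e1 := ibpJ (γ := γ) (p := 1/2) (q := 1/2) hγ (by norm_num) (by norm_num) (by norm_num)
  have e2 := ibpJ (γ := γ) (p := 1/2) (q := -(1/2)) hγ (by norm_num) (by norm_num) (by norm_num)
  have e3 := ibpJ (γ := γ) (p := 3/2) (q := 1/2) hγ (by norm_num) (by norm_num) (by norm_num)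
  have e4 := ibpJ (γ := γ) (p := 3/2) (q := 3/2) hγ (by norm_num) (by norm_num) (by norm_num)
  have s1 := splitJ (γ := γ) (p := -(1/2)) (q := -(1/2)) hγ (by norm_num) (by norm_num) (by norm_num)
  have s2 := splitJ (γ := γ) (p := 1/2) (q := -(1/2)) hγ (by norm_num) (by norm_num) (by norm_num)
  have s3 := splitJ (γ := γ) (p := 1/2) (q := 1/2) hγ (by norm_num) (by norm_num) (by norm_num)
  norm_num at e1 e2 e3 e4 s1 s2 s3
  have hA : 0 < J γ (-(1/2)) (-(1/2)) := posJ hγ (by norm_num) (by norm_num) (by norm_num)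
  have hP : 0 < J γ (1/2) (-(1/2)) := posJ hγ (by norm_num) (by norm_num) (by norm_num)
  have hT : 0 < J γ (1/2) (-(3/2)) := posJ hγ (by norm_num) (by norm_num) (by norm_num)
  have hB : 0 < J γ (1/2) (1/2) := posJ hγ (by norm_num) (by norm_num) (by norm_num)
  set A := J γ (-(1/2)) (-(1/2)) with hAdef
  set P := J γ (1/2) (-(1/2)) with hPdef
  set T := J γ (1/2) (-(3/2)) with hTdef
  set B := J γ (1/2) (1/2) with hBdef
  set W := J γ (3/2) (-(1/2)) with hWdef
  set V := J γ (3/2) (1/2) with hVdef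
  set U := J γ (1/2) (3/2) with hUdef
  set C := J γ (3/2) (3/2) with hCdef
  have hK1 := besselK_one (γ := γ) hγ
  have hK2 := besselK_two (γ := γ) hγ
  rw [← hBdef] at hK1
  rw [← hCdef] at hK2
  clear_value A P T B W V U C
  -- derived relations
  have hBP : B = P + γ * A := by linear_combination -e1 + (1/2) * s1
  have hAT : A = 2 * P + T := by linear_combination 2 * e2
  have hCsum : C = 6 * B + 3 * γ ^ 2 * A := by
    linear_combination -e4 + (3/2) * s3 - 3 * e3 - (3/2) * s2 - 3 * γ * e1 + (3/2) * γ * s1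
  have hC : 0 < C := by nlinarith [mul_pos hγ hA]
  have hlow : γ * A < B := by linarith
  have hhigh : 2 * B < (2 * γ + 1) * A := by nlinarith
  refine ⟨B, C, hK1, hK2, hB, hC, C / (3 * B), ?_, ?_, ?_⟩
  · field_simp
  · have hkey : 6 * (γ + 1) ^ 2 * B < (2 * γ + 1) * C := by
      rw [hCsum]
      nlinarith [mul_lt_mul_of_pos_left hhigh (mul_pos hγ hγ)]
    rw [show (2 * γ + 1) * (C / (3 * B)) = ((2 * γ + 1) * C) / (3 * B) by ring]
    rw [lt_div_iff₀ (by nlinarith [hB] : (0:ℝ) < 3 * B)]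
    nlinarith [hkey]
  · have h1 : C < 3 * B * (2 + γ) := by
      rw [hCsum]
      nlinarith [mul_lt_mul_of_pos_left hlow hγ]
    rw [div_lt_iff₀ (by nlinarith [hB] : (0:ℝ) < 3 * B)]
    nlinarith [h1]

end MonatomicAux

set_option maxHeartbeats 1000000 in
theorem monatomic_B_signs (γ : ℝ) (hγ : 0 < γ) :
    let R := besselK 1 γ / besselK 2 γ
    let B₁ := γ ^ 2 * R ^ 3 + 7 * γ * R ^ 2 + (8 - γ ^ 2) * R - 4 * γ - 16 / γ
    let B₂ := γ * R ^ 2 + 2 * R - γ - 8 / γ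
    let B₃ := γ * R ^ 2 + 4 * R - γ
    B₁ < 0 ∧ B₂ < 0 ∧ B₃ > 0 ∧ B₁ - B₂ < 0 ∧ B₁ - B₂ - B₃ < 0 ∧
      B₁ = (γ * R ^ 2 + 3 * R - γ - 4 / γ) * (γ * R + 4) ∧
      B₁ - B₂ - B₃ = (γ * R ^ 2 + 3 * R - γ - 4 / γ) * (γ * R + 2) := by
  obtain ⟨B, C, hK1, hK2, hB, hC, u, hCu, hu1, hu2⟩ := MonatomicAux.key γ hγ
  intro R B₁ B₂ B₃
  have hγ' : γ ≠ 0 := ne_of_gt hγ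
  have hupos : 0 < u := by nlinarith
  have hune : u ≠ 0 := ne_of_gt hupos
  have hBne : B ≠ 0 := ne_of_gt hB
  have hR : R = γ / u := by
    show besselK 1 γ / besselK 2 γ = γ / u
    rw [hK1, hK2, hCu]
    field_simp
  have hRpos : 0 < R := by rw [hR]; positivity
  have he1 : 0 < (2*γ+1)*u - 2*(γ+1)^2 := by linarith
  have hg2e1 : 0 < γ^2 * ((2*γ+1)*u - 2*(γ+1)^2) := mul_pos (by positivity) he1
  -- numerator inequality for F = γR²+3R-γ-4/γ
  have hXpos : 0 < (16 + 4*((2*γ+1)*u - 2*(γ+1)^2) + 32*γ + 17*γ^2 + γ^2*((2*γ+1)*u - 2*(γ+1)^2) + 2*γ^3 + 4*γ^4) := by nlinarith [he1, hg2e1, pow_pos hγ 3, pow_pos hγ 4]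
  have keyF : (2*γ+1)^2 * (γ^4 + 3*γ^2*u - (γ^2+4)*u^2)
      = -(16 + 64*γ + 94*γ^2 + 56*γ^3 + 9*γ^4)
        - ((2*γ+1)*u - 2*(γ+1)^2) * (16 + 4*((2*γ+1)*u - 2*(γ+1)^2) + 32*γ + 17*γ^2 + γ^2*((2*γ+1)*u - 2*(γ+1)^2) + 2*γ^3 + 4*γ^4) := by ring
  have hNF : γ^4 + 3*γ^2*u - (γ^2+4)*u^2 < 0 := by
    nlinarith [keyF, mul_pos he1 hXpos, sq_nonneg (2*γ+1), pow_pos hγ 3, pow_pos hγ 4]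
  clear keyF hXpos
  -- numerator inequality for B₂
  have hX2pos : 0 < (32 + 8*((2*γ+1)*u - 2*(γ+1)^2) + 64*γ + 34*γ^2 + γ^2*((2*γ+1)*u - 2*(γ+1)^2) + 4*γ^3 + 4*γ^4) := by nlinarith [he1, hg2e1, pow_pos hγ 3, pow_pos hγ 4]
  have key2 : (2*γ+1)^2 * (γ^4 + 2*γ^2*u - (γ^2+8)*u^2)
      = -(32 + 128*γ + 192*γ^2 + 128*γ^3 + 35*γ^4 + 4*γ^5)
        - ((2*γ+1)*u - 2*(γ+1)^2) * (32 + 8*((2*γ+1)*u - 2*(γ+1)^2) + 64*γ + 34*γ^2 + γ^2*((2*γ+1)*u - 2*(γ+1)^2) + 4*γ^3 + 4*γ^4) := by ring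
  have hN2 : γ^4 + 2*γ^2*u - (γ^2+8)*u^2 < 0 := by
    nlinarith [key2, mul_pos he1 hX2pos, sq_nonneg (2*γ+1), pow_pos hγ 3, pow_pos hγ 4, pow_pos hγ 5]
  clear key2 hX2pos
  -- numerator inequality for B₃
  have hN3 : 0 < γ^2 + 4*u - u^2 := by
    nlinarith [mul_pos (show (0:ℝ) < 2 + γ - u by linarith) hupos,
      mul_pos (show (0:ℝ) < 2 + γ - u by linarith) hγ, sq_nonneg (u - 2 - γ)]
  -- numerator inequality for B₁ - B₂
  have hQpos : 0 < (96 + 48*((2*γ+1)*u - 2*(γ+1)^2) + 8*((2*γ+1)*u - 2*(γ+1)^2)^2 + 384*γ + 96*γ*((2*γ+1)*u - 2*(γ+1)^2) + 588*γ^2 + 60*γ^2*((2*γ+1)*u - 2*(γ+1)^2) + 3*γ^2*((2*γ+1)*u - 2*(γ+1)^2)^2 + 432*γ^3 + 24*γ^3*((2*γ+1)*u - 2*(γ+1)^2) + 190*γ^4 + 19*γ^4*((2*γ+1)*u - 2*(γ+1)^2) + 88*γ^5 + 2*γ^5*((2*γ+1)*u - 2*(γ+1)^2) + 32*γ^6 +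 8*γ^7) := by
    nlinarith [he1, hg2e1, mul_pos he1 he1, mul_pos hγ he1,
      mul_pos (pow_pos hγ 3) he1, mul_pos (pow_pos hγ 4) he1, mul_pos (pow_pos hγ 5) he1,
      mul_pos (mul_pos (pow_pos hγ 2) he1) he1,
      pow_pos hγ 3, pow_pos hγ 4, pow_pos hγ 5, pow_pos hγ 6, pow_pos hγ 7]
  have key4 : (2*γ+1)^3 * (γ^6 + 6*γ^4*u + (6-γ^2)*γ^2*u^2 - (3*γ^2+8)*u^3)
      = -(64 + 384*γ + 960*γ^2 + 1280*γ^3 + 976*γ^4 + 432*γ^5 + 107*γ^6 + 10*γ^7)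
        - ((2*γ+1)*u - 2*(γ+1)^2) * (96 + 48*((2*γ+1)*u - 2*(γ+1)^2) + 8*((2*γ+1)*u - 2*(γ+1)^2)^2 + 384*γ + 96*γ*((2*γ+1)*u - 2*(γ+1)^2) + 588*γ^2 + 60*γ^2*((2*γ+1)*u - 2*(γ+1)^2) + 3*γ^2*((2*γ+1)*u - 2*(γ+1)^2)^2 + 432*γ^3 + 24*γ^3*((2*γ+1)*u - 2*(γ+1)^2) + 190*γ^4 + 19*γ^4*((2*γ+1)*u - 2*(γ+1)^2) + 88*γ^5 + 2*γ^5*((2*γ+1)*u - 2*(γ+1)^2) + 32*γ^6 + 8*γ^7) := by ring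
  have hN4 : γ^6 + 6*γ^4*u + (6-γ^2)*γ^2*u^2 - (3*γ^2+8)*u^3 < 0 := by
    nlinarith [key4, mul_pos he1 hQpos, pow_pos (show (0:ℝ) < 2*γ+1 by linarith) 3,
      pow_pos hγ 3, pow_pos hγ 4, pow_pos hγ 5, pow_pos hγ 6, pow_pos hγ 7]
  clear key4 hQpos hg2e1
  -- translate back
  have hu2pos : 0 < u^2 := by positivity
  have hu3pos : 0 < u^3 := by positivity
  have hF : γ * R ^ 2 + 3 * R - γ - 4 / γ < 0 := by
    have h : (γ * R ^ 2 + 3 * R - γ - 4 / γ) * (γ * u ^ 2) =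
        γ^4 + 3*γ^2*u - (γ^2+4)*u^2 := by
      rw [hR]; field_simp; ring
    nlinarith [h, hNF, mul_pos hγ hu2pos]
  have hB2 : B₂ < 0 := by
    have h : (γ * R ^ 2 + 2 * R - γ - 8 / γ) * (γ * u ^ 2) =
        γ^4 + 2*γ^2*u - (γ^2+8)*u^2 := by
      rw [hR]; field_simp; ring
    show γ * R ^ 2 + 2 * R - γ - 8 / γ < 0
    nlinarith [h, hN2, mul_pos hγ hu2pos]
  have hB3 : 0 < B₃ := by
    have h : (γ * R ^ 2 + 4 * R - γ) * u ^ 2 = γ * (γ^2 + 4*u - u^2) := by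
      rw [hR]; field_simp
    show 0 < γ * R ^ 2 + 4 * R - γ
    nlinarith [h, mul_pos hγ hN3, hu2pos]
  have hB12 : B₁ - B₂ < 0 := by
    have h : (γ ^ 2 * R ^ 3 + 6 * γ * R ^ 2 + (6 - γ ^ 2) * R - 3 * γ - 8 / γ) * (γ * u ^ 3) =
        γ^6 + 6*γ^4*u + (6-γ^2)*γ^2*u^2 - (3*γ^2+8)*u^3 := by
      rw [hR]; field_simp; ring
    have h2 : B₁ - B₂ = γ ^ 2 * R ^ 3 + 6 * γ * R ^ 2 + (6 - γ ^ 2) * R - 3 * γ - 8 / γ := by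
      show γ ^ 2 * R ^ 3 + 7 * γ * R ^ 2 + (8 - γ ^ 2) * R - 4 * γ - 16 / γ -
        (γ * R ^ 2 + 2 * R - γ - 8 / γ) = _
      ring
    rw [h2]
    nlinarith [h, hN4, mul_pos hγ hu3pos]
  have hfact1 : B₁ = (γ * R ^ 2 + 3 * R - γ - 4 / γ) * (γ * R + 4) := by
    show γ ^ 2 * R ^ 3 + 7 * γ * R ^ 2 + (8 - γ ^ 2) * R - 4 * γ - 16 / γ = _
    field_simp
    ring
  have hfact2 : B₁ - B₂ - B₃ = (γ * R ^ 2 + 3 * R - γ - 4 / γ) * (γ * R + 2) := by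
    show γ ^ 2 * R ^ 3 + 7 * γ * R ^ 2 + (8 - γ ^ 2) * R - 4 * γ - 16 / γ -
      (γ * R ^ 2 + 2 * R - γ - 8 / γ) - (γ * R ^ 2 + 4 * R - γ) = _
    field_simp
    ring
  have hB1 : B₁ < 0 := by
    rw [hfact1]; exact mul_neg_of_neg_of_pos hF (by positivity)
  have hB123 : B₁ - B₂ - B₃ < 0 := by
    rw [hfact2]; exact mul_neg_of_neg_of_pos hF (by positivity)
  exact ⟨hB1, hB2, hB3, hB12, hB123, hfact1, hfact2⟩
end

section
/- For every real γ > 0, writing Q(γ) := K_0(γ)/K_1(γ), the quantities B̄_1(γ) := γ²Q³ + 5γQ² − γ²Q − 4γ − 16/γ, B̄_2(γ) := γQ² − γ − 8/γ, and B̄_3(γ) := γQ² + 2Q − γ satisfy: B̄_1(γ) < 0, B̄_3(γ) > 0, B̄_1(γ) − B̄_2(γ) < 0, and B̄_1(γ) − B̄_2(γ) − B̄_3(γ) < 0. Moreover B̄_1(γ) = (γQ² + Q − γ − 4/γ)·(γQ + 4) and B̄_1(γ) − B̄_2(γ) − B̄_3(γ) = (γQ² + Q − γ − 4/γ)·(γQ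 + 2). -/
open MeasureTheory Real
open Set Filter

lemma wk_cont (γ : ℝ) (hγ : 0 < γ) (k : ℕ) :
    ContinuousOn (fun t : ℝ => Real.exp (-t) * t ^ k * (t ^ 2 - γ ^ 2) ^ (-(1/2) : ℝ)) (Set.Ioi γ) := by
  intro t ht
  have hγ' : 0 ≤ γ ∨ True := Or.inr trivial
  apply ContinuousAt.continuousWithinAt
  apply ContinuousAt.mul
  · exact (Real.continuous_exp.comp continuous_neg).continuousAt.mul
      (continuous_pow k).continuousAt
  · apply ContinuousAt.rpow_const
    · exact ((continuous_pow 2).sub continuous_const).continuousAt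
    · left
      have h1 : γ < t := ht
      have h2 : 0 < t ^ 2 - γ ^ 2 := by nlinarith
      exact ne_of_gt h2

lemma pow_le_fact_exp (x : ℝ) (hx : 0 ≤ x) (k : ℕ) : x ^ k ≤ k.factorial * Real.exp x := by
  have h := Real.sum_le_exp_of_nonneg hx (k+1)
  have h2 : x ^ k / k.factorial ≤ ∑ i ∈ Finset.range (k+1), x ^ i / i.factorial :=
    Finset.single_le_sum (f := fun i => x ^ i / (i.factorial : ℝ))
      (fun i _ => by positivity) (Finset.self_mem_range_succ k)
  have hk : (0:ℝ) < k.factorial := by positivity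
  calc x ^ k = (x ^ k / k.factorial) * k.factorial := by field_simp
  _ ≤ Real.exp x * k.factorial := mul_le_mul_of_nonneg_right (h2.trans h) hk.le
  _ = k.factorial * Real.exp x := by ring

lemma wk_integrable (γ : ℝ) (hγ : 0 < γ) (k : ℕ) :
    IntegrableOn (fun t : ℝ => Real.exp (-t) * t ^ k * (t ^ 2 - γ ^ 2) ^ (-(1/2) : ℝ)) (Set.Ioi γ) := by
  have hsplit : Set.Ioi γ = Set.Ioc γ (γ+1) ∪ Set.Ioi (γ+1) := by
    rw [Set.Ioc_union_Ioi_eq_Ioi]; linarith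
  rw [hsplit]
  apply MeasureTheory.IntegrableOn.union
  · -- near the singularity
    have hmeas : AEStronglyMeasurable (fun t : ℝ => Real.exp (-t) * t ^ k * (t ^ 2 - γ ^ 2) ^ (-(1/2) : ℝ))
        (volume.restrict (Set.Ioc γ (γ+1))) :=
      ((wk_cont γ hγ k).mono Set.Ioc_subset_Ioi_self).aestronglyMeasurable measurableSet_Ioc
    set C : ℝ := (γ+1) ^ k * (2*γ) ^ (-(1/2) : ℝ) with hC
    have hg : IntegrableOn (fun t : ℝ => C * (t - γ) ^ (-(1/2) : ℝ)) (Set.Ioc γ (γ+1)) := by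
      apply Integrable.const_mul
      have h1 : IntervalIntegrable (fun x : ℝ => x ^ (-(1/2) : ℝ)) volume 0 1 :=
        intervalIntegral.intervalIntegrable_rpow' (by norm_num)
      have h2 := h1.comp_sub_right γ
      rw [intervalIntegrable_iff_integrableOn_Ioc_of_le (by linarith)] at h2
      rw [zero_add, add_comm (1:ℝ) γ] at h2
      exact h2
    apply Integrable.mono' hg hmeas
    filter_upwards [ae_restrict_mem measurableSet_Ioc] with t ht
    have h1 : γ < t := ht.1
    have h2 : t ≤ γ + 1 := ht.2
    have hbase : 0 < t ^ 2 - γ ^ 2 := by nlinarith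
    have ht0 : (0:ℝ) < t := lt_trans hγ h1
    have hfp : 0 ≤ Real.exp (-t) * t ^ k * (t ^ 2 - γ ^ 2) ^ (-(1/2) : ℝ) := by
      have := Real.rpow_nonneg hbase.le (-(1/2) : ℝ)
      positivity
    rw [Real.norm_eq_abs, abs_of_nonneg hfp]
    have hfac : (t ^ 2 - γ ^ 2 : ℝ) ^ (-(1/2) : ℝ) = (t - γ) ^ (-(1/2) : ℝ) * (t + γ) ^ (-(1/2) : ℝ) := by
      rw [← Real.mul_rpow (by linarith) (by linarith)]
      ring_nf
    have hb1 : (t + γ) ^ (-(1/2) : ℝ) ≤ (2*γ) ^ (-(1/2) : ℝ) :=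
      Real.rpow_le_rpow_of_nonpos (by linarith) (by linarith) (by norm_num)
    have hexp : Real.exp (-t) ≤ 1 := Real.exp_le_one_iff.2 (by linarith)
    have htk : t ^ k ≤ (γ+1) ^ k := pow_le_pow_left₀ ht0.le (by linarith) k
    have hne : 0 ≤ (t - γ) ^ (-(1/2) : ℝ) := Real.rpow_nonneg (by linarith) _
    calc Real.exp (-t) * t ^ k * (t ^ 2 - γ ^ 2) ^ (-(1/2) : ℝ)
        ≤ 1 * (γ+1) ^ k * ((t - γ) ^ (-(1/2) : ℝ) * (2*γ) ^ (-(1/2) : ℝ)) := by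
          rw [hfac]
          apply mul_le_mul (mul_le_mul hexp htk (by positivity) (by norm_num))
            (mul_le_mul_of_nonneg_left hb1 hne) (by positivity)
          positivity
      _ = C * (t - γ) ^ (-(1/2) : ℝ) := by rw [hC]; ring
  · -- the tail
    have hmeas : AEStronglyMeasurable (fun t : ℝ => Real.exp (-t) * t ^ k * (t ^ 2 - γ ^ 2) ^ (-(1/2) : ℝ))
        (volume.restrict (Set.Ioi (γ+1))) :=
      ((wk_cont γ hγ k).mono (Set.Ioi_subset_Ioi (by linarith))).aestronglyMeasurable measurableSet_Ioi
    have hg : IntegrableOn (fun t : ℝ => (k.factorial * 2 ^ k : ℝ) * Real.exp (-(1/2) * t)) (Set.Ioi (γ+1)) :=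
      (exp_neg_integrableOn_Ioi (γ+1) (by norm_num : (0:ℝ) < 1/2)).const_mul _
    apply Integrable.mono' hg hmeas
    filter_upwards [ae_restrict_mem measurableSet_Ioi] with t ht
    have h1 : γ + 1 < t := ht
    have ht0 : (0:ℝ) < t := by linarith
    have hbase : (1:ℝ) ≤ t ^ 2 - γ ^ 2 := by nlinarith
    have hfp : 0 ≤ Real.exp (-t) * t ^ k * (t ^ 2 - γ ^ 2) ^ (-(1/2) : ℝ) := by
      have := Real.rpow_nonneg (by linarith : (0:ℝ) ≤ t ^2 - γ ^2) (-(1/2) : ℝ)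
      positivity
    rw [Real.norm_eq_abs, abs_of_nonneg hfp]
    have h2 : (t ^ 2 - γ ^ 2 : ℝ) ^ (-(1/2) : ℝ) ≤ 1 :=
      Real.rpow_le_one_of_one_le_of_nonpos hbase (by norm_num)
    have h3 : t ^ k ≤ k.factorial * 2 ^ k * Real.exp (t/2) := by
      have h5 := pow_le_fact_exp (t/2) (by linarith) k
      have h4 : t ^ k = 2 ^ k * (t/2) ^ k := by rw [← mul_pow]; ring_nf
      rw [h4]
      calc 2 ^ k * (t/2) ^ k ≤ 2 ^ k * (k.factorial * Real.exp (t/2)) := by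
            apply mul_le_mul_of_nonneg_left h5 (by positivity)
        _ = k.factorial * 2 ^ k * Real.exp (t/2) := by ring
    calc Real.exp (-t) * t ^ k * (t ^ 2 - γ ^ 2) ^ (-(1/2) : ℝ)
        ≤ Real.exp (-t) * t ^ k * 1 :=
          mul_le_mul_of_nonneg_left h2 (by positivity)
      _ = Real.exp (-t) * t ^ k := by ring
      _ ≤ Real.exp (-t) * (k.factorial * 2 ^ k * Real.exp (t/2)) :=
          mul_le_mul_of_nonneg_left h3 (by positivity)
      _ = (k.factorial * 2 ^ k : ℝ) * Real.exp (-(1/2) * t) := by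
          rw [mul_comm (Real.exp (-t)), mul_assoc, ← Real.exp_add]; ring_nf

noncomputable def Mk (γ : ℝ) (k : ℕ) : ℝ :=
  ∫ t in Set.Ioi γ, Real.exp (-t) * t ^ k * (t ^ 2 - γ ^ 2) ^ (-(1/2) : ℝ)

lemma Mk_pos (γ : ℝ) (hγ : 0 < γ) (k : ℕ) : 0 < Mk γ k := by
  rw [Mk, setIntegral_pos_iff_support_of_nonneg_ae]
  · apply lt_of_lt_of_le _ (measure_mono (?_ : Set.Ioi γ ⊆ _))
    · simp [hγ]
    · intro t ht
      have h1 : γ < t := ht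
      have ht0 : 0 < t := lt_trans hγ h1
      have hbase : 0 < t ^ 2 - γ ^ 2 := by nlinarith
      constructor
      · have := Real.rpow_pos_of_pos hbase (-(1/2) : ℝ)
        simp only [Function.mem_support]
        positivity
      · exact ht
  · filter_upwards [ae_restrict_mem measurableSet_Ioi] with t ht
    have h1 : γ < t := ht
    have ht0 : 0 < t := lt_trans hγ h1
    have hbase : 0 < t ^ 2 - γ ^ 2 := by nlinarith
    have := Real.rpow_pos_of_pos hbase (-(1/2) : ℝ)
    positivity
  · exact wk_integrable γ hγ k

lemma M1_ge (γ : ℝ) (hγ : 0 < γ) : γ * Mk γ 0 ≤ Mk γ 1 := by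
  have h := sub_nonneg.2 (le_refl (0:ℝ))
  have hsub : 0 ≤ Mk γ 1 - γ * Mk γ 0 := by
    rw [Mk, Mk, ← integral_const_mul, ← integral_sub (wk_integrable γ hγ 1)
      ((wk_integrable γ hγ 0).const_mul γ)]
    apply setIntegral_nonneg measurableSet_Ioi
    intro t ht
    have h1 : γ < t := ht
    have ht0 : 0 < t := lt_trans hγ h1
    have hbase : 0 < t ^ 2 - γ ^ 2 := by nlinarith
    have hr := Real.rpow_nonneg hbase.le (-(1/2) : ℝ)
    have : Real.exp (-t) * t ^ 1 * (t ^ 2 - γ ^ 2) ^ (-(1/2) : ℝ) -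
        γ * (Real.exp (-t) * t ^ 0 * (t ^ 2 - γ ^ 2) ^ (-(1/2) : ℝ))
        = (t - γ) * (Real.exp (-t) * (t ^ 2 - γ ^ 2) ^ (-(1/2) : ℝ)) := by ring
    rw [this]
    exact mul_nonneg (by linarith) (mul_nonneg (Real.exp_pos _).le hr)
  linarith

lemma Mk_CS (γ : ℝ) (hγ : 0 < γ) (k : ℕ) (a b : ℝ) :
    0 ≤ a^2 * Mk γ (k+2) - 2*a*b* Mk γ (k+1) + b^2 * Mk γ k := by
  have hint : ∀ j, IntegrableOn
      (fun t : ℝ => Real.exp (-t) * t ^ j * (t ^ 2 - γ ^ 2) ^ (-(1/2) : ℝ)) (Set.Ioi γ) :=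
    wk_integrable γ hγ
  have heq : a^2 * Mk γ (k+2) - 2*a*b* Mk γ (k+1) + b^2 * Mk γ k
      = ∫ t in Set.Ioi γ, (a^2 * (Real.exp (-t) * t ^ (k+2) * (t ^ 2 - γ ^ 2) ^ (-(1/2) : ℝ))
        - 2*a*b * (Real.exp (-t) * t ^ (k+1) * (t ^ 2 - γ ^ 2) ^ (-(1/2) : ℝ)))
        + b^2 * (Real.exp (-t) * t ^ k * (t ^ 2 - γ ^ 2) ^ (-(1/2) : ℝ)) := by
    have hfg : IntegrableOn (fun t : ℝ =>
        a^2 * (Real.exp (-t) * t ^ (k+2) * (t ^ 2 - γ ^ 2) ^ (-(1/2) : ℝ))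
        - 2*a*b * (Real.exp (-t) * t ^ (k+1) * (t ^ 2 - γ ^ 2) ^ (-(1/2) : ℝ))) (Set.Ioi γ) :=
      ((hint (k+2)).const_mul _).sub ((hint (k+1)).const_mul _)
    rw [Mk, Mk, Mk, ← integral_const_mul, ← integral_const_mul, ← integral_const_mul,
      ← integral_sub ((hint (k+2)).const_mul _) ((hint (k+1)).const_mul _),
      ← integral_add hfg ((hint k).const_mul _)]
  rw [heq]
  apply setIntegral_nonneg measurableSet_Ioi
  intro t ht
  have h1 : γ < t := ht
  have ht0 : 0 < t := lt_trans hγ h1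
  have hbase : 0 < t ^ 2 - γ ^ 2 := by nlinarith
  have hr := Real.rpow_nonneg hbase.le (-(1/2) : ℝ)
  have hexp := (Real.exp_pos (-t)).le
  have : a^2 * (Real.exp (-t) * t ^ (k+2) * (t ^ 2 - γ ^ 2) ^ (-(1/2) : ℝ))
        - 2*a*b * (Real.exp (-t) * t ^ (k+1) * (t ^ 2 - γ ^ 2) ^ (-(1/2) : ℝ))
        + b^2 * (Real.exp (-t) * t ^ k * (t ^ 2 - γ ^ 2) ^ (-(1/2) : ℝ))
      = (t*a - b)^2 * (Real.exp (-t) * t ^ k * (t ^ 2 - γ ^ 2) ^ (-(1/2) : ℝ)) := by ring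
  rw [this]
  positivity

-- pointwise: (t²-γ²)^{1/2} = (t²-γ²) · (t²-γ²)^{-1/2}
lemma half_eq (x : ℝ) (hx : 0 < x) : x ^ ((1:ℝ)/2) = x * x ^ (-(1/2) : ℝ) := by
  have h := Real.rpow_add hx 1 (-(1/2) : ℝ)
  norm_num at h
  rw [h]

lemma vk_integrable (γ : ℝ) (hγ : 0 < γ) (k : ℕ) :
    IntegrableOn (fun t : ℝ => Real.exp (-t) * t ^ k * (t ^ 2 - γ ^ 2) ^ ((1:ℝ)/2)) (Set.Ioi γ) := by
  apply IntegrableOn.congr_fun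
    (((wk_integrable γ hγ (k+2)).sub ((wk_integrable γ hγ k).const_mul (γ^2))))
    _ measurableSet_Ioi
  intro t ht
  have h1 : γ < t := ht
  have hbase : 0 < t ^ 2 - γ ^ 2 := by nlinarith [lt_trans hγ h1]
  simp only [Pi.sub_apply]
  rw [half_eq _ hbase]
  ring

lemma vk_eq_int (γ : ℝ) (hγ : 0 < γ) (k : ℕ) :
    ∫ t in Set.Ioi γ, Real.exp (-t) * t ^ k * (t ^ 2 - γ ^ 2) ^ ((1:ℝ)/2)
      = (∫ t in Set.Ioi γ, Real.exp (-t) * t ^ (k+2) * (t ^ 2 - γ ^ 2) ^ (-(1/2) : ℝ))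
        - γ^2 * ∫ t in Set.Ioi γ, Real.exp (-t) * t ^ k * (t ^ 2 - γ ^ 2) ^ (-(1/2) : ℝ) := by
  rw [← integral_const_mul, ← integral_sub (wk_integrable γ hγ (k+2))
    ((wk_integrable γ hγ k).const_mul (γ^2))]
  apply setIntegral_congr_fun measurableSet_Ioi
  intro t ht
  have h1 : γ < t := ht
  have hbase : 0 < t ^ 2 - γ ^ 2 := by nlinarith [lt_trans hγ h1]
  dsimp only
  rw [half_eq _ hbase]
  ring

lemma sqrt_le_self (γ t : ℝ) (hγ : 0 < γ) (ht : γ < t) :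
    (t ^ 2 - γ ^ 2) ^ ((1:ℝ)/2) ≤ t := by
  have ht0 : 0 < t := lt_trans hγ ht
  have hbase : 0 ≤ t ^ 2 - γ ^ 2 := by nlinarith
  calc (t ^ 2 - γ ^ 2) ^ ((1:ℝ)/2) ≤ (t ^ 2) ^ ((1:ℝ)/2) :=
        Real.rpow_le_rpow hbase (by nlinarith) (by norm_num)
    _ = t := by
        rw [← Real.rpow_natCast t 2, ← Real.rpow_mul ht0.le]
        norm_num

lemma G_tendsto (γ : ℝ) (hγ : 0 < γ) (k : ℕ) :
    Tendsto (fun t : ℝ => -(Real.exp (-t) * t ^ k * (t ^ 2 - γ ^ 2) ^ ((1:ℝ)/2)))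
      atTop (nhds 0) := by
  apply squeeze_zero_norm' (a := fun t : ℝ => t ^ (k+1) * Real.exp (-t))
  · filter_upwards [eventually_gt_atTop γ] with t ht
    have ht0 : 0 < t := lt_trans hγ ht
    have hbase : 0 ≤ t ^ 2 - γ ^ 2 := by nlinarith
    have hr := Real.rpow_nonneg hbase ((1:ℝ)/2)
    rw [norm_neg, Real.norm_eq_abs, abs_of_nonneg (by positivity)]
    calc Real.exp (-t) * t ^ k * (t ^ 2 - γ ^ 2) ^ ((1:ℝ)/2)
        ≤ Real.exp (-t) * t ^ k * t := by
          apply mul_le_mul_of_nonneg_left (sqrt_le_self γ t hγ ht) (by positivity)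
      _ = t ^ (k+1) * Real.exp (-t) := by ring
  · exact tendsto_pow_mul_exp_neg_atTop_nhds_zero (k+1)

lemma ibp0 (γ : ℝ) (hγ : 0 < γ) :
    ∫ t in Set.Ioi γ, (Real.exp (-t) * (t ^ 2 - γ ^ 2) ^ ((1:ℝ)/2)
      - Real.exp (-t) * t ^ 1 * (t ^ 2 - γ ^ 2) ^ (-(1/2) : ℝ)) = 0 := by
  have key := integral_Ioi_of_hasDerivAt_of_tendsto
    (f := fun t : ℝ => -(Real.exp (-t) * t ^ 0 * (t ^ 2 - γ ^ 2) ^ ((1:ℝ)/2)))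
    (f' := fun t : ℝ => Real.exp (-t) * (t ^ 2 - γ ^ 2) ^ ((1:ℝ)/2)
      - Real.exp (-t) * t ^ 1 * (t ^ 2 - γ ^ 2) ^ (-(1/2) : ℝ))
    (a := γ) (m := 0) ?_ ?_ ?_ (G_tendsto γ hγ 0)
  · rw [key]
    norm_num [Real.zero_rpow]
  · apply Continuous.continuousWithinAt
    apply Continuous.neg
    apply Continuous.mul
    · exact (Real.continuous_exp.comp continuous_neg).mul (continuous_pow 0)
    · exact ((continuous_pow 2).sub continuous_const).rpow_const
        (fun x => Or.inr (by norm_num))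
  · intro t ht
    have h1 : γ < t := ht
    have hbase : 0 < t ^ 2 - γ ^ 2 := by nlinarith [lt_trans hγ h1]
    have hd1 : HasDerivAt (fun t : ℝ => Real.exp (-t)) (-Real.exp (-t)) t := by
      simpa using ((hasDerivAt_id t).neg.exp)
    have hd2 : HasDerivAt (fun t : ℝ => (t ^ 2 - γ ^ 2) ^ ((1:ℝ)/2))
        ((2 * t ^ 1) * ((1:ℝ)/2) * (t ^ 2 - γ ^ 2) ^ ((1:ℝ)/2 - 1)) t :=
      ((hasDerivAt_pow 2 t).sub_const (γ ^ 2)).rpow_const (Or.inl (ne_of_gt hbase))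
    have hd := (hd1.mul hd2).neg
    have hshape : (fun t : ℝ => -(Real.exp (-t) * t ^ 0 * (t ^ 2 - γ ^ 2) ^ ((1:ℝ)/2)))
        = fun t : ℝ => -(Real.exp (-t) * (t ^ 2 - γ ^ 2) ^ ((1:ℝ)/2)) := by
      funext s
      ring
    rw [hshape]
    convert hd using 1
    · rfl
    have he : ((1:ℝ)/2 - 1) = (-(1/2) : ℝ) := by norm_num
    rw [he]
    ring
  · apply IntegrableOn.congr_fun
      ((vk_integrable γ hγ 0).sub (wk_integrable γ hγ 1)) _ measurableSet_Ioi
    intro t ht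
    simp only [Pi.sub_apply]
    ring

lemma ibp1 (γ : ℝ) (hγ : 0 < γ) :
    ∫ t in Set.Ioi γ, (Real.exp (-t) * t ^ 1 * (t ^ 2 - γ ^ 2) ^ ((1:ℝ)/2)
      - (Real.exp (-t) * (t ^ 2 - γ ^ 2) ^ ((1:ℝ)/2)
         + Real.exp (-t) * t ^ 2 * (t ^ 2 - γ ^ 2) ^ (-(1/2) : ℝ))) = 0 := by
  have key := integral_Ioi_of_hasDerivAt_of_tendsto
    (f := fun t : ℝ => -(Real.exp (-t) * t ^ 1 * (t ^ 2 - γ ^ 2) ^ ((1:ℝ)/2)))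
    (f' := fun t : ℝ => Real.exp (-t) * t ^ 1 * (t ^ 2 - γ ^ 2) ^ ((1:ℝ)/2)
      - (Real.exp (-t) * (t ^ 2 - γ ^ 2) ^ ((1:ℝ)/2)
         + Real.exp (-t) * t ^ 2 * (t ^ 2 - γ ^ 2) ^ (-(1/2) : ℝ)))
    (a := γ) (m := 0) ?_ ?_ ?_ (G_tendsto γ hγ 1)
  · rw [key]
    norm_num [Real.zero_rpow]
  · apply Continuous.continuousWithinAt
    apply Continuous.neg
    apply Continuous.mul
    · exact (Real.continuous_exp.comp continuous_neg).mul (continuous_pow 1)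
    · exact ((continuous_pow 2).sub continuous_const).rpow_const
        (fun x => Or.inr (by norm_num))
  · intro t ht
    have h1 : γ < t := ht
    have hbase : 0 < t ^ 2 - γ ^ 2 := by nlinarith [lt_trans hγ h1]
    have hd1 : HasDerivAt (fun t : ℝ => Real.exp (-t)) (-Real.exp (-t)) t := by
      simpa using ((hasDerivAt_id t).neg.exp)
    have hd2 : HasDerivAt (fun t : ℝ => (t ^ 2 - γ ^ 2) ^ ((1:ℝ)/2))
        ((2 * t ^ 1) * ((1:ℝ)/2) * (t ^ 2 - γ ^ 2) ^ ((1:ℝ)/2 - 1)) t :=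
      ((hasDerivAt_pow 2 t).sub_const (γ ^ 2)).rpow_const (Or.inl (ne_of_gt hbase))
    have hd3 : HasDerivAt (fun t : ℝ => t * (t ^ 2 - γ ^ 2) ^ ((1:ℝ)/2))
        (1 * ((t ^ 2 - γ ^ 2) ^ ((1:ℝ)/2)) +
          t * ((2 * t ^ 1) * ((1:ℝ)/2) * (t ^ 2 - γ ^ 2) ^ ((1:ℝ)/2 - 1))) t :=
      (hasDerivAt_id t).mul hd2
    have hd := (hd1.mul hd3).neg
    have hshape : (fun t : ℝ => -(Real.exp (-t) * t ^ 1 * (t ^ 2 - γ ^ 2) ^ ((1:ℝ)/2)))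
        = fun t : ℝ => -(Real.exp (-t) * (t * (t ^ 2 - γ ^ 2) ^ ((1:ℝ)/2))) := by
      funext s
      ring
    rw [hshape]
    convert hd using 1
    · rfl
    have he : ((1:ℝ)/2 - 1) = (-(1/2) : ℝ) := by norm_num
    rw [he]
    rw [half_eq _ hbase]
    ring_nf
  · apply IntegrableOn.congr_fun
      ((vk_integrable γ hγ 1).sub ((vk_integrable γ hγ 0).add (wk_integrable γ hγ 2)))
      _ measurableSet_Ioi
    intro t ht
    simp only [Pi.sub_apply, Pi.add_apply]
    ring

lemma v0_integrable' (γ : ℝ) (hγ : 0 < γ) :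
    IntegrableOn (fun t : ℝ => Real.exp (-t) * (t ^ 2 - γ ^ 2) ^ ((1:ℝ)/2)) (Set.Ioi γ) := by
  apply IntegrableOn.congr_fun (vk_integrable γ hγ 0) _ measurableSet_Ioi
  intro t ht; dsimp only; ring

lemma I1_eq (γ : ℝ) (hγ : 0 < γ) :
    ∫ t in Set.Ioi γ, Real.exp (-t) * (t ^ 2 - γ ^ 2) ^ ((1:ℝ)/2) = Mk γ 1 := by
  have h := ibp0 γ hγ
  rw [integral_sub (v0_integrable' γ hγ) (wk_integrable γ hγ 1), sub_eq_zero] at h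
  rw [h, Mk]

lemma v0_eq (γ : ℝ) (hγ : 0 < γ) :
    ∫ t in Set.Ioi γ, Real.exp (-t) * t ^ 0 * (t ^ 2 - γ ^ 2) ^ ((1:ℝ)/2)
      = ∫ t in Set.Ioi γ, Real.exp (-t) * (t ^ 2 - γ ^ 2) ^ ((1:ℝ)/2) := by
  apply setIntegral_congr_fun measurableSet_Ioi
  intro t ht; dsimp only; ring

lemma M2_eq (γ : ℝ) (hγ : 0 < γ) : Mk γ 2 = Mk γ 1 + γ^2 * Mk γ 0 := by
  have h := vk_eq_int γ hγ 0
  rw [v0_eq γ hγ, I1_eq γ hγ] at h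
  have h2 : (∫ t in Set.Ioi γ, Real.exp (-t) * t ^ (0+2) * (t ^ 2 - γ ^ 2) ^ (-(1/2) : ℝ)) = Mk γ 2 := rfl
  have h0 : (∫ t in Set.Ioi γ, Real.exp (-t) * t ^ 0 * (t ^ 2 - γ ^ 2) ^ (-(1/2) : ℝ)) = Mk γ 0 := rfl
  rw [h2, h0] at h
  linarith

lemma M3_eq (γ : ℝ) (hγ : 0 < γ) : Mk γ 3 = (2+γ^2) * Mk γ 1 + γ^2 * Mk γ 0 := by
  have h := ibp1 γ hγ
  have hadd : IntegrableOn (fun t : ℝ => Real.exp (-t) * (t ^ 2 - γ ^ 2) ^ ((1:ℝ)/2)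
      + Real.exp (-t) * t ^ 2 * (t ^ 2 - γ ^ 2) ^ (-(1/2) : ℝ)) (Set.Ioi γ) :=
    (v0_integrable' γ hγ).add (wk_integrable γ hγ 2)
  rw [integral_sub (vk_integrable γ hγ 1) hadd, sub_eq_zero,
    integral_add (v0_integrable' γ hγ) (wk_integrable γ hγ 2), I1_eq γ hγ] at h
  have h1 := vk_eq_int γ hγ 1
  have h3 : (∫ t in Set.Ioi γ, Real.exp (-t) * t ^ (1+2) * (t ^ 2 - γ ^ 2) ^ (-(1/2) : ℝ)) = Mk γ 3 := rfl
  have hw1 : (∫ t in Set.Ioi γ, Real.exp (-t) * t ^ 1 * (t ^ 2 - γ ^ 2) ^ (-(1/2) : ℝ)) = Mk γ 1 := rfl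
  have hw2 : (∫ t in Set.Ioi γ, Real.exp (-t) * t ^ 2 * (t ^ 2 - γ ^ 2) ^ (-(1/2) : ℝ)) = Mk γ 2 := rfl
  rw [h3, hw1] at h1
  rw [hw2] at h
  rw [h1] at h
  have := M2_eq γ hγ
  linarith

lemma besselK0_eq (γ : ℝ) (hγ : 0 < γ) : besselK 0 γ = Mk γ 0 := by
  rw [besselK, Mk]
  norm_num

lemma besselK1_eq (γ : ℝ) (hγ : 0 < γ) : besselK 1 γ = Mk γ 1 / γ := by
  rw [besselK]
  norm_num
  rw [I1_eq γ hγ, Real.rpow_neg_one]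
  field_simp

lemma alg_main (γ m n q : ℝ) (hγ : 0 < γ) (hm : 0 < m) (hn : 0 < n)
    (hcs1 : n^2 ≤ m*n + γ^2*m^2)
    (hcs2 : (n + γ^2*m)^2 ≤ n*((2+γ^2)*n + γ^2*m))
    (hq : q = γ * m / n) :
    (γ ^ 2 * q ^ 3 + 5 * γ * q ^ 2 - γ ^ 2 * q - 4 * γ - 16 / γ < 0) ∧
    (γ * q ^ 2 + 2 * q - γ > 0) ∧
    (γ ^ 2 * q ^ 3 + 5 * γ * q ^ 2 - γ ^ 2 * q - 4 * γ - 16 / γ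
      - (γ * q ^ 2 - γ - 8 / γ) < 0) ∧
    (γ ^ 2 * q ^ 3 + 5 * γ * q ^ 2 - γ ^ 2 * q - 4 * γ - 16 / γ
      - (γ * q ^ 2 - γ - 8 / γ) - (γ * q ^ 2 + 2 * q - γ) < 0) ∧
    (γ ^ 2 * q ^ 3 + 5 * γ * q ^ 2 - γ ^ 2 * q - 4 * γ - 16 / γ
      = (γ * q ^ 2 + q - γ - 4 / γ) * (γ * q + 4)) ∧
    (γ ^ 2 * q ^ 3 + 5 * γ * q ^ 2 - γ ^ 2 * q - 4 * γ - 16 / γ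
      - (γ * q ^ 2 - γ - 8 / γ) - (γ * q ^ 2 + 2 * q - γ)
      = (γ * q ^ 2 + q - γ - 4 / γ) * (γ * q + 2)) := by
  have hγ' : γ ≠ 0 := ne_of_gt hγ
  have hn' : n ≠ 0 := ne_of_gt hn
  have hqpos : 0 < q := by rw [hq]; positivity
  have hAnum : γ^4*m^2 + γ^2*m*n - γ^2*n^2 - 4*n^2 < 0 := by
    nlinarith [hcs2, sq_nonneg n, hn]
  have hA : γ * q^2 + q - γ - 4/γ < 0 := by
    rw [hq]
    have heq : γ * (γ*m/n)^2 + (γ*m/n) - γ - 4/γ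
        = (γ^4*m^2 + γ^2*m*n - γ^2*n^2 - 4*n^2) / (γ*n^2) := by
      field_simp
    rw [heq]
    exact div_neg_of_neg_of_pos hAnum (by positivity)
  have hfact1 : γ ^ 2 * q ^ 3 + 5 * γ * q ^ 2 - γ ^ 2 * q - 4 * γ - 16 / γ
      = (γ * q ^ 2 + q - γ - 4 / γ) * (γ * q + 4) := by
    field_simp
    ring
  have hfact2 : γ ^ 2 * q ^ 3 + 5 * γ * q ^ 2 - γ ^ 2 * q - 4 * γ - 16 / γ
      - (γ * q ^ 2 - γ - 8 / γ) - (γ * q ^ 2 + 2 * q - γ)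
      = (γ * q ^ 2 + q - γ - 4 / γ) * (γ * q + 2) := by
    field_simp
    ring
  refine ⟨?_, ?_, ?_, ?_, hfact1, hfact2⟩
  · rw [hfact1]
    exact mul_neg_of_neg_of_pos hA (by positivity)
  · rw [hq]
    have heq : γ * (γ*m/n)^2 + 2*(γ*m/n) - γ = (γ * (γ^2*m^2 + 2*m*n - n^2)) / n^2 := by
      field_simp
    rw [heq]
    apply div_pos _ (by positivity)
    apply mul_pos hγ
    nlinarith [hcs1, mul_pos hm hn]
  · rw [hq]
    have heq : γ ^ 2 * (γ*m/n) ^ 3 + 5 * γ * (γ*m/n) ^ 2 - γ ^ 2 * (γ*m/n) - 4 * γ - 16 / γ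
        - (γ * (γ*m/n) ^ 2 - γ - 8 / γ)
        = (γ^6*m^3 + 4*γ^4*m^2*n - γ^4*m*n^2 - 3*γ^2*n^3 - 8*n^3) / (γ*n^3) := by
      field_simp
      ring
    rw [heq]
    apply div_neg_of_neg_of_pos _ (by positivity)
    have k1 : γ^4*m^2 + γ^2*m*n ≤ (1+γ^2)*n^2 := by nlinarith [hcs2]
    have c1 : γ^2*m*(γ^4*m^2 + γ^2*m*n) ≤ γ^2*m*((1+γ^2)*n^2) :=
      mul_le_mul_of_nonneg_left k1 (by positivity)
    have c2 : 4*n*(γ^4*m^2 + γ^2*m*n) ≤ 4*n*((1+γ^2)*n^2) :=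
      mul_le_mul_of_nonneg_left k1 (by positivity)
    have hn3 : (0:ℝ) < n^3 := by positivity
    have hq2 : (0:ℝ) ≤ γ^2*(m*n^2) := by positivity
    nlinarith [c1, c2, hn3, hq2]
  · rw [hfact2]
    exact mul_neg_of_neg_of_pos hA (by positivity)

theorem diatomic_B_signs (γ : ℝ) (hγ : 0 < γ) :
    let Q := besselK 0 γ / besselK 1 γ
    let B₁ := γ ^ 2 * Q ^ 3 + 5 * γ * Q ^ 2 - γ ^ 2 * Q - 4 * γ - 16 / γ
    let B₂ := γ * Q ^ 2 - γ - 8 / γ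
    let B₃ := γ * Q ^ 2 + 2 * Q - γ
    B₁ < 0 ∧ B₃ > 0 ∧ B₁ - B₂ < 0 ∧ B₁ - B₂ - B₃ < 0 ∧
      B₁ = (γ * Q ^ 2 + Q - γ - 4 / γ) * (γ * Q + 4) ∧
      B₁ - B₂ - B₃ = (γ * Q ^ 2 + Q - γ - 4 / γ) * (γ * Q + 2) := by
  intro Q B₁ B₂ B₃
  obtain ⟨m, hm0⟩ : ∃ x, Mk γ 0 = x := ⟨_, rfl⟩
  obtain ⟨n, hn0⟩ : ∃ x, Mk γ 1 = x := ⟨_, rfl⟩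
  have hm : 0 < m := hm0 ▸ Mk_pos γ hγ 0
  have hn : 0 < n := hn0 ▸ Mk_pos γ hγ 1
  have hγ' : γ ≠ 0 := ne_of_gt hγ
  have hcs1 : n^2 ≤ m*n + γ^2*m^2 := by
    have h := Mk_CS γ hγ 0 m n
    rw [show (0+2 : ℕ) = 2 from rfl, show (0+1 : ℕ) = 1 from rfl,
      M2_eq γ hγ, hm0, hn0] at h
    nlinarith [h, hm]
  have hcs2 : (n + γ^2*m)^2 ≤ n*((2+γ^2)*n + γ^2*m) := by
    have h := Mk_CS γ hγ 1 n (n + γ^2*m)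
    rw [show (1+2 : ℕ) = 3 from rfl, show (1+1 : ℕ) = 2 from rfl,
      M3_eq γ hγ, M2_eq γ hγ, hm0, hn0] at h
    nlinarith [h, hn]
  have hQ : Q = γ * m / n := by
    show besselK 0 γ / besselK 1 γ = γ * m / n
    rw [besselK0_eq γ hγ, besselK1_eq γ hγ, hm0, hn0]
    field_simp
  exact alg_main γ m n Q hγ hm hn hcs1 hcs2 hQ
end

section
/- For every real γ > 0, writing R(γ) := K_1(γ)/K_2(γ), the quantity e_p(γ) := 3 + γR + (γR² + 4R − γ)/(γR² + 3R − γ − 4/γ) satisfies e_p(γ) > 3 (and the denominator γR² + 3R − γ − 4/γ is negative). Consequently, for the relativistic monatomic gas with Synge energy the adiabatic derivative ∂p/∂e|_S = 1/e_p lies strictly between 0 and 1/3 for all γ > 0, resolving the second conjecture of Speck and Strain. -/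
open MeasureTheory Real

open Set Filter Topology

namespace SpeckStrainAux

variable {γ : ℝ}

lemma intOn_pow_exp (hγ : 0 < γ) (n : ℕ) :
    IntegrableOn (fun t : ℝ => Real.exp (-t) * t ^ n) (Ioi γ) := by
  have h := Real.GammaIntegral_convergent (s := (n : ℝ) + 1) (by positivity)
  simp only [add_sub_cancel_right] at h
  have h' : IntegrableOn (fun t : ℝ => Real.exp (-t) * t ^ n) (Ioi 0) :=
    h.congr_fun (fun x _ => by simp only [Real.rpow_natCast]) measurableSet_Ioi
  exact h'.mono_set (Ioi_subset_Ioi hγ.le)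

lemma int_two_pow (hγ : 0 < γ) (m n : ℕ) :
    IntegrableOn (fun t : ℝ => Real.exp (-t) * (t ^ m + t ^ n)) (Ioi γ) := by
  have h : IntegrableOn (fun t : ℝ => Real.exp (-t) * t ^ m + Real.exp (-t) * t ^ n) (Ioi γ) :=
    (intOn_pow_exp hγ m).add (intOn_pow_exp hγ n)
  exact h.congr_fun (fun x _ => by ring) measurableSet_Ioi

lemma int_of_bound (hγ : 0 < γ) {f : ℝ → ℝ} (m n : ℕ)
    (hm : ContinuousOn f (Ioi γ))
    (hb : ∀ t ∈ Ioi γ, |f t| ≤ Real.exp (-t) * (t ^ m + t ^ n)) :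
    IntegrableOn f (Ioi γ) := by
  refine (int_two_pow hγ m n).mono' (hm.aestronglyMeasurable measurableSet_Ioi) ?_
  rw [ae_restrict_iff' measurableSet_Ioi]
  exact ae_of_all _ (fun t ht => by simpa [Real.norm_eq_abs] using hb t ht)

lemma rpow_half_le {s : ℝ} (hs : 0 ≤ s) : s ^ ((1:ℝ)/2) ≤ 1 + s := by
  rcases le_total s 1 with h | h
  · have := Real.rpow_le_one hs h (by norm_num : (0:ℝ) ≤ 1/2)
    linarith
  · calc s ^ ((1:ℝ)/2) ≤ s ^ (1:ℝ) :=
        Real.rpow_le_rpow_of_exponent_le h (by norm_num)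
    _ = s := Real.rpow_one s
    _ ≤ 1 + s := by linarith

lemma rpow_threehalf_le {s : ℝ} (hs : 0 ≤ s) : s ^ ((3:ℝ)/2) ≤ 1 + s ^ 2 := by
  rcases le_total s 1 with h | h
  · have := Real.rpow_le_one hs h (by norm_num : (0:ℝ) ≤ 3/2)
    nlinarith [sq_nonneg s]
  · calc s ^ ((3:ℝ)/2) ≤ s ^ ((2:ℕ):ℝ) :=
        Real.rpow_le_rpow_of_exponent_le h (by norm_num)
    _ = s ^ 2 := Real.rpow_natCast s 2
    _ ≤ 1 + s ^ 2 := by linarith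


lemma contOn_base : ContinuousOn (fun t : ℝ => t ^ 2 - γ ^ 2) (Ioi γ) :=
  ((continuous_pow 2).sub continuous_const).continuousOn

lemma pos_base (hγ : 0 < γ) {t : ℝ} (ht : t ∈ Ioi γ) : 0 < t ^ 2 - γ ^ 2 := by
  have : γ < t := ht
  nlinarith

lemma intA (hγ : 0 < γ) :
    IntegrableOn (fun t : ℝ => Real.exp (-t) * (t ^ 2 - γ ^ 2) ^ ((1:ℝ)/2)) (Ioi γ) := by
  refine int_of_bound hγ 0 2 ?_ ?_
  · exact (continuous_exp.comp continuous_neg).continuousOn.mul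
      (contOn_base.rpow_const (fun x _ => Or.inr (by norm_num)))
  · intro t ht
    have ht' : γ < t := ht
    have h0 : (0:ℝ) < t := hγ.trans ht'
    have hb : (0:ℝ) ≤ t ^ 2 - γ ^ 2 := (pos_base hγ ht).le
    rw [abs_of_nonneg (by positivity)]
    have h1 : (t ^ 2 - γ ^ 2) ^ ((1:ℝ)/2) ≤ 1 + (t ^ 2 - γ ^ 2) := rpow_half_le hb
    have h2 : (1:ℝ) + (t ^ 2 - γ ^ 2) ≤ t ^ 0 + t ^ 2 := by nlinarith
    have := Real.exp_pos (-t)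
    nlinarith [h1.trans h2]

lemma intB (hγ : 0 < γ) :
    IntegrableOn (fun t : ℝ => Real.exp (-t) * (t ^ 2 - γ ^ 2) ^ ((3:ℝ)/2)) (Ioi γ) := by
  refine int_of_bound hγ 0 4 ?_ ?_
  · exact (continuous_exp.comp continuous_neg).continuousOn.mul
      (contOn_base.rpow_const (fun x _ => Or.inr (by norm_num)))
  · intro t ht
    have ht' : γ < t := ht
    have h0 : (0:ℝ) < t := hγ.trans ht'
    have hb : (0:ℝ) ≤ t ^ 2 - γ ^ 2 := (pos_base hγ ht).le
    rw [abs_of_nonneg (by positivity)]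
    have h1 : (t ^ 2 - γ ^ 2) ^ ((3:ℝ)/2) ≤ 1 + (t ^ 2 - γ ^ 2) ^ 2 := rpow_threehalf_le hb
    have h2 : (1:ℝ) + (t ^ 2 - γ ^ 2) ^ 2 ≤ t ^ 0 + t ^ 4 := by nlinarith
    have := Real.exp_pos (-t)
    nlinarith [h1.trans h2]

lemma intT (hγ : 0 < γ) :
    IntegrableOn (fun t : ℝ => t * (Real.exp (-t) * (t ^ 2 - γ ^ 2) ^ ((1:ℝ)/2))) (Ioi γ) := by
  refine int_of_bound hγ 1 3 ?_ ?_
  · exact continuous_id.continuousOn.mul ((continuous_exp.comp continuous_neg).continuousOn.mul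
      (contOn_base.rpow_const (fun x _ => Or.inr (by norm_num))))
  · intro t ht
    have ht' : γ < t := ht
    have h0 : (0:ℝ) < t := hγ.trans ht'
    have hb : (0:ℝ) ≤ t ^ 2 - γ ^ 2 := (pos_base hγ ht).le
    rw [abs_of_nonneg (by positivity)]
    have h1 : (t ^ 2 - γ ^ 2) ^ ((1:ℝ)/2) ≤ 1 + (t ^ 2 - γ ^ 2) := rpow_half_le hb
    have h2 : (1:ℝ) + (t ^ 2 - γ ^ 2) ≤ 1 + t ^ 2 := by nlinarith
    have := Real.exp_pos (-t)
    have h3 := mul_le_mul_of_nonneg_left (h1.trans h2) (mul_pos h0 this).le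
    nlinarith [h3]

lemma intS1 (hγ : 0 < γ) :
    IntegrableOn (fun t : ℝ => Real.exp (-t) * (t - γ) ^ ((1:ℝ)/2)) (Ioi γ) := by
  refine int_of_bound hγ 0 1 ?_ ?_
  · exact (continuous_exp.comp continuous_neg).continuousOn.mul
      ((continuous_id.sub continuous_const).continuousOn.rpow_const
        (fun x _ => Or.inr (by norm_num)))
  · intro t ht
    have ht' : γ < t := ht
    have hb : (0:ℝ) ≤ t - γ := by linarith
    rw [abs_of_nonneg (by positivity)]
    have h1 : (t - γ) ^ ((1:ℝ)/2) ≤ 1 + (t - γ) := rpow_half_le hb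
    have h2 : (1:ℝ) + (t - γ) ≤ t ^ 0 + t ^ 1 := by simp; linarith
    have := Real.exp_pos (-t)
    nlinarith [h1.trans h2]

lemma intS3 (hγ : 0 < γ) :
    IntegrableOn (fun t : ℝ => Real.exp (-t) * (t - γ) ^ ((3:ℝ)/2)) (Ioi γ) := by
  refine int_of_bound hγ 0 2 ?_ ?_
  · exact (continuous_exp.comp continuous_neg).continuousOn.mul
      ((continuous_id.sub continuous_const).continuousOn.rpow_const
        (fun x _ => Or.inr (by norm_num)))
  · intro t ht
    have ht' : γ < t := ht
    have h0 : (0:ℝ) < t := hγ.trans ht'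
    have hb : (0:ℝ) ≤ t - γ := by linarith
    rw [abs_of_nonneg (by positivity)]
    have h1 : (t - γ) ^ ((3:ℝ)/2) ≤ 1 + (t - γ) ^ 2 := rpow_threehalf_le hb
    have h2 : (1:ℝ) + (t - γ) ^ 2 ≤ t ^ 0 + t ^ 2 := by simp; nlinarith
    have := Real.exp_pos (-t)
    nlinarith [h1.trans h2]


lemma tendsto_exp_two_pow (m n : ℕ) :
    Tendsto (fun t : ℝ => Real.exp (-t) * (t ^ m + t ^ n)) atTop (𝓝 0) := by
  have h1 := tendsto_pow_mul_exp_neg_atTop_nhds_zero m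
  have h2 := tendsto_pow_mul_exp_neg_atTop_nhds_zero n
  have h := h1.add h2
  rw [add_zero] at h
  exact h.congr (fun t => by ring)

/-- Integration by parts: `∫ e^{-t} (t²-γ²)^{3/2} = ∫ 3t e^{-t} (t²-γ²)^{1/2}`. -/
lemma keyI1 (hγ : 0 < γ) :
    ∫ t in Ioi γ, (Real.exp (-t) * (t ^ 2 - γ ^ 2) ^ ((3:ℝ)/2)
      - 3 * (t * (Real.exp (-t) * (t ^ 2 - γ ^ 2) ^ ((1:ℝ)/2)))) = 0 := by
  have key := integral_Ioi_of_hasDerivAt_of_tendsto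
    (f := fun t : ℝ => -(Real.exp (-t) * (t ^ 2 - γ ^ 2) ^ ((3:ℝ)/2)))
    (f' := fun t : ℝ => Real.exp (-t) * (t ^ 2 - γ ^ 2) ^ ((3:ℝ)/2)
      - 3 * (t * (Real.exp (-t) * (t ^ 2 - γ ^ 2) ^ ((1:ℝ)/2))))
    (a := γ) (m := 0) ?_ ?_ ?_ ?_
  · rw [key]
    simp [Real.zero_rpow (by norm_num : ((3:ℝ)/2) ≠ 0)]
  · apply ContinuousAt.continuousWithinAt
    exact ((continuous_exp.comp continuous_neg).continuousAt).mul
      (ContinuousAt.rpow_const (by fun_prop) (Or.inr (by norm_num))) |>.neg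
  · intro x hx
    have hx' : γ < x := hx
    have hb : (0:ℝ) < x ^ 2 - γ ^ 2 := pos_base hγ hx
    have he : HasDerivAt (fun t : ℝ => Real.exp (-t)) (-Real.exp (-x)) x := by
      simpa using (hasDerivAt_neg x).exp
    have hbase : HasDerivAt (fun t : ℝ => t ^ 2 - γ ^ 2) (2 * x) x := by
      simpa using (hasDerivAt_pow 2 x).sub_const (γ ^ 2)
    have hr : HasDerivAt (fun t : ℝ => (t ^ 2 - γ ^ 2) ^ ((3:ℝ)/2))
        (2 * x * ((3:ℝ)/2) * (x ^ 2 - γ ^ 2) ^ ((3:ℝ)/2 - 1)) x :=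
      hbase.rpow_const (Or.inl hb.ne')
    have := (he.mul hr).neg
    convert this using 1
    · rfl
    rw [show (3:ℝ)/2 - 1 = 1/2 by norm_num]
    ring
  · refine (intB hγ).sub ?_
    exact (intT hγ).const_mul 3
  · apply squeeze_zero_norm' (a := fun t : ℝ => t ^ 3 * Real.exp (-t))
    · filter_upwards [eventually_ge_atTop γ] with t ht
      have h0 : (0:ℝ) < t := lt_of_lt_of_le hγ ht
      have hb : (0:ℝ) ≤ t ^ 2 - γ ^ 2 := by nlinarith
      have h1 : (t ^ 2 - γ ^ 2) ^ ((3:ℝ)/2) ≤ (t ^ 2) ^ ((3:ℝ)/2) :=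
        Real.rpow_le_rpow hb (by nlinarith) (by norm_num)
      have h2 : (t ^ 2 : ℝ) ^ ((3:ℝ)/2) = t ^ 3 := by
        rw [← Real.rpow_natCast t 2, ← Real.rpow_mul h0.le,
          show ((2:ℕ):ℝ) * (3/2) = ((3:ℕ):ℝ) by norm_num, Real.rpow_natCast]
      rw [norm_neg, Real.norm_eq_abs, abs_of_nonneg (by positivity)]
      have := Real.exp_pos (-t)
      nlinarith [h1, h2.le, h2.ge]
    · exact tendsto_pow_mul_exp_neg_atTop_nhds_zero 3

/-- Integration by parts: `∫ e^{-t} (t-γ)^{3/2} = (3/2) ∫ e^{-t} (t-γ)^{1/2}`. -/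
lemma keyI2 (hγ : 0 < γ) :
    ∫ t in Ioi γ, (Real.exp (-t) * (t - γ) ^ ((3:ℝ)/2)
      - (3/2) * (Real.exp (-t) * (t - γ) ^ ((1:ℝ)/2))) = 0 := by
  have key := integral_Ioi_of_hasDerivAt_of_tendsto
    (f := fun t : ℝ => -(Real.exp (-t) * (t - γ) ^ ((3:ℝ)/2)))
    (f' := fun t : ℝ => Real.exp (-t) * (t - γ) ^ ((3:ℝ)/2)
      - (3/2) * (Real.exp (-t) * (t - γ) ^ ((1:ℝ)/2)))
    (a := γ) (m := 0) ?_ ?_ ?_ ?_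
  · rw [key]
    simp [Real.zero_rpow (by norm_num : ((3:ℝ)/2) ≠ 0)]
  · apply ContinuousAt.continuousWithinAt
    exact ((continuous_exp.comp continuous_neg).continuousAt).mul
      (ContinuousAt.rpow_const (by fun_prop) (Or.inr (by norm_num))) |>.neg
  · intro x hx
    have hx' : γ < x := hx
    have hb : (0:ℝ) < x - γ := by linarith
    have he : HasDerivAt (fun t : ℝ => Real.exp (-t)) (-Real.exp (-x)) x := by
      simpa using (hasDerivAt_neg x).exp
    have hbase : HasDerivAt (fun t : ℝ => t - γ) 1 x := (hasDerivAt_id x).sub_const γ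
    have hr : HasDerivAt (fun t : ℝ => (t - γ) ^ ((3:ℝ)/2))
        (1 * ((3:ℝ)/2) * (x - γ) ^ ((3:ℝ)/2 - 1)) x :=
      hbase.rpow_const (Or.inl hb.ne')
    have := (he.mul hr).neg
    convert this using 1
    · rfl
    rw [show (3:ℝ)/2 - 1 = 1/2 by norm_num]
    ring
  · refine (intS3 hγ).sub ?_
    exact (intS1 hγ).const_mul (3/2)
  · apply squeeze_zero_norm' (a := fun t : ℝ => Real.exp (-t) * (t ^ 0 + t ^ 2))
    · filter_upwards [eventually_ge_atTop γ] with t ht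
      have h0 : (0:ℝ) < t := lt_of_lt_of_le hγ ht
      have hb : (0:ℝ) ≤ t - γ := by linarith
      have h1 : (t - γ) ^ ((3:ℝ)/2) ≤ 1 + (t - γ) ^ 2 := rpow_threehalf_le hb
      have h2 : (1:ℝ) + (t - γ) ^ 2 ≤ t ^ 0 + t ^ 2 := by simp; nlinarith
      rw [norm_neg, Real.norm_eq_abs, abs_of_nonneg (by positivity)]
      have := Real.exp_pos (-t)
      nlinarith [h1.trans h2]
    · exact tendsto_exp_two_pow 0 2


/-- The main analytic inequality: `B ≥ (3γ + 9/2) A`, plus positivity. -/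
lemma core (hγ : 0 < γ) :
    0 ≤ (∫ t in Ioi γ, Real.exp (-t) * (t ^ 2 - γ ^ 2) ^ ((1:ℝ)/2)) ∧
    0 < (∫ t in Ioi γ, Real.exp (-t) * (t ^ 2 - γ ^ 2) ^ ((3:ℝ)/2)) ∧
    (3 * γ + 9/2) * (∫ t in Ioi γ, Real.exp (-t) * (t ^ 2 - γ ^ 2) ^ ((1:ℝ)/2))
      ≤ ∫ t in Ioi γ, Real.exp (-t) * (t ^ 2 - γ ^ 2) ^ ((3:ℝ)/2) := by
  set A := ∫ t in Ioi γ, Real.exp (-t) * (t ^ 2 - γ ^ 2) ^ ((1:ℝ)/2) with hA_def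
  set B := ∫ t in Ioi γ, Real.exp (-t) * (t ^ 2 - γ ^ 2) ^ ((3:ℝ)/2) with hB_def
  have hA0 : 0 ≤ A := by
    refine setIntegral_nonneg measurableSet_Ioi (fun t ht => ?_)
    have hb : (0:ℝ) ≤ t ^ 2 - γ ^ 2 := (pos_base hγ ht).le
    positivity
  have hB0 : 0 < B := by
    rw [hB_def, setIntegral_pos_iff_support_of_nonneg_ae ?_ (intB hγ)]
    · have hsub : Ioi γ ⊆ Function.support
          (fun t : ℝ => Real.exp (-t) * (t ^ 2 - γ ^ 2) ^ ((3:ℝ)/2)) := by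
        intro t ht
        have hb : (0:ℝ) < t ^ 2 - γ ^ 2 := pos_base hγ ht
        have : (0:ℝ) < Real.exp (-t) * (t ^ 2 - γ ^ 2) ^ ((3:ℝ)/2) := by positivity
        exact this.ne'
      rw [Set.inter_eq_self_of_subset_right hsub, Real.volume_Ioi]
      simp
    · have hae : ∀ᵐ t ∂(volume.restrict (Ioi γ)),
          0 ≤ Real.exp (-t) * (t ^ 2 - γ ^ 2) ^ ((3:ℝ)/2) := by
        rw [ae_restrict_iff' measurableSet_Ioi]
        refine ae_of_all _ (fun t ht => ?_)
        have hb : (0:ℝ) ≤ t ^ 2 - γ ^ 2 := (pos_base hγ ht).le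
        positivity
      exact hae
  -- B = 3 ∫ t e^{-t} w
  have hB3 : B = 3 * ∫ t in Ioi γ, t * (Real.exp (-t) * (t ^ 2 - γ ^ 2) ^ ((1:ℝ)/2)) := by
    have h := keyI1 hγ
    rw [integral_sub (intB hγ) ((intT hγ).const_mul 3), integral_const_mul] at h
    linarith [h]
  -- Z = 0
  have hZ : ∫ t in Ioi γ, Real.exp (-t) * ((t - (γ + 3/2)) * (t - γ) ^ ((1:ℝ)/2)) = 0 := by
    have heq : EqOn (fun t : ℝ => Real.exp (-t) * ((t - (γ + 3/2)) * (t - γ) ^ ((1:ℝ)/2)))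
        (fun t : ℝ => Real.exp (-t) * (t - γ) ^ ((3:ℝ)/2)
          - (3/2) * (Real.exp (-t) * (t - γ) ^ ((1:ℝ)/2))) (Ioi γ) := by
      intro t ht
      have ht' : γ < t := ht
      have hb : (0:ℝ) < t - γ := by linarith
      have h32 : (t - γ) ^ ((3:ℝ)/2) = (t - γ) * (t - γ) ^ ((1:ℝ)/2) := by
        rw [show (3:ℝ)/2 = 1 + 1/2 by norm_num, Real.rpow_add hb, Real.rpow_one]
      simp only [h32]
      ring
    rw [setIntegral_congr_fun measurableSet_Ioi heq,
      integral_sub (intS3 hγ) ((intS1 hγ).const_mul (3/2))]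
    have h := keyI2 hγ
    rw [integral_sub (intS3 hγ) ((intS1 hγ).const_mul (3/2))] at h
    rw [integral_const_mul] at h ⊢
    linarith
  -- the Q' integrand is integrable
  have intQ : IntegrableOn
      (fun t : ℝ => Real.exp (-t) * ((t - (γ + 3/2)) * (t ^ 2 - γ ^ 2) ^ ((1:ℝ)/2)))
      (Ioi γ) := by
    have h : IntegrableOn (fun t : ℝ => t * (Real.exp (-t) * (t ^ 2 - γ ^ 2) ^ ((1:ℝ)/2))
        - (γ + 3/2) * (Real.exp (-t) * (t ^ 2 - γ ^ 2) ^ ((1:ℝ)/2))) (Ioi γ) :=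
      (intT hγ).sub ((intA hγ).const_mul (γ + 3/2))
    exact h.congr_fun (fun x _ => by ring) measurableSet_Ioi
  have intZ : IntegrableOn
      (fun t : ℝ => Real.exp (-t) * ((t - (γ + 3/2)) * (t - γ) ^ ((1:ℝ)/2))) (Ioi γ) := by
    have h : IntegrableOn (fun t : ℝ => Real.exp (-t) * (t - γ) ^ ((3:ℝ)/2)
        - (3/2) * (Real.exp (-t) * (t - γ) ^ ((1:ℝ)/2))) (Ioi γ) :=
      (intS3 hγ).sub ((intS1 hγ).const_mul (3/2))
    refine h.congr_fun (fun t ht => ?_) measurableSet_Ioi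
    have ht' : γ < t := ht
    have hb : (0:ℝ) < t - γ := by linarith
    have h32 : (t - γ) ^ ((3:ℝ)/2) = (t - γ) * (t - γ) ^ ((1:ℝ)/2) := by
      rw [show (3:ℝ)/2 = 1 + 1/2 by norm_num, Real.rpow_add hb, Real.rpow_one]
    simp only [h32]
    ring
  -- Q' ≥ 0 via the correlation trick
  set c : ℝ := (2 * γ + 3/2) ^ ((1:ℝ)/2) with hc_def
  have hQZ : 0 ≤ (∫ t in Ioi γ, Real.exp (-t) * ((t - (γ + 3/2)) * (t ^ 2 - γ ^ 2) ^ ((1:ℝ)/2)))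
      - c * ∫ t in Ioi γ, Real.exp (-t) * ((t - (γ + 3/2)) * (t - γ) ^ ((1:ℝ)/2)) := by
    rw [← integral_const_mul, ← integral_sub intQ (intZ.const_mul c)]
    refine setIntegral_nonneg measurableSet_Ioi (fun t ht => ?_)
    have ht' : γ < t := ht
    have hs : (0:ℝ) < t - γ := by linarith
    have hu : (0:ℝ) < t + γ := by linarith
    have hw : (t ^ 2 - γ ^ 2 : ℝ) ^ ((1:ℝ)/2) = (t - γ) ^ ((1:ℝ)/2) * (t + γ) ^ ((1:ℝ)/2) := by
      rw [show t ^ 2 - γ ^ 2 = (t - γ) * (t + γ) by ring, Real.mul_rpow hs.le hu.le]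
    rw [hw]
    have key : 0 ≤ (t - (γ + 3/2)) * ((t + γ) ^ ((1:ℝ)/2) - c) := by
      rcases le_total t (γ + 3/2) with h | h
      · have h2 : (t + γ) ^ ((1:ℝ)/2) - c ≤ 0 := by
          rw [hc_def]
          have := Real.rpow_le_rpow hu.le (by linarith : t + γ ≤ 2 * γ + 3/2)
            (by norm_num : (0:ℝ) ≤ 1/2)
          linarith
        nlinarith [mul_nonneg (by linarith : (0:ℝ) ≤ γ + 3/2 - t)
          (by linarith : (0:ℝ) ≤ c - (t + γ) ^ ((1:ℝ)/2))]
      · refine mul_nonneg (by linarith) ?_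
        rw [hc_def]
        have := Real.rpow_le_rpow (by linarith : (0:ℝ) ≤ 2 * γ + 3/2)
          (by linarith : 2 * γ + 3/2 ≤ t + γ) (by norm_num : (0:ℝ) ≤ 1/2)
        linarith
    have hexp := (Real.exp_pos (-t)).le
    have hsr : (0:ℝ) ≤ (t - γ) ^ ((1:ℝ)/2) := Real.rpow_nonneg hs.le _
    calc (0:ℝ) ≤ Real.exp (-t) * ((t - γ) ^ ((1:ℝ)/2) *
          ((t - (γ + 3/2)) * ((t + γ) ^ ((1:ℝ)/2) - c))) := by positivity
      _ = Real.exp (-t) * ((t - (γ + 3/2)) * ((t - γ) ^ ((1:ℝ)/2) * (t + γ) ^ ((1:ℝ)/2)))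
          - c * (Real.exp (-t) * ((t - (γ + 3/2)) * (t - γ) ^ ((1:ℝ)/2))) := by ring
  rw [hZ, mul_zero, sub_zero] at hQZ
  -- Q' = B/3 - (γ + 3/2) A
  have hQval : (∫ t in Ioi γ, Real.exp (-t) * ((t - (γ + 3/2)) * (t ^ 2 - γ ^ 2) ^ ((1:ℝ)/2)))
      = (∫ t in Ioi γ, t * (Real.exp (-t) * (t ^ 2 - γ ^ 2) ^ ((1:ℝ)/2))) - (γ + 3/2) * A := by
    have heq : EqOn (fun t : ℝ => Real.exp (-t) * ((t - (γ + 3/2)) * (t ^ 2 - γ ^ 2) ^ ((1:ℝ)/2)))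
        (fun t : ℝ => t * (Real.exp (-t) * (t ^ 2 - γ ^ 2) ^ ((1:ℝ)/2))
          - (γ + 3/2) * (Real.exp (-t) * (t ^ 2 - γ ^ 2) ^ ((1:ℝ)/2))) (Ioi γ) :=
      fun t _ => by ring
    rw [setIntegral_congr_fun measurableSet_Ioi heq,
      integral_sub (intT hγ) ((intA hγ).const_mul (γ + 3/2)), integral_const_mul]
  rw [hQval] at hQZ
  refine ⟨hA0, hB0, ?_⟩
  have := hB3
  linarith


lemma besselK_one (hγ : 0 < γ) :
    besselK 1 γ = γ⁻¹ * ∫ t in Ioi γ, Real.exp (-t) * (t ^ 2 - γ ^ 2) ^ ((1:ℝ)/2) := by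
  unfold besselK
  have h : ((1:ℕ):ℝ) - 1/2 = (1:ℝ)/2 := by norm_num
  rw [h]
  norm_num [Nat.factorial, Real.rpow_neg_one]

lemma besselK_two (hγ : 0 < γ) :
    besselK 2 γ = (γ ^ 2)⁻¹ / 3 * ∫ t in Ioi γ, Real.exp (-t) * (t ^ 2 - γ ^ 2) ^ ((3:ℝ)/2) := by
  unfold besselK
  have h : ((2:ℕ):ℝ) - 1/2 = (3:ℝ)/2 := by norm_num
  rw [h]
  have h2 : γ ^ (-((2:ℕ):ℝ)) = (γ ^ 2)⁻¹ := by
    rw [Real.rpow_neg hγ.le, Real.rpow_natCast]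
  rw [h2]
  have h3 : ((2:ℝ) ^ 2 * (Nat.factorial 2 : ℝ) / ((Nat.factorial (2 * 2) : ℕ) : ℝ)) = 1/3 := by
    norm_num [Nat.factorial]
  rw [h3]
  ring

end SpeckStrainAux

theorem monatomic_ep_gt_three (γ : ℝ) (hγ : 0 < γ) :
    let R := besselK 1 γ / besselK 2 γ
    let ep := 3 + γ * R + (γ * R ^ 2 + 4 * R - γ) / (γ * R ^ 2 + 3 * R - γ - 4 / γ)
    γ * R ^ 2 + 3 * R - γ - 4 / γ < 0 ∧ ep > 3 ∧ 0 < 1 / ep ∧ 1 / ep < 1 / 3 := by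
  intro R ep
  obtain ⟨hA0, hB0, hKey⟩ := SpeckStrainAux.core hγ
  set A := ∫ t in Set.Ioi γ, Real.exp (-t) * (t ^ 2 - γ ^ 2) ^ ((1:ℝ)/2) with hA_def
  set B := ∫ t in Set.Ioi γ, Real.exp (-t) * (t ^ 2 - γ ^ 2) ^ ((3:ℝ)/2) with hB_def
  have hR : R = 3 * γ * A / B := by
    have : R = besselK 1 γ / besselK 2 γ := rfl
    rw [this, SpeckStrainAux.besselK_one hγ, SpeckStrainAux.besselK_two hγ, ← hA_def, ← hB_def]
    field_simp
  have key1 : 9 * γ ^ 4 * A ^ 2 + 9 * γ ^ 2 * A * B < (γ ^ 2 + 4) * B ^ 2 := by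
    nlinarith [mul_nonneg (sub_nonneg.2 hKey) hA0, sq_nonneg (B - (3 * γ + 9/2) * A),
      mul_pos hγ hγ, mul_nonneg (mul_nonneg hγ.le hγ.le) (mul_nonneg (sub_nonneg.2 hKey) hA0),
      mul_nonneg (mul_nonneg hγ.le (sub_nonneg.2 hKey)) hA0,
      mul_nonneg (mul_nonneg (mul_nonneg hγ.le hγ.le) hγ.le) (mul_nonneg (sub_nonneg.2 hKey) hA0),
      sq_nonneg A, sq_nonneg B, mul_pos hB0 hB0, mul_nonneg hA0 hB0.le]
  have key2 : 27 * γ ^ 4 * A ^ 3 + 36 * γ ^ 2 * A ^ 2 * B - 3 * γ ^ 2 * A * B ^ 2 - B ^ 3 < 0 := by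
    nlinarith [mul_nonneg (sub_nonneg.2 hKey) (mul_nonneg hA0 hA0),
      mul_nonneg (mul_nonneg (sub_nonneg.2 hKey) (sub_nonneg.2 hKey)) hA0,
      mul_nonneg (mul_nonneg (sub_nonneg.2 hKey) (sub_nonneg.2 hKey)) (sub_nonneg.2 hKey),
      mul_nonneg (mul_nonneg hγ.le (sub_nonneg.2 hKey)) (mul_nonneg hA0 hA0),
      mul_nonneg (mul_nonneg (mul_nonneg hγ.le hγ.le) (sub_nonneg.2 hKey)) (mul_nonneg hA0 hA0),
      mul_nonneg (mul_nonneg (mul_nonneg (mul_nonneg hγ.le hγ.le) hγ.le) (sub_nonneg.2 hKey)) (mul_nonneg hA0 hA0),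
      mul_nonneg (mul_nonneg hγ.le (mul_nonneg (sub_nonneg.2 hKey) (sub_nonneg.2 hKey))) hA0,
      mul_pos (mul_pos hB0 hB0) hB0, mul_nonneg (mul_nonneg hA0 hA0) hA0,
      mul_pos hγ hγ, mul_nonneg hA0 hB0.le]
  have hBne : B ≠ 0 := hB0.ne'
  have hγne : γ ≠ 0 := hγ.ne'
  have hD : γ * R ^ 2 + 3 * R - γ - 4 / γ < 0 := by
    have hexp : γ * R ^ 2 + 3 * R - γ - 4 / γ
        = (9 * γ ^ 4 * A ^ 2 + 9 * γ ^ 2 * A * B - (γ ^ 2 + 4) * B ^ 2) / (γ * B ^ 2) := by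
      rw [hR]; field_simp; ring
    rw [hexp]
    exact div_neg_of_neg_of_pos (by linarith) (by positivity)
  have hC : γ * R * (γ * R ^ 2 + 3 * R - γ - 4 / γ) + (γ * R ^ 2 + 4 * R - γ) < 0 := by
    have hexp : γ * R * (γ * R ^ 2 + 3 * R - γ - 4 / γ) + (γ * R ^ 2 + 4 * R - γ)
        = γ * (27 * γ ^ 4 * A ^ 3 + 36 * γ ^ 2 * A ^ 2 * B - 3 * γ ^ 2 * A * B ^ 2 - B ^ 3) / B ^ 3 := by
      rw [hR]; field_simp; ring
    rw [hexp]
    exact div_neg_of_neg_of_pos (mul_neg_of_pos_of_neg hγ key2) (by positivity)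
  have hfrac : 0 < γ * R + (γ * R ^ 2 + 4 * R - γ) / (γ * R ^ 2 + 3 * R - γ - 4 / γ) := by
    have hDne : γ * R ^ 2 + 3 * R - γ - 4 / γ ≠ 0 := hD.ne
    have heq : (γ * R * (γ * R ^ 2 + 3 * R - γ - 4 / γ) + (γ * R ^ 2 + 4 * R - γ))
          / (γ * R ^ 2 + 3 * R - γ - 4 / γ)
        = γ * R + (γ * R ^ 2 + 4 * R - γ) / (γ * R ^ 2 + 3 * R - γ - 4 / γ) := by
      rw [add_div, mul_div_assoc, div_self hDne, mul_one]
    rw [← heq]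
    exact div_pos_of_neg_of_neg hC hD
  have hep : ep > 3 := by
    have : ep = 3 + (γ * R + (γ * R ^ 2 + 4 * R - γ) / (γ * R ^ 2 + 3 * R - γ - 4 / γ)) := by
      show (3 : ℝ) + γ * R + _ = _
      ring
    rw [this]
    linarith
  exact ⟨hD, hep, one_div_pos.2 (by linarith), one_div_lt_one_div_of_lt (by norm_num) hep⟩
end

section
/- For every real γ > 0, writing Q(γ) := K_0(γ)/K_1(γ), the quantity e_p(γ) := 3 + γQ + (γQ² + 2Q − γ)/(γQ² + Q − γ − 4/γ) satisfies e_p(γ) > 3 (and the denominator γQ² + Q − γ − 4/γ is negative). Consequently, for the relativistic diatomic gas with generalized Synge energy the adiabatic derivative ∂p/∂e|_S = 1/e_p lies strictly between 0 and 1/3 for all γ > 0. -/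
open MeasureTheory Real Set Filter

noncomputable def Ibk (γ a b : ℝ) : ℝ :=
  ∫ t in Set.Ioi γ, Real.exp (-t) * ((t - γ) ^ a * (t + γ) ^ b)

/-- tail bound -/
lemma tail_bound (γ a b t : ℝ) (hγ : 0 < γ) (ha' : a ≤ 1/2) (hb : b ≤ 1/2)
    (ht : γ + 1 ≤ t) :
    Real.exp (-t) * ((t - γ) ^ a * (t + γ) ^ b) ≤ 4 * Real.exp (-(2⁻¹ * t)) := by
  have h1 : (1:ℝ) ≤ t - γ := by linarith
  have h2 : (1:ℝ) ≤ t + γ := by linarith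
  have ht0 : (0:ℝ) < t := by linarith
  have e1 : (t - γ) ^ a ≤ (t - γ) ^ (1/2 : ℝ) :=
    Real.rpow_le_rpow_of_exponent_le h1 ha'
  have e2 : (t + γ) ^ b ≤ (t + γ) ^ (1/2 : ℝ) :=
    Real.rpow_le_rpow_of_exponent_le h2 hb
  have e3 : (t - γ) ^ (1/2 : ℝ) ≤ (t + γ) ^ (1/2 : ℝ) :=
    Real.rpow_le_rpow (by linarith) (by linarith) (by norm_num)
  have e4 : (t + γ) ^ (1/2 : ℝ) * (t + γ) ^ (1/2 : ℝ) = t + γ := by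
    rw [← Real.rpow_add (by linarith)]; norm_num
  have hp1 : (0:ℝ) ≤ (t - γ) ^ a := Real.rpow_nonneg (by linarith) _
  have hp2 : (0:ℝ) ≤ (t + γ) ^ b := Real.rpow_nonneg (by linarith) _
  have hp3 : (0:ℝ) ≤ (t - γ) ^ (1/2:ℝ) := Real.rpow_nonneg (by linarith) _
  have hp4 : (0:ℝ) ≤ (t + γ) ^ (1/2:ℝ) := Real.rpow_nonneg (by linarith) _
  have step1 : (t - γ) ^ a * (t + γ) ^ b ≤ t + γ := by
    calc (t - γ) ^ a * (t + γ) ^ b ≤ (t + γ) ^ (1/2:ℝ) * (t + γ) ^ (1/2:ℝ) := by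
          apply mul_le_mul (le_trans e1 e3) e2 hp2 hp4
      _ = t + γ := e4
  have step2 : t + γ ≤ 2 * t := by linarith
  have step3 : t ≤ 2 * Real.exp (2⁻¹ * t) := by
    have := Real.add_one_le_exp (2⁻¹ * t)
    nlinarith [Real.exp_pos (2⁻¹ * t)]
  have hexp : (0:ℝ) < Real.exp (-t) := Real.exp_pos _
  calc Real.exp (-t) * ((t - γ) ^ a * (t + γ) ^ b)
      ≤ Real.exp (-t) * (2 * t) := by
        exact mul_le_mul_of_nonneg_left (step1.trans step2) hexp.le
    _ ≤ Real.exp (-t) * (4 * Real.exp (2⁻¹ * t)) := by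
        apply mul_le_mul_of_nonneg_left (by linarith) hexp.le
    _ = 4 * Real.exp (-(2⁻¹ * t)) := by
        rw [show -(2⁻¹*t) = -t + 2⁻¹*t by ring, Real.exp_add]; ring

lemma Ibk_integrableOn (γ a b : ℝ) (hγ : 0 < γ) (ha : -1 < a) (ha' : a ≤ 1/2)
    (hb : b ≤ 1/2) :
    IntegrableOn (fun t => Real.exp (-t) * ((t - γ) ^ a * (t + γ) ^ b)) (Set.Ioi γ) := by
  have hmeas : ∀ s : Set ℝ, s ⊆ Set.Ioi γ → MeasurableSet s →
      AEStronglyMeasurable (fun t => Real.exp (-t) * ((t - γ) ^ a * (t + γ) ^ b))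
        (volume.restrict s) := by
    intro s hs hms
    apply ContinuousOn.aestronglyMeasurable _ hms
    intro t ht
    have htγ : γ < t := hs ht
    apply ContinuousWithinAt.mul
    · exact ((Real.continuous_exp.comp continuous_neg).continuousAt).continuousWithinAt
    apply ContinuousWithinAt.mul
    · exact ((continuousAt_id.sub continuousAt_const).rpow_const
        (Or.inl (by simpa using (by linarith : t - γ ≠ 0)))).continuousWithinAt
    · exact ((continuousAt_id.add continuousAt_const).rpow_const
        (Or.inl (by simpa using (by nlinarith : t + γ ≠ 0)))).continuousWithinAt
  rw [← Set.Ioc_union_Ioi_eq_Ioi (le_of_lt (by linarith : γ < γ + 1))]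
  apply IntegrableOn.union
  · -- near γ
    rw [integrableOn_Ioc_iff_integrableOn_Ioo]
    have hmaj : IntegrableOn
        (fun t => Real.exp (-γ) * (((2*γ) ^ b + (2*γ+1) ^ b) * (t - γ) ^ a))
        (Set.Ioo γ (γ+1)) := by
      have h0 : IntervalIntegrable (fun x : ℝ => x ^ a) volume 0 1 :=
        intervalIntegral.intervalIntegrable_rpow' ha
      have h1 := h0.comp_sub_right γ
      rw [zero_add, show (1:ℝ) + γ = γ + 1 by ring,
        intervalIntegrable_iff_integrableOn_Ioo_of_le (by linarith)] at h1
      exact (h1.const_mul _).const_mul _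
    apply Integrable.mono hmaj
    · exact hmeas _ (fun x hx => hx.1) measurableSet_Ioo
    · rw [ae_restrict_iff' measurableSet_Ioo]
      filter_upwards with t ht
      have h1 : 0 < t - γ := by simp only [Set.mem_Ioo] at ht; linarith [ht.1]
      have h2 : 0 < t + γ := by simp only [Set.mem_Ioo] at ht; linarith [ht.1]
      simp only [Set.mem_Ioo] at ht
      have hb1 : (t + γ) ^ b ≤ (2*γ) ^ b + (2*γ+1) ^ b := by
        rcases le_or_gt 0 b with hb0 | hb0
        · have : (t + γ) ^ b ≤ (2*γ+1) ^ b :=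
            Real.rpow_le_rpow h2.le (by linarith [ht.2]) hb0
          have h2γ : (0:ℝ) ≤ (2*γ) ^ b := Real.rpow_nonneg (by linarith) _
          linarith
        · have : (t + γ) ^ b ≤ (2*γ) ^ b :=
            Real.rpow_le_rpow_of_nonpos (by linarith) (by linarith [ht.1]) hb0.le
          have h2γ : (0:ℝ) ≤ (2*γ+1) ^ b := Real.rpow_nonneg (by linarith) _
          linarith
      have hbpos : 0 ≤ (t + γ) ^ b := Real.rpow_nonneg h2.le _
      have hapos : 0 ≤ (t - γ) ^ a := Real.rpow_nonneg h1.le _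
      have hexple : Real.exp (-t) ≤ Real.exp (-γ) := by
        apply Real.exp_le_exp.2; linarith [ht.1]
      rw [Real.norm_eq_abs, Real.norm_eq_abs, abs_of_nonneg (by positivity),
        abs_of_nonneg]
      · calc Real.exp (-t) * ((t - γ) ^ a * (t + γ) ^ b)
            ≤ Real.exp (-γ) * ((t - γ) ^ a * (t + γ) ^ b) := by
              apply mul_le_mul_of_nonneg_right hexple (by positivity)
          _ ≤ Real.exp (-γ) * ((((2*γ) ^ b + (2*γ+1) ^ b)) * (t - γ) ^ a) := by
              apply mul_le_mul_of_nonneg_left _ (Real.exp_pos _).le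
              rw [mul_comm ((t-γ)^a)]
              exact mul_le_mul_of_nonneg_right hb1 hapos
      · positivity
  · -- tail
    have hmaj : IntegrableOn (fun t => 4 * Real.exp (-(2⁻¹ * t))) (Set.Ioi (γ+1)) := by
      have := exp_neg_integrableOn_Ioi (γ+1) (by norm_num : (0:ℝ) < 2⁻¹)
      simpa [mul_comm, IntegrableOn] using this.const_mul 4
    apply Integrable.mono hmaj
    · exact hmeas _ (fun x hx => by simp only [Set.mem_Ioi] at *; linarith) measurableSet_Ioi
    · rw [ae_restrict_iff' measurableSet_Ioi]
      filter_upwards with t ht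
      simp only [Set.mem_Ioi] at ht
      have h1 : 0 < t - γ := by linarith
      have h2 : 0 < t + γ := by linarith
      rw [Real.norm_eq_abs, Real.norm_eq_abs, abs_of_nonneg (by positivity),
        abs_of_nonneg (by positivity)]
      exact tail_bound γ a b t hγ ha' hb (le_of_lt ht)

lemma Ibk_pos (γ a b : ℝ) (hγ : 0 < γ) (ha : -1 < a) (ha' : a ≤ 1/2) (hb : b ≤ 1/2) :
    0 < Ibk γ a b := by
  rw [Ibk]
  have hint := Ibk_integrableOn γ a b hγ ha ha' hb
  rw [setIntegral_pos_iff_support_of_nonneg_ae _ hint]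
  · have hsub : Set.Ioi γ ⊆ Function.support
        (fun t => Real.exp (-t) * ((t - γ) ^ a * (t + γ) ^ b)) := by
      intro t ht
      simp only [Set.mem_Ioi] at ht
      have h1 : 0 < t - γ := by linarith
      have h2 : 0 < t + γ := by linarith
      have : 0 < Real.exp (-t) * ((t - γ) ^ a * (t + γ) ^ b) := by
        have := Real.rpow_pos_of_pos h1 a
        have := Real.rpow_pos_of_pos h2 b
        positivity
      exact Function.mem_support.2 (ne_of_gt this)
    rw [Set.inter_eq_right.2 hsub]
    simp [Real.volume_Ioi]
  · filter_upwards [ae_restrict_mem measurableSet_Ioi] with t ht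
    simp only [Set.mem_Ioi] at ht
    have h1 : 0 < t - γ := by linarith
    have h2 : 0 < t + γ := by linarith
    have := Real.rpow_pos_of_pos h1 a
    have := Real.rpow_pos_of_pos h2 b
    positivity

lemma Ibk_ibp (γ b : ℝ) (hγ : 0 < γ) (hb : b ≤ 1/2) :
    Ibk γ (1/2) b = 2⁻¹ * Ibk γ (-(1/2)) b + b * Ibk γ (1/2) (b-1) := by
  set F : ℝ → ℝ := fun t => Real.exp (-t) * ((t - γ) ^ (1/2:ℝ) * (t + γ) ^ b) with hF
  set F' : ℝ → ℝ := fun t =>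
    2⁻¹ * (Real.exp (-t) * ((t - γ) ^ (-(1/2):ℝ) * (t + γ) ^ b))
    + b * (Real.exp (-t) * ((t - γ) ^ (1/2:ℝ) * (t + γ) ^ (b-1)))
    - Real.exp (-t) * ((t - γ) ^ (1/2:ℝ) * (t + γ) ^ b) with hF'
  have ia := Ibk_integrableOn γ (-(1/2)) b hγ (by norm_num) (by norm_num) hb
  have ib := Ibk_integrableOn γ (1/2) (b-1) hγ (by norm_num) (by norm_num) (by linarith)
  have ic := Ibk_integrableOn γ (1/2) b hγ (by norm_num) (by norm_num) hb
  have hcont : ContinuousWithinAt F (Set.Ici γ) γ := by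
    apply ContinuousAt.continuousWithinAt
    apply ContinuousAt.mul
    · exact (Real.continuous_exp.comp continuous_neg).continuousAt
    apply ContinuousAt.mul
    · exact ((Real.continuous_rpow_const (by norm_num : (0:ℝ) ≤ 1/2)).comp
        (continuous_id.sub continuous_const)).continuousAt
    · exact (continuousAt_id.add continuousAt_const).rpow_const
        (Or.inl (by simpa using by linarith : (γ:ℝ) + γ ≠ 0))
  have hderiv : ∀ t ∈ Set.Ioi γ, HasDerivAt F (F' t) t := by
    intro t ht
    simp only [Set.mem_Ioi] at ht
    have h1 : HasDerivAt (fun t : ℝ => t - γ) 1 t := (hasDerivAt_id t).sub_const γ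
    have h1' : t - γ ≠ 0 := by linarith
    have h2 : HasDerivAt (fun t : ℝ => (t - γ) ^ (1/2:ℝ))
        (1 * (1/2:ℝ) * (t - γ) ^ ((1/2:ℝ) - 1)) t := h1.rpow_const (Or.inl h1')
    have h3 : HasDerivAt (fun t : ℝ => t + γ) 1 t := (hasDerivAt_id t).add_const γ
    have h3' : t + γ ≠ 0 := by nlinarith
    have h4 : HasDerivAt (fun t : ℝ => (t + γ) ^ b)
        (1 * b * (t + γ) ^ (b - 1)) t := h3.rpow_const (Or.inl h3')
    have h5 : HasDerivAt (fun t : ℝ => Real.exp (-t)) (Real.exp (-t) * (-1)) t :=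
      (hasDerivAt_neg t).exp
    have h6 := h5.mul (h2.mul h4)
    refine h6.congr_deriv ?_
    simp only [hF', Pi.mul_apply]
    rw [show ((1/2:ℝ) - 1) = -(1/2) by norm_num]
    ring
  have hadd : IntegrableOn (fun t => 2⁻¹ * (Real.exp (-t) * ((t - γ) ^ (-(1/2):ℝ) * (t + γ) ^ b))
      + b * (Real.exp (-t) * ((t - γ) ^ (1/2:ℝ) * (t + γ) ^ (b-1)))) (Set.Ioi γ) := by
    exact (ia.const_mul _).add (ib.const_mul _)
  have f'int : IntegrableOn F' (Set.Ioi γ) := by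
    exact hadd.sub ic
  have htends : Tendsto F atTop (nhds 0) := by
    apply squeeze_zero' (g := fun t => 4 * Real.exp (-(2⁻¹ * t)))
    · filter_upwards [eventually_ge_atTop (γ+1)] with t ht
      have h1 : 0 < t - γ := by linarith
      have h2 : 0 < t + γ := by linarith
      have := Real.rpow_pos_of_pos h1 (1/2:ℝ)
      have := Real.rpow_pos_of_pos h2 b
      positivity
    · filter_upwards [eventually_ge_atTop (γ+1)] with t ht
      exact tail_bound γ (1/2) b t hγ (le_refl _) hb ht
    · have h1 : Tendsto (fun t:ℝ => 2⁻¹ * t) atTop atTop :=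
        Tendsto.const_mul_atTop (by norm_num) tendsto_id
      have h2 : Tendsto (fun t:ℝ => -(2⁻¹*t)) atTop atBot :=
        tendsto_neg_atTop_atBot.comp h1
      have h3 := Real.tendsto_exp_atBot.comp h2
      simpa using h3.const_mul (4:ℝ)
  have key := integral_Ioi_of_hasDerivAt_of_tendsto hcont hderiv f'int htends
  have hFγ : F γ = 0 := by
    simp only [hF]
    rw [sub_self, Real.zero_rpow (by norm_num : (1/2:ℝ) ≠ 0)]
    ring
  rw [hFγ, sub_zero] at key
  have hsplit : ∫ t in Set.Ioi γ, F' t =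
      2⁻¹ * Ibk γ (-(1/2)) b + b * Ibk γ (1/2) (b-1) - Ibk γ (1/2) b := by
    simp only [hF']
    rw [integral_sub hadd ic, integral_add (ia.const_mul _) (ib.const_mul _),
      integral_const_mul, integral_const_mul]
    rfl
  rw [hsplit] at key
  linarith

lemma Ibk_split (γ b : ℝ) (hγ : 0 < γ) (hb : b ≤ 1/2) :
    Ibk γ (-(1/2)) b = Ibk γ (1/2) (b-1) + 2*γ*Ibk γ (-(1/2)) (b-1) := by
  have ia := Ibk_integrableOn γ (-(1/2)) (b-1) hγ (by norm_num) (by norm_num) (by linarith)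
  have ib := Ibk_integrableOn γ (1/2) (b-1) hγ (by norm_num) (by norm_num) (by linarith)
  have hpt : Set.EqOn (fun t => Real.exp (-t) * ((t - γ) ^ (-(1/2):ℝ) * (t + γ) ^ b))
      (fun t => Real.exp (-t) * ((t - γ) ^ (1/2:ℝ) * (t + γ) ^ (b-1))
        + 2*γ*(Real.exp (-t) * ((t - γ) ^ (-(1/2):ℝ) * (t + γ) ^ (b-1)))) (Set.Ioi γ) := by
    intro t ht
    simp only [Set.mem_Ioi] at ht
    have hune : t - γ ≠ 0 := by intro h; linarith [sub_eq_zero.1 h]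
    have hvne : t + γ ≠ 0 := by nlinarith
    have hv : (t+γ) ^ (b-1:ℝ) * (t+γ) = (t+γ) ^ b := by
      rw [← Real.rpow_add_one hvne (b-1)]; norm_num
    have hu : (t-γ) ^ (-(1/2):ℝ) * (t-γ) = (t-γ) ^ (1/2:ℝ) := by
      rw [← Real.rpow_add_one hune (-(1/2))]; norm_num
    simp only
    rw [← hv, ← hu]
    ring
  rw [Ibk, setIntegral_congr_fun measurableSet_Ioi hpt,
    integral_add ib (ia.const_mul _), integral_const_mul]
  rfl

lemma besselK_zero_eq (γ : ℝ) (hγ : 0 < γ) : besselK 0 γ = Ibk γ (-(1/2)) (-(1/2)) := by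
  rw [besselK, Ibk]
  have hpt : Set.EqOn (fun t => Real.exp (-t) * (t ^ 2 - γ ^ 2) ^ (((0:ℕ) : ℝ) - 1 / 2))
      (fun t => Real.exp (-t) * ((t - γ) ^ (-(1/2):ℝ) * (t + γ) ^ (-(1/2):ℝ)))
      (Set.Ioi γ) := by
    intro t ht
    simp only [Set.mem_Ioi] at ht
    have h1 : (0:ℝ) ≤ t - γ := by linarith
    have h2 : (0:ℝ) ≤ t + γ := by linarith
    simp only
    rw [show t^2 - γ^2 = (t-γ)*(t+γ) by ring, Real.mul_rpow h1 h2,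
      show (((0:ℕ):ℝ) - 1/2) = -(1/2) by norm_num]
  rw [setIntegral_congr_fun measurableSet_Ioi hpt]
  norm_num

lemma besselK_one_eq (γ : ℝ) (hγ : 0 < γ) : γ * besselK 1 γ = Ibk γ (1/2) (1/2) := by
  rw [besselK, Ibk]
  have hpt : Set.EqOn (fun t => Real.exp (-t) * (t ^ 2 - γ ^ 2) ^ (((1:ℕ) : ℝ) - 1 / 2))
      (fun t => Real.exp (-t) * ((t - γ) ^ (1/2:ℝ) * (t + γ) ^ (1/2:ℝ)))
      (Set.Ioi γ) := by
    intro t ht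
    simp only [Set.mem_Ioi] at ht
    have h1 : (0:ℝ) ≤ t - γ := by linarith
    have h2 : (0:ℝ) ≤ t + γ := by linarith
    simp only
    rw [show t^2 - γ^2 = (t-γ)*(t+γ) by ring, Real.mul_rpow h1 h2,
      show (((1:ℕ):ℝ) - 1/2) = (1/2:ℝ) by norm_num]
  rw [setIntegral_congr_fun measurableSet_Ioi hpt]
  have : ((2:ℝ) ^ (1:ℕ) * (Nat.factorial 1) / (Nat.factorial (2 * 1))) = 1 := by
    norm_num [Nat.factorial]
  rw [this, one_mul, show (-((1:ℕ):ℝ)) = (-1:ℝ) by norm_num, Real.rpow_neg_one]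
  field_simp

lemma besselK_key (γ : ℝ) (hγ : 0 < γ) :
    0 < besselK 0 γ ∧ 0 < besselK 1 γ ∧
    (2*γ+2) * besselK 0 γ < (2*γ+1) * besselK 1 γ := by
  have hA0 := besselK_zero_eq γ hγ
  have hS := besselK_one_eq γ hγ
  have e1 := Ibk_ibp γ (1/2) hγ (le_refl _)
  have e2 := Ibk_ibp γ (-(1/2)) hγ (by norm_num)
  have e3 := Ibk_ibp γ (-(3/2)) hγ (by norm_num)
  have e4 := Ibk_split γ (1/2) hγ (le_refl _)
  have e5 := Ibk_split γ (-(1/2)) hγ (by norm_num)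
  rw [show ((1:ℝ)/2 - 1) = -(1/2) by norm_num] at e1 e4
  rw [show ((-(1/2):ℝ) - 1) = -(3/2) by norm_num] at e2 e5
  rw [show ((-(3/2):ℝ) - 1) = -(5/2) by norm_num] at e3
  have hA1 := Ibk_pos γ (-(1/2)) (-(3/2)) hγ (by norm_num) (by norm_num) (by norm_num)
  have hB2 := Ibk_pos γ (1/2) (-(5/2)) hγ (by norm_num) (by norm_num) (by norm_num)
  have hSpos := Ibk_pos γ (1/2) (1/2) hγ (by norm_num) (by norm_num) (by norm_num)
  have hA0pos := Ibk_pos γ (-(1/2)) (-(1/2)) hγ (by norm_num) (by norm_num) (by norm_num)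
  have hW : (2*γ+1) * Ibk γ (1/2) (1/2) - (2*γ+2)*γ*Ibk γ (-(1/2)) (-(1/2)) =
      γ*(2⁻¹ * Ibk γ (-(1/2)) (-(3/2)) + (3/2) * Ibk γ (1/2) (-(5/2))) := by
    linear_combination (2*γ+1)*e1 + ((2*γ+1)/2)*e4 + (2*γ+1)*e2 + (1/2)*e5 + (-γ)*e3
  have hK0pos : 0 < besselK 0 γ := by rw [hA0]; exact hA0pos
  have hK1pos : 0 < besselK 1 γ := by
    have h := hSpos
    rw [← hS] at h
    nlinarith [h, hγ]
  refine ⟨hK0pos, hK1pos, ?_⟩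
  have hRHS : 0 < γ*(2⁻¹ * Ibk γ (-(1/2)) (-(3/2)) + (3/2) * Ibk γ (1/2) (-(5/2))) := by
    apply mul_pos hγ; linarith
  rw [← hS, hA0] at *
  nlinarith [hW, hRHS, hγ]


lemma ep_algebra (γ Q : ℝ) (hγ : 0 < γ) (hQpos : 0 < Q) (hQlt : (2*γ+2)*Q < 2*γ+1) :
    γ * Q ^ 2 + Q - γ - 4 / γ < 0 ∧
    0 < γ * Q + (γ * Q ^ 2 + 2 * Q - γ) / (γ * Q ^ 2 + Q - γ - 4 / γ) := by
  have hu : 0 < γ * Q := mul_pos hγ hQpos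
  have hub : (2*γ+2)*(γ*Q) < γ*(2*γ+1) := by nlinarith [mul_lt_mul_of_pos_left hQlt hγ]
  have hP : 0 < -(γ*Q)^3 - 2*(γ*Q)^2 + (γ^2+2)*(γ*Q) + γ^2 := by
    have hd : 0 < γ*(2*γ+1) - (2*γ+2)*(γ*Q) := by linarith
    have hid : (-(γ*Q)^3 - 2*(γ*Q)^2 + (γ^2+2)*(γ*Q) + γ^2) * ((γ*(2*γ+1)) * (2*γ+2)^2) =
        γ^2 * (γ*(2*γ+1) - (2*γ+2)*(γ*Q)) * (2*γ+2)^2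
        + (18*γ^4 + 47*γ^3 + 36*γ^2 + 8*γ) * (γ*Q)
        + (γ*(2*γ+1)) * (γ*Q) * (γ*(2*γ+1) - (2*γ+2)*(γ*Q)) *
            ((2*γ+2)*(γ*Q) + γ*(2*γ+1) + 2*(2*γ+2)) := by
      ring
    have t1 : 0 < γ^2 * (γ*(2*γ+1) - (2*γ+2)*(γ*Q)) * (2*γ+2)^2 := by positivity
    have t2 : 0 < (18*γ^4 + 47*γ^3 + 36*γ^2 + 8*γ) * (γ*Q) := by positivity
    have t3 : 0 < (γ*(2*γ+1)) * (γ*Q) * (γ*(2*γ+1) - (2*γ+2)*(γ*Q)) *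
        ((2*γ+2)*(γ*Q) + γ*(2*γ+1) + 2*(2*γ+2)) := by
      have h1 : 0 < (2*γ+2)*(γ*Q) + γ*(2*γ+1) + 2*(2*γ+2) := by nlinarith
      have hB : 0 < γ*(2*γ+1) := by nlinarith
      positivity
    have hBC : 0 < (γ*(2*γ+1)) * (2*γ+2)^2 := by positivity
    nlinarith [hid, t1, t2, t3, hBC]
  have hγne : γ ≠ 0 := ne_of_gt hγ
  have hDγ : γ * (γ * Q ^ 2 + Q - γ - 4 / γ) = (γ*Q)^2 + (γ*Q) - γ^2 - 4 := by
    field_simp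
  have hD : γ * Q ^ 2 + Q - γ - 4 / γ < 0 := by
    have h1 : (γ*Q)^2 + (γ*Q) - γ^2 - 4 < 0 := by nlinarith [hP, hu]
    nlinarith [hDγ, hγ]
  refine ⟨hD, ?_⟩
  have hNum : γ * ((γ*Q) * (γ * Q ^ 2 + Q - γ - 4 / γ) + (γ * Q ^ 2 + 2 * Q - γ)) =
      -(-(γ*Q)^3 - 2*(γ*Q)^2 + (γ^2+2)*(γ*Q) + γ^2) := by
    field_simp; ring
  have hND : (γ*Q) * (γ * Q ^ 2 + Q - γ - 4 / γ) + (γ * Q ^ 2 + 2 * Q - γ) < 0 := by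
    nlinarith [hNum, hP, hγ]
  have hDne : (γ * Q ^ 2 + Q - γ - 4 / γ) ≠ 0 := ne_of_lt hD
  have h2 : (γ*Q) * (γ * Q ^ 2 + Q - γ - 4 / γ) / (γ * Q ^ 2 + Q - γ - 4 / γ) = γ*Q :=
    mul_div_cancel_right₀ _ hDne
  calc (0:ℝ) < ((γ*Q) * (γ * Q ^ 2 + Q - γ - 4 / γ) + (γ * Q ^ 2 + 2 * Q - γ)) /
        (γ * Q ^ 2 + Q - γ - 4 / γ) := div_pos_of_neg_of_neg hND hD
    _ = γ*Q + (γ * Q ^ 2 + 2 * Q - γ) / (γ * Q ^ 2 + Q - γ - 4 / γ) := by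
        rw [add_div, h2]

theorem diatomic_ep_gt_three (γ : ℝ) (hγ : 0 < γ) :
    let Q := besselK 0 γ / besselK 1 γ
    let ep := 3 + γ * Q + (γ * Q ^ 2 + 2 * Q - γ) / (γ * Q ^ 2 + Q - γ - 4 / γ)
    γ * Q ^ 2 + Q - γ - 4 / γ < 0 ∧ ep > 3 ∧ 0 < 1 / ep ∧ 1 / ep < 1 / 3 := by
  obtain ⟨hK0, hK1, hkey⟩ := besselK_key γ hγ
  intro Q ep
  have hQpos : 0 < Q := div_pos hK0 hK1
  have hQlt : (2*γ+2)*Q < 2*γ+1 := by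
    rw [show Q = besselK 0 γ / besselK 1 γ from rfl, ← mul_div_assoc, div_lt_iff₀ hK1]
    nlinarith [hkey]
  obtain ⟨hD, hpos⟩ := ep_algebra γ Q hγ hQpos hQlt
  have hep : ep > 3 := by
    show (3:ℝ) + γ * Q + (γ * Q ^ 2 + 2 * Q - γ) / (γ * Q ^ 2 + Q - γ - 4 / γ) > 3
    linarith
  exact ⟨hD, hep, one_div_pos.2 (by linarith), one_div_lt_one_div_of_lt (by norm_num) hep⟩
end

section
/- Let c > 0, let v be a real number with |v| < c, and let E > 3 be a real number. Define λ₁ := ((E − 1)c²v − √E·c·(c² − v²))/(Ec² − v²) and λ₃ := ((E − 1)c²v + √E·c·(c² − v²))/(Ec² − v²). Then Ec² − v² > 0 and −c < λ₁ < v < λ₃ < c; in particular all characteristic velocities are sub-luminal. Moreover, at v = 0 one has λ₃ = c/√E < c/√3. -/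
theorem subluminal_characteristic_velocities (c v E : ℝ) (hc : 0 < c)
    (hv : |v| < c) (hE : 3 < E) :
    let lam₁ := ((E - 1) * c ^ 2 * v - Real.sqrt E * c * (c ^ 2 - v ^ 2)) / (E * c ^ 2 - v ^ 2)
    let lam₃ := ((E - 1) * c ^ 2 * v + Real.sqrt E * c * (c ^ 2 - v ^ 2)) / (E * c ^ 2 - v ^ 2)
    0 < E * c ^ 2 - v ^ 2 ∧ -c < lam₁ ∧ lam₁ < v ∧ v < lam₃ ∧ lam₃ < c ∧
      ((E - 1) * c ^ 2 * 0 + Real.sqrt E * c * (c ^ 2 - 0 ^ 2)) / (E * c ^ 2 - 0 ^ 2)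
        = c / Real.sqrt E ∧
      c / Real.sqrt E < c / Real.sqrt 3 := by
  intro lam₁ lam₃
  have hv1 : -c < v := (abs_lt.mp hv).1
  have hv2 : v < c := (abs_lt.mp hv).2
  have hE0 : (0:ℝ) ≤ E := by linarith
  set s := Real.sqrt E with hs
  have hs2 : s ^ 2 = E := Real.sq_sqrt hE0
  have h3 : Real.sqrt 3 < s := Real.sqrt_lt_sqrt (by norm_num) hE
  have h31 : (1:ℝ) < Real.sqrt 3 := by
    have : (1:ℝ) = Real.sqrt 1 := (Real.sqrt_one).symm
    rw [this]; exact Real.sqrt_lt_sqrt (by norm_num) (by norm_num)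
  have hs1 : (1:ℝ) < s := lt_trans h31 h3
  have hD : 0 < E * c ^ 2 - v ^ 2 := by nlinarith
  have hcv : 0 < c - v := by linarith
  have hcv' : 0 < c + v := by linarith
  refine ⟨hD, ?_, ?_, ?_, ?_, ?_, ?_⟩
  · -- -c < lam₁
    rw [show lam₁ = _ from rfl, lt_div_iff₀ hD, ← hs, ← hs2]
    nlinarith [mul_pos (mul_pos (mul_pos hc hcv') (sub_pos.mpr hs1))
      (show 0 < s*c + v by nlinarith)]
  · -- lam₁ < v
    rw [show lam₁ = _ from rfl, div_lt_iff₀ hD, ← hs, ← hs2]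
    nlinarith [mul_pos (mul_pos hcv hcv') (show 0 < s*c + v by nlinarith)]
  · -- v < lam₃
    rw [show lam₃ = _ from rfl, lt_div_iff₀ hD, ← hs, ← hs2]
    nlinarith [mul_pos (mul_pos hcv hcv') (show 0 < s*c - v by nlinarith)]
  · -- lam₃ < c
    rw [show lam₃ = _ from rfl, div_lt_iff₀ hD, ← hs, ← hs2]
    nlinarith [mul_pos (mul_pos (mul_pos hc hcv) (sub_pos.mpr hs1)) (show 0 < s*c - v by nlinarith)]
  · -- value at v = 0
    have hsne : s ≠ 0 := by positivity
    field_simp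
    rw [← hs2]; ring
  · -- c / s < c / √3
    apply div_lt_div_of_pos_left hc (by positivity) h3
end

section
/- For every real γ > 0, writing R(γ) := K_1(γ)/K_2(γ), the quantity I₁(γ) := γ²R⁴ + 4γR³ − (2γ² + 9)R² − (4γ + 33/γ)R + γ² + 12 + 12/γ² is strictly positive. (This inequality is equivalent to (e+p)·e_pp − 2e_p(e_p − 1) < 0 along isentropes and establishes the genuine nonlinearity of the first and third characteristic fields of the relativistic Euler system for a monatomic gas with Synge energy.) -/
set_option maxHeartbeats 2000000

open MeasureTheory Real

namespace MonatomicGN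

open Set Filter Topology

lemma integrableOn_aux {γ : ℝ} {F : ℝ → ℝ} (hF : Continuous F) (C : ℝ) (n : ℕ)
    (hb : ∀ t : ℝ, 1 ≤ t → |F t| ≤ C * t ^ n * Real.exp (-t)) :
    IntegrableOn F (Set.Ioi γ) := by
  refine integrable_of_isBigO_exp_neg (b := 1/2) (by norm_num) hF.continuousOn ?_
  have h0 : Tendsto (fun t : ℝ => C * (t ^ n * Real.exp (-(1/2) * t))) atTop (𝓝 (C * 0)) := by
    refine Tendsto.const_mul C ?_
    have := tendsto_rpow_mul_exp_neg_mul_atTop_nhds_zero n (1/2) (by norm_num)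
    refine this.congr fun x => by rw [Real.rpow_natCast]
  rw [mul_zero] at h0
  have h1 : ∀ᶠ t : ℝ in atTop, C * (t ^ n * Real.exp (-(1/2) * t)) ≤ 1 :=
    h0.eventually_le_const one_pos
  rw [Asymptotics.isBigO_iff]
  refine ⟨1, ?_⟩
  filter_upwards [h1, eventually_ge_atTop (1:ℝ)] with t h1t hge
  have hexp : Real.exp (-t) = Real.exp (-(1/2) * t) * Real.exp (-(1/2) * t) := by
    rw [← Real.exp_add]; ring_nf
  have h2 : C * t ^ n * Real.exp (-t) = (C * (t ^ n * Real.exp (-(1/2) * t))) * Real.exp (-(1/2) * t) := by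
    rw [hexp]; ring
  have h3 := hb t hge
  rw [Real.norm_eq_abs, Real.norm_eq_abs, abs_of_pos (Real.exp_pos _), one_mul]
  refine h3.trans ?_
  rw [h2]
  nlinarith [Real.exp_pos (-(1/2) * t), h1t]

lemma int_base (γ : ℝ) (k : ℕ) :
    IntegrableOn (fun t : ℝ => t ^ k * (Real.exp (-t) * Real.sqrt (t ^ 2 - γ ^ 2))) (Set.Ioi γ) := by
  refine integrableOn_aux ?_ 1 (k+1) ?_
  · exact (continuous_pow k).mul ((Real.continuous_exp.comp continuous_neg).mul
      (Real.continuous_sqrt.comp ((continuous_pow 2).sub continuous_const)))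
  · intro t ht
    have ht0 : (0:ℝ) < t := lt_of_lt_of_le one_pos ht
    have hs : Real.sqrt (t ^ 2 - γ ^ 2) ≤ t := by
      calc Real.sqrt (t ^ 2 - γ ^ 2) ≤ Real.sqrt (t ^ 2) :=
            Real.sqrt_le_sqrt (by nlinarith [sq_nonneg γ])
        _ = t := Real.sqrt_sq ht0.le
    rw [abs_of_nonneg (by positivity)]
    calc t ^ k * (Real.exp (-t) * Real.sqrt (t ^ 2 - γ ^ 2))
        ≤ t ^ k * (Real.exp (-t) * t) := by
          refine mul_le_mul_of_nonneg_left ?_ (by positivity)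
          exact mul_le_mul_of_nonneg_left hs (Real.exp_pos _).le
      _ = 1 * t ^ (k+1) * Real.exp (-t) := by ring

lemma tendsto_aux (γ : ℝ) {Q : ℝ → ℝ} (D : ℝ) (hQ : ∀ t : ℝ, 1 ≤ t → |Q t| ≤ D * t ^ 3) :
    Tendsto (fun t : ℝ => Real.exp (-t) * (Q t * ((t ^ 2 - γ ^ 2) * Real.sqrt (t ^ 2 - γ ^ 2))))
      atTop (𝓝 0) := by
  have hD : 0 ≤ D := by
    have h := (abs_nonneg (Q 1)).trans (hQ 1 le_rfl)
    nlinarith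
  refine squeeze_zero_norm' (a := fun t : ℝ => D * (t ^ 6 * Real.exp (-t))) ?_ ?_
  · filter_upwards [eventually_ge_atTop (1:ℝ), eventually_ge_atTop (|γ| + 1)] with t h1 h2
    have ht0 : (0:ℝ) < t := by linarith
    have hγ2 : γ ^ 2 ≤ t ^ 2 := by nlinarith [abs_nonneg γ, sq_abs γ, neg_abs_le γ, le_abs_self γ]
    have hγ0 : (0:ℝ) ≤ γ ^ 2 := sq_nonneg γ
    have hu0 : (0:ℝ) ≤ t ^ 2 - γ ^ 2 := by linarith
    have hs : Real.sqrt (t ^ 2 - γ ^ 2) ≤ t := by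
      calc Real.sqrt (t ^ 2 - γ ^ 2) ≤ Real.sqrt (t ^ 2) := Real.sqrt_le_sqrt (by linarith)
        _ = t := Real.sqrt_sq ht0.le
    rw [Real.norm_eq_abs, abs_mul, abs_mul, abs_of_pos (Real.exp_pos _),
      abs_of_nonneg (mul_nonneg hu0 (Real.sqrt_nonneg _))]
    calc Real.exp (-t) * (|Q t| * ((t ^ 2 - γ ^ 2) * Real.sqrt (t ^ 2 - γ ^ 2)))
        ≤ Real.exp (-t) * ((D * t ^ 3) * (t ^ 2 * t)) := by
          refine mul_le_mul_of_nonneg_left ?_ (Real.exp_pos _).le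
          refine mul_le_mul (hQ t h1) ?_ (mul_nonneg hu0 (Real.sqrt_nonneg _)) (by positivity)
          exact mul_le_mul (by linarith) hs (Real.sqrt_nonneg _) (by positivity)
      _ = D * (t ^ 6 * Real.exp (-t)) := by ring
  · have h := (Real.tendsto_pow_mul_exp_neg_atTop_nhds_zero 6).const_mul D
    simpa using h

lemma cubic_bound (c3 c2 c1 c0 t : ℝ) (ht : 1 ≤ t) :
    |c3 * t ^ 3 + c2 * t ^ 2 + c1 * t + c0| ≤ (|c3| + |c2| + |c1| + |c0|) * t ^ 3 := by
  have ht0 : (0:ℝ) < t := lt_of_lt_of_le one_pos ht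
  have e2 : t ^ 2 ≤ t ^ 3 := by nlinarith
  have e1 : t ≤ t ^ 3 := by nlinarith
  have e0 : (1:ℝ) ≤ t ^ 3 := by nlinarith
  have h1 : |c3 * t ^ 3 + c2 * t ^ 2 + c1 * t + c0|
      ≤ |c3| * t ^ 3 + |c2| * t ^ 2 + |c1| * t + |c0| := by
    calc |c3 * t ^ 3 + c2 * t ^ 2 + c1 * t + c0|
        ≤ |c3 * t ^ 3 + c2 * t ^ 2 + c1 * t| + |c0| := abs_add_le _ _
      _ ≤ |c3 * t ^ 3 + c2 * t ^ 2| + |c1 * t| + |c0| := by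
          linarith [abs_add_le (c3 * t ^ 3 + c2 * t ^ 2) (c1 * t)]
      _ ≤ |c3 * t ^ 3| + |c2 * t ^ 2| + |c1 * t| + |c0| := by
          linarith [abs_add_le (c3 * t ^ 3) (c2 * t ^ 2)]
      _ = |c3| * t ^ 3 + |c2| * t ^ 2 + |c1| * t + |c0| := by
          rw [abs_mul, abs_mul, abs_mul, abs_of_nonneg (by positivity : (0:ℝ) ≤ t ^ 3),
            abs_of_nonneg (by positivity : (0:ℝ) ≤ t ^ 2), abs_of_pos ht0]
  refine h1.trans ?_
  nlinarith [abs_nonneg c3, abs_nonneg c2, abs_nonneg c1, abs_nonneg c0]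

lemma hasDerivAt_cubic (a b c d t : ℝ) :
    HasDerivAt (fun s : ℝ => a * s ^ 3 + b * s ^ 2 + c * s + d) (3 * a * t ^ 2 + 2 * b * t + c) t := by
  have h1 := ((hasDerivAt_pow 3 t).const_mul a).add ((hasDerivAt_pow 2 t).const_mul b)
  have h2 := (hasDerivAt_id t).const_mul c
  have h3 := (h1.add h2).add_const d
  refine h3.congr_deriv ?_
  push_cast
  ring

lemma intOn_sub {γ : ℝ} {f g : ℝ → ℝ} (hf : IntegrableOn f (Set.Ioi γ)) (hg : IntegrableOn g (Set.Ioi γ)) :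
    IntegrableOn (fun t => f t - g t) (Set.Ioi γ) := hf.sub hg

lemma intOn_add {γ : ℝ} {f g : ℝ → ℝ} (hf : IntegrableOn f (Set.Ioi γ)) (hg : IntegrableOn g (Set.Ioi γ)) :
    IntegrableOn (fun t => f t + g t) (Set.Ioi γ) := hf.add hg

lemma ftc_key {γ : ℝ} (hγ : 0 < γ) {F Q Q' : ℝ → ℝ}
    (hQ : ∀ t, HasDerivAt Q (Q' t) t)
    (heq : ∀ t : ℝ, F t = ((Q t - Q' t) * (t ^ 2 - γ ^ 2) - 3 * t * Q t) *
      (Real.exp (-t) * Real.sqrt (t ^ 2 - γ ^ 2)))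
    (hint : IntegrableOn F (Set.Ioi γ))
    (htend : Tendsto (fun t : ℝ => Real.exp (-t) * (Q t * ((t ^ 2 - γ ^ 2) * Real.sqrt (t ^ 2 - γ ^ 2))))
      atTop (𝓝 0)) :
    ∫ t in Set.Ioi γ, F t = 0 := by
  have hQc : Continuous Q := by
    rw [continuous_iff_continuousAt]; exact fun t => (hQ t).continuousAt
  have hGc : Continuous (fun s : ℝ => -(Real.exp (-s) * (Q s * ((s ^ 2 - γ ^ 2) * Real.sqrt (s ^ 2 - γ ^ 2))))) := by
    exact ((Real.continuous_exp.comp continuous_neg).mul (hQc.mul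
      (((continuous_pow 2).sub continuous_const).mul
        (Real.continuous_sqrt.comp ((continuous_pow 2).sub continuous_const))))).neg
  have hderiv : ∀ t ∈ Set.Ioi γ,
      HasDerivAt (fun s : ℝ => -(Real.exp (-s) * (Q s * ((s ^ 2 - γ ^ 2) * Real.sqrt (s ^ 2 - γ ^ 2)))))
        (F t) t := by
    intro t ht
    have htγ : γ < t := ht
    have hu : 0 < t ^ 2 - γ ^ 2 := by nlinarith
    have h1 : HasDerivAt (fun s : ℝ => s ^ 2 - γ ^ 2) (2 * t) t := by
      simpa using (hasDerivAt_pow 2 t).sub_const (γ ^ 2)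
    have h2 := h1.sqrt hu.ne'
    have h3 := h1.mul h2
    have hs0 : 0 < Real.sqrt (t ^ 2 - γ ^ 2) := Real.sqrt_pos.mpr hu
    have h4 : Real.sqrt (t ^ 2 - γ ^ 2) * Real.sqrt (t ^ 2 - γ ^ 2) = t ^ 2 - γ ^ 2 :=
      Real.mul_self_sqrt hu.le
    have e : 2 * t * Real.sqrt (t ^ 2 - γ ^ 2) + (t ^ 2 - γ ^ 2) * (2 * t / (2 * Real.sqrt (t ^ 2 - γ ^ 2)))
        = 3 * t * Real.sqrt (t ^ 2 - γ ^ 2) := by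
      field_simp
      nlinarith [h4]
    rw [e] at h3
    have h5 : HasDerivAt (fun s : ℝ => Real.exp (-s)) (-Real.exp (-t)) t := by
      simpa using (hasDerivAt_neg' t).exp
    have combo := (h5.mul ((hQ t).mul h3)).neg
    rw [heq t]
    refine combo.congr_deriv ?_
    simp only [Pi.mul_apply]
    ring
  have htend' : Tendsto (fun s : ℝ => -(Real.exp (-s) * (Q s * ((s ^ 2 - γ ^ 2) * Real.sqrt (s ^ 2 - γ ^ 2)))))
      atTop (𝓝 0) := by
    simpa using htend.neg
  have hres := integral_Ioi_of_hasDerivAt_of_tendsto hGc.continuousWithinAt hderiv hint htend'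
  simpa using hres

theorem main (γ : ℝ) (hγ : 0 < γ) :
    0 < γ ^ 2 * (besselK 1 γ / besselK 2 γ) ^ 4 + 4 * γ * (besselK 1 γ / besselK 2 γ) ^ 3
        - (2 * γ ^ 2 + 9) * (besselK 1 γ / besselK 2 γ) ^ 2
        - (4 * γ + 33 / γ) * (besselK 1 γ / besselK 2 γ) + γ ^ 2 + 12 + 12 / γ ^ 2 := by
  obtain ⟨a, b, ha, hb, hK1, hK2, hE⟩ :
      ∃ a b : ℝ, 0 < a ∧ 0 < b ∧ besselK 1 γ = a / γ ∧ besselK 2 γ = b / γ ^ 2 ∧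
        ((1600)*γ^9 + (13840)*γ^8 + (60304)*γ^7 + (160465)*γ^6 + (283397)*γ^5 + (342156)*γ^4 + (277477)*γ^3 + (138393)*γ^2 + (32400)*γ) * a ≤ ((1600)*γ^8 + (11440)*γ^7 + (42544)*γ^6 + (92959)*γ^5 + (131507)*γ^4 + (124362)*γ^3 + (75907)*γ^2 + (25821)*γ + (3348)) * b := by
    have ib := int_base γ
    have iw : IntegrableOn (fun t : ℝ => Real.exp (-t) * Real.sqrt (t ^ 2 - γ ^ 2)) (Set.Ioi γ) := by
      simpa using ib 0
    have itw : IntegrableOn (fun t : ℝ => t * (Real.exp (-t) * Real.sqrt (t ^ 2 - γ ^ 2))) (Set.Ioi γ) := by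
      simpa using ib 1
    have iMw : IntegrableOn (fun t : ℝ => (t ^ 2 - γ ^ 2) * (Real.exp (-t) * Real.sqrt (t ^ 2 - γ ^ 2))) (Set.Ioi γ) := by
      have e : (fun t : ℝ => (t ^ 2 - γ ^ 2) * (Real.exp (-t) * Real.sqrt (t ^ 2 - γ ^ 2)))
          = (fun t : ℝ => t ^ 2 * (Real.exp (-t) * Real.sqrt (t ^ 2 - γ ^ 2))
              - γ ^ 2 * (Real.exp (-t) * Real.sqrt (t ^ 2 - γ ^ 2))) := by
        funext t; ring
      rw [e]
      exact intOn_sub (ib 2) (iw.const_mul (γ ^ 2))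
    have iE : IntegrableOn (fun t : ℝ => (t - γ) * ((2*(γ+1)*(t - γ) - (3*γ+5)) * (5*(γ+1)*(t - γ) - (27*γ+36))) ^ 2 * (Real.exp (-t) * Real.sqrt (t ^ 2 - γ ^ 2))) (Set.Ioi γ) := by
      have e : (fun t : ℝ => (t - γ) * ((2*(γ+1)*(t - γ) - (3*γ+5)) * (5*(γ+1)*(t - γ) - (27*γ+36))) ^ 2 * (Real.exp (-t) * Real.sqrt (t ^ 2 - γ ^ 2)))
          = (fun t : ℝ => ((100)*γ^4 + (400)*γ^3 + (600)*γ^2 + (400)*γ + (100)) * (t ^ 5 * (Real.exp (-t) * Real.sqrt (t ^ 2 - γ ^ 2))) + ((-500)*γ^5 + (-3380)*γ^4 + (-9080)*γ^3 + (-11960)*γ^2 + (-7700)*γ + (-1940)) * (t ^ 4 * (Real.exp (-t) * Real.sqrt (t ^ 2 - γ ^ 2))) + ((1000)*γ^6 + (9520)*γ^5 + (36701)*γ^4 + (74848)*γ^3 + (85682)*γ^2 + (52024)*γ + (13009)) * (t ^ 3 * (Real.exp (-t) * Real.sqrt (t ^ 2 - γ ^ 2))) + ((-1000)*γ^7 +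 (-12280)*γ^6 + (-61623)*γ^5 + (-167962)*γ^4 + (-272272)*γ^3 + (-265662)*γ^2 + (-145929)*γ + (-34920)) * (t ^ 2 * (Real.exp (-t) * Real.sqrt (t ^ 2 - γ ^ 2))) + ((500)*γ^8 + (7520)*γ^7 + (46463)*γ^6 + (157220)*γ^5 + (324359)*γ^4 + (422378)*γ^3 + (341040)*γ^2 + (157320)*γ + (32400)) * (t * (Real.exp (-t) * Real.sqrt (t ^ 2 - γ ^ 2))) + ((-100)*γ^9 + (-1780)*γ^8 + (-13061)*γ^7 + (-52546)*γ^6 + (-130169)*γ^5 + (-206800)*γ^4 + (-208120)*γ^3 + (-122400)*γ^2 + (-32400)*γ) * (Real.exp (-t) * Real.sqrt (t ^ 2 - γ ^ 2))) := by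
        funext t; ring
      rw [e]
      exact intOn_add (intOn_add (intOn_add (intOn_add (intOn_add
        ((ib 5).const_mul ((100)*γ^4 + (400)*γ^3 + (600)*γ^2 + (400)*γ + (100))) ((ib 4).const_mul ((-500)*γ^5 + (-3380)*γ^4 + (-9080)*γ^3 + (-11960)*γ^2 + (-7700)*γ + (-1940))))
        ((ib 3).const_mul ((1000)*γ^6 + (9520)*γ^5 + (36701)*γ^4 + (74848)*γ^3 + (85682)*γ^2 + (52024)*γ + (13009)))) ((ib 2).const_mul ((-1000)*γ^7 + (-12280)*γ^6 + (-61623)*γ^5 + (-167962)*γ^4 + (-272272)*γ^3 + (-265662)*γ^2 + (-145929)*γ + (-34920))))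
        (itw.const_mul ((500)*γ^8 + (7520)*γ^7 + (46463)*γ^6 + (157220)*γ^5 + (324359)*γ^4 + (422378)*γ^3 + (341040)*γ^2 + (157320)*γ + (32400)))) (iw.const_mul ((-100)*γ^9 + (-1780)*γ^8 + (-13061)*γ^7 + (-52546)*γ^6 + (-130169)*γ^5 + (-206800)*γ^4 + (-208120)*γ^3 + (-122400)*γ^2 + (-32400)*γ))
    -- positivity of the two basic moments
    have hsupp : ∀ t ∈ Set.Ioi γ, 0 < Real.exp (-t) * Real.sqrt (t ^ 2 - γ ^ 2) := by
      intro t ht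
      have htγ : γ < t := ht
      have hu : 0 < t ^ 2 - γ ^ 2 := by nlinarith
      positivity
    have hm0 : 0 < ∫ t in Set.Ioi γ, Real.exp (-t) * Real.sqrt (t ^ 2 - γ ^ 2) := by
      rw [setIntegral_pos_iff_support_of_nonneg_ae ?_ iw]
      · have hsub : Set.Ioi γ ⊆ Function.support (fun t : ℝ => Real.exp (-t) * Real.sqrt (t ^ 2 - γ ^ 2)) := by
          intro t ht
          exact (hsupp t ht).ne'
        rw [Set.inter_eq_right.mpr hsub, Real.volume_Ioi]
        simp
      · refine (ae_restrict_iff' measurableSet_Ioi).mpr (ae_of_all _ fun t ht => (hsupp t ht).le)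
    have hm1 : 0 < ∫ t in Set.Ioi γ, t * (Real.exp (-t) * Real.sqrt (t ^ 2 - γ ^ 2)) := by
      rw [setIntegral_pos_iff_support_of_nonneg_ae ?_ itw]
      · have hsub : Set.Ioi γ ⊆ Function.support (fun t : ℝ => t * (Real.exp (-t) * Real.sqrt (t ^ 2 - γ ^ 2))) := by
          intro t ht
          have htγ : γ < t := ht
          exact (mul_pos (hγ.trans htγ) (hsupp t ht)).ne'
        rw [Set.inter_eq_right.mpr hsub, Real.volume_Ioi]
        simp
      · refine (ae_restrict_iff' measurableSet_Ioi).mpr (ae_of_all _ fun t ht => ?_)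
        have htγ : γ < t := ht
        exact (mul_pos (hγ.trans htγ) (hsupp t ht)).le
    -- M = 3 m1 via FTC
    have hM3 : (∫ t in Set.Ioi γ, (t ^ 2 - γ ^ 2) * (Real.exp (-t) * Real.sqrt (t ^ 2 - γ ^ 2)))
        = 3 * ∫ t in Set.Ioi γ, t * (Real.exp (-t) * Real.sqrt (t ^ 2 - γ ^ 2)) := by
      have h0 := ftc_key hγ (Q := fun _ => (1:ℝ)) (Q' := fun _ => (0:ℝ))
        (F := fun t : ℝ => (t ^ 2 - γ ^ 2) * (Real.exp (-t) * Real.sqrt (t ^ 2 - γ ^ 2))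
          - 3 * (t * (Real.exp (-t) * Real.sqrt (t ^ 2 - γ ^ 2))))
        (fun t => hasDerivAt_const t 1)
        (fun t => by
          show (t ^ 2 - γ ^ 2) * (Real.exp (-t) * Real.sqrt (t ^ 2 - γ ^ 2))
            - 3 * (t * (Real.exp (-t) * Real.sqrt (t ^ 2 - γ ^ 2)))
            = ((1 - 0) * (t ^ 2 - γ ^ 2) - 3 * t * 1) * (Real.exp (-t) * Real.sqrt (t ^ 2 - γ ^ 2))
          ring)
        (intOn_sub iMw (itw.const_mul 3))
        (tendsto_aux γ 1 (fun t ht => by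
          show |(1:ℝ)| ≤ 1 * t ^ 3
          rw [abs_one]
          nlinarith [mul_nonneg (mul_nonneg (sub_nonneg.mpr ht) (sub_nonneg.mpr ht)) (sub_nonneg.mpr ht),
            sq_nonneg (t - 1)]))
      beta_reduce at h0
      rw [integral_sub iMw (itw.const_mul 3), integral_const_mul] at h0
      linarith
    -- the certificate inequality via FTC
    have hEnn : 0 ≤ ∫ t in Set.Ioi γ, (t - γ) * ((2*(γ+1)*(t - γ) - (3*γ+5)) * (5*(γ+1)*(t - γ) - (27*γ+36))) ^ 2 * (Real.exp (-t) * Real.sqrt (t ^ 2 - γ ^ 2)) := by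
      refine setIntegral_nonneg measurableSet_Ioi fun t ht => ?_
      have htγ : γ < t := ht
      refine mul_nonneg (mul_nonneg (by linarith) (sq_nonneg _)) ?_
      exact mul_nonneg (Real.exp_pos _).le (Real.sqrt_nonneg _)
    have hcert := ftc_key hγ
      (Q := fun t : ℝ => ((100)*γ^4 + (400)*γ^3 + (600)*γ^2 + (400)*γ + (100)) * t ^ 3 + ((-500)*γ^5 + (-2780)*γ^4 + (-6680)*γ^3 + (-8360)*γ^2 + (-5300)*γ + (-1340)) * t ^ 2 + ((1100)*γ^6 + (7420)*γ^5 + (23401)*γ^4 + (41848)*γ^3 + (43982)*γ^2 + (25524)*γ + (6309)) * t + ((-1500)*γ^7 + (-10960)*γ^6 + (-39823)*γ^5 + (-84518)*γ^4 + (-111380)*γ^3 + (-91374)*γ^2 + (-43833)*γ + (-9684)))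
      (Q' := fun t : ℝ => 3 * ((100)*γ^4 + (400)*γ^3 + (600)*γ^2 + (400)*γ + (100)) * t ^ 2 + 2 * ((-500)*γ^5 + (-2780)*γ^4 + (-6680)*γ^3 + (-8360)*γ^2 + (-5300)*γ + (-1340)) * t + ((1100)*γ^6 + (7420)*γ^5 + (23401)*γ^4 + (41848)*γ^3 + (43982)*γ^2 + (25524)*γ + (6309)))
      (F := fun t : ℝ => (t - γ) * ((2*(γ+1)*(t - γ) - (3*γ+5)) * (5*(γ+1)*(t - γ) - (27*γ+36))) ^ 2 * (Real.exp (-t) * Real.sqrt (t ^ 2 - γ ^ 2))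
        - (((1600)*γ^8 + (11440)*γ^7 + (42544)*γ^6 + (92959)*γ^5 + (131507)*γ^4 + (124362)*γ^3 + (75907)*γ^2 + (25821)*γ + (3348)) * (t * (Real.exp (-t) * Real.sqrt (t ^ 2 - γ ^ 2)))
          - ((1600)*γ^9 + (13840)*γ^8 + (60304)*γ^7 + (160465)*γ^6 + (283397)*γ^5 + (342156)*γ^4 + (277477)*γ^3 + (138393)*γ^2 + (32400)*γ) * (Real.exp (-t) * Real.sqrt (t ^ 2 - γ ^ 2))))
      (fun t => hasDerivAt_cubic _ _ _ _ t)
      (fun t => by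
        show (t - γ) * ((2*(γ+1)*(t - γ) - (3*γ+5)) * (5*(γ+1)*(t - γ) - (27*γ+36))) ^ 2 * (Real.exp (-t) * Real.sqrt (t ^ 2 - γ ^ 2))
            - (((1600)*γ^8 + (11440)*γ^7 + (42544)*γ^6 + (92959)*γ^5 + (131507)*γ^4 + (124362)*γ^3 + (75907)*γ^2 + (25821)*γ + (3348)) * (t * (Real.exp (-t) * Real.sqrt (t ^ 2 - γ ^ 2)))
              - ((1600)*γ^9 + (13840)*γ^8 + (60304)*γ^7 + (160465)*γ^6 + (283397)*γ^5 + (342156)*γ^4 + (277477)*γ^3 + (138393)*γ^2 + (32400)*γ) * (Real.exp (-t) * Real.sqrt (t ^ 2 - γ ^ 2)))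
          = ((((100)*γ^4 + (400)*γ^3 + (600)*γ^2 + (400)*γ + (100)) * t ^ 3 + ((-500)*γ^5 + (-2780)*γ^4 + (-6680)*γ^3 + (-8360)*γ^2 + (-5300)*γ + (-1340)) * t ^ 2 + ((1100)*γ^6 + (7420)*γ^5 + (23401)*γ^4 + (41848)*γ^3 + (43982)*γ^2 + (25524)*γ + (6309)) * t + ((-1500)*γ^7 + (-10960)*γ^6 + (-39823)*γ^5 + (-84518)*γ^4 + (-111380)*γ^3 + (-91374)*γ^2 + (-43833)*γ + (-9684))
              - (3 * ((100)*γ^4 + (400)*γ^3 + (600)*γ^2 + (400)*γ + (100)) * t ^ 2 + 2 * ((-500)*γ^5 + (-2780)*γ^4 + (-6680)*γ^3 + (-8360)*γ^2 + (-5300)*γ + (-1340)) * t + ((1100)*γ^6 + (7420)*γ^5 + (23401)*γ^4 + (41848)*γ^3 + (43982)*γ^2 + (25524)*γ + (6309)))) * (t ^ 2 - γ ^ 2)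
            - 3 * t * (((100)*γ^4 + (400)*γ^3 + (600)*γ^2 + (400)*γ + (100)) * t ^ 3 + ((-500)*γ^5 + (-2780)*γ^4 + (-6680)*γ^3 + (-8360)*γ^2 + (-5300)*γ + (-1340)) * t ^ 2 + ((1100)*γ^6 + (7420)*γ^5 + (23401)*γ^4 + (41848)*γ^3 + (43982)*γ^2 + (25524)*γ + (6309)) * t + ((-1500)*γ^7 + (-10960)*γ^6 + (-39823)*γ^5 + (-84518)*γ^4 + (-111380)*γ^3 + (-91374)*γ^2 + (-43833)*γ + (-9684))))
            * (Real.exp (-t) * Real.sqrt (t ^ 2 - γ ^ 2))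
        ring)
      (intOn_sub iE (intOn_sub (itw.const_mul ((1600)*γ^8 + (11440)*γ^7 + (42544)*γ^6 + (92959)*γ^5 + (131507)*γ^4 + (124362)*γ^3 + (75907)*γ^2 + (25821)*γ + (3348))) (iw.const_mul ((1600)*γ^9 + (13840)*γ^8 + (60304)*γ^7 + (160465)*γ^6 + (283397)*γ^5 + (342156)*γ^4 + (277477)*γ^3 + (138393)*γ^2 + (32400)*γ))))
      (tendsto_aux γ (|((100)*γ^4 + (400)*γ^3 + (600)*γ^2 + (400)*γ + (100))| + |((-500)*γ^5 + (-2780)*γ^4 + (-6680)*γ^3 + (-8360)*γ^2 + (-5300)*γ + (-1340))| + |((1100)*γ^6 + (7420)*γ^5 + (23401)*γ^4 + (41848)*γ^3 + (43982)*γ^2 + (25524)*γ + (6309))| + |((-1500)*γ^7 + (-10960)*γ^6 + (-39823)*γ^5 + (-84518)*γ^4 + (-111380)*γ^3 + (-91374)*γ^2 + (-43833)*γ + (-9684))|)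
        (fun t ht => cubic_bound _ _ _ _ t ht))
    beta_reduce at hcert
    rw [integral_sub iE (intOn_sub (itw.const_mul ((1600)*γ^8 + (11440)*γ^7 + (42544)*γ^6 + (92959)*γ^5 + (131507)*γ^4 + (124362)*γ^3 + (75907)*γ^2 + (25821)*γ + (3348))) (iw.const_mul ((1600)*γ^9 + (13840)*γ^8 + (60304)*γ^7 + (160465)*γ^6 + (283397)*γ^5 + (342156)*γ^4 + (277477)*γ^3 + (138393)*γ^2 + (32400)*γ))),
      integral_sub (itw.const_mul ((1600)*γ^8 + (11440)*γ^7 + (42544)*γ^6 + (92959)*γ^5 + (131507)*γ^4 + (124362)*γ^3 + (75907)*γ^2 + (25821)*γ + (3348))) (iw.const_mul ((1600)*γ^9 + (13840)*γ^8 + (60304)*γ^7 + (160465)*γ^6 + (283397)*γ^5 + (342156)*γ^4 + (277477)*γ^3 + (138393)*γ^2 + (32400)*γ)),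
      integral_const_mul, integral_const_mul] at hcert
    -- besselK values
    have hK1 : besselK 1 γ = (∫ t in Set.Ioi γ, Real.exp (-t) * Real.sqrt (t ^ 2 - γ ^ 2)) / γ := by
      have hIeq : ∫ t in Set.Ioi γ, Real.exp (-t) * (t ^ 2 - γ ^ 2) ^ (((1:ℕ) : ℝ) - 1 / 2)
          = ∫ t in Set.Ioi γ, Real.exp (-t) * Real.sqrt (t ^ 2 - γ ^ 2) := by
        refine setIntegral_congr_fun measurableSet_Ioi fun t ht => ?_
        rw [show (((1:ℕ) : ℝ) - 1 / 2) = (1 / 2 : ℝ) by norm_num, ← Real.sqrt_eq_rpow]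
      rw [besselK, hIeq]
      rw [show (-((1:ℕ) : ℝ)) = (-1 : ℝ) by norm_num, Real.rpow_neg_one]
      rw [show ((2:ℝ) ^ (1:ℕ) * (Nat.factorial 1 : ℝ) / (Nat.factorial (2 * 1) : ℝ)) = 1 by
        norm_num [Nat.factorial]]
      rw [div_eq_mul_inv, one_mul, mul_comm]
    have hK2 : besselK 2 γ = (∫ t in Set.Ioi γ, t * (Real.exp (-t) * Real.sqrt (t ^ 2 - γ ^ 2))) / γ ^ 2 := by
      have hIeq : ∫ t in Set.Ioi γ, Real.exp (-t) * (t ^ 2 - γ ^ 2) ^ (((2:ℕ) : ℝ) - 1 / 2)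
          = ∫ t in Set.Ioi γ, (t ^ 2 - γ ^ 2) * (Real.exp (-t) * Real.sqrt (t ^ 2 - γ ^ 2)) := by
        refine setIntegral_congr_fun measurableSet_Ioi fun t ht => ?_
        have htγ : γ < t := ht
        have hu : 0 < t ^ 2 - γ ^ 2 := by nlinarith
        rw [show (((2:ℕ) : ℝ) - 1 / 2) = (1 : ℝ) + 1 / 2 by norm_num, Real.rpow_add hu,
          Real.rpow_one, ← Real.sqrt_eq_rpow]
        ring
      rw [besselK, hIeq, hM3]
      rw [show (-((2:ℕ) : ℝ)) = (-2 : ℝ) by norm_num]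
      rw [show (γ : ℝ) ^ (-2 : ℝ) = (γ ^ 2)⁻¹ by
        rw [show (-2 : ℝ) = -((2:ℕ) : ℝ) by norm_num, Real.rpow_neg hγ.le, Real.rpow_natCast]]
      rw [show ((2:ℝ) ^ (2:ℕ) * (Nat.factorial 2 : ℝ) / (Nat.factorial (2 * 2) : ℝ)) = 1/3 by
        norm_num [Nat.factorial]]
      field_simp
    exact ⟨_, _, hm0, hm1, hK1, hK2, by linarith⟩
  -- positivity of the certificate polynomials
  have hA2 : 0 < ((1600)*γ^8 + (11440)*γ^7 + (42544)*γ^6 + (92959)*γ^5 + (131507)*γ^4 + (124362)*γ^3 + (75907)*γ^2 + (25821)*γ + (3348)) := by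
    linarith [pow_pos hγ 2, pow_pos hγ 3, pow_pos hγ 4, pow_pos hγ 5, pow_pos hγ 6, pow_pos hγ 7, pow_pos hγ 8, pow_pos hγ 9, hγ]
  have hB2 : 0 < ((1600)*γ^9 + (13840)*γ^8 + (60304)*γ^7 + (160465)*γ^6 + (283397)*γ^5 + (342156)*γ^4 + (277477)*γ^3 + (138393)*γ^2 + (32400)*γ) := by
    linarith [pow_pos hγ 2, pow_pos hγ 3, pow_pos hγ 4, pow_pos hγ 5, pow_pos hγ 6, pow_pos hγ 7, pow_pos hγ 8, pow_pos hγ 9, hγ]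
  have hP1 : 0 < (γ ^ 2 + 6) * ((1600)*γ^9 + (13840)*γ^8 + (60304)*γ^7 + (160465)*γ^6 + (283397)*γ^5 + (342156)*γ^4 + (277477)*γ^3 + (138393)*γ^2 + (32400)*γ) ^ 2 - γ ^ 4 * ((1600)*γ^8 + (11440)*γ^7 + (42544)*γ^6 + (92959)*γ^5 + (131507)*γ^4 + (124362)*γ^3 + (75907)*γ^2 + (25821)*γ + (3348)) ^ 2 - 2 * γ ^ 2 * ((1600)*γ^8 + (11440)*γ^7 + (42544)*γ^6 + (92959)*γ^5 + (131507)*γ^4 + (124362)*γ^3 + (75907)*γ^2 + (25821)*γ + (3348)) * ((1600)*γ^9 + (13840)*γ^8 + (60304)*γ^7 + (160465)*γ^6 + (283397)*γ^5 + (342156)*γ^4 + (277477)*γ^3 + (138393)*γ^2 + (32400)*γ) := by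
    have e : (γ ^ 2 + 6) * ((1600)*γ^9 + (13840)*γ^8 + (60304)*γ^7 + (160465)*γ^6 + (283397)*γ^5 + (342156)*γ^4 + (277477)*γ^3 + (138393)*γ^2 + (32400)*γ) ^ 2 - γ ^ 4 * ((1600)*γ^8 + (11440)*γ^7 + (42544)*γ^6 + (92959)*γ^5 + (131507)*γ^4 + (124362)*γ^3 + (75907)*γ^2 + (25821)*γ + (3348)) ^ 2 - 2 * γ ^ 2 * ((1600)*γ^8 + (11440)*γ^7 + (42544)*γ^6 + (92959)*γ^5 + (131507)*γ^4 + (124362)*γ^3 + (75907)*γ^2 + (25821)*γ + (3348)) * ((1600)*γ^9 + (13840)*γ^8 + (60304)*γ^7 + (160465)*γ^6 + (283397)*γ^5 + (342156)*γ^4 + (277477)*γ^3 + (138393)*γ^2 + (32400)*γ)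
        = (2560000)*γ^19 + (51968000)*γ^18 + (531782400)*γ^17 + (3566177920)*γ^16 + (17368989376)*γ^15 + (64796762208)*γ^14 + (191036794354)*γ^13 + (453792596070)*γ^12 + (878697998766)*γ^11 + (1395131147990)*γ^10 + (1817566935880)*γ^9 + (1933896044856)*γ^8 + (1661901055798)*γ^7 + (1130638548894)*γ^6 + (588712064418)*γ^5 + (221237462862)*γ^4 + (53590248000)*γ^3 + (6298560000)*γ^2 := by ring
    rw [e]
    linarith [pow_pos hγ 2, pow_pos hγ 3, pow_pos hγ 4, pow_pos hγ 5, pow_pos hγ 6, pow_pos hγ 7, pow_pos hγ 8, pow_pos hγ 9, pow_pos hγ 10, pow_pos hγ 11, pow_pos hγ 12, pow_pos hγ 13, pow_pos hγ 14, pow_pos hγ 15, pow_pos hγ 16, pow_pos hγ 17, pow_pos hγ 18, pow_pos hγ 19, hγ]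
  have hP2 : 0 < ((γ ^ 2 + 6) * ((1600)*γ^9 + (13840)*γ^8 + (60304)*γ^7 + (160465)*γ^6 + (283397)*γ^5 + (342156)*γ^4 + (277477)*γ^3 + (138393)*γ^2 + (32400)*γ) ^ 2 - γ ^ 4 * ((1600)*γ^8 + (11440)*γ^7 + (42544)*γ^6 + (92959)*γ^5 + (131507)*γ^4 + (124362)*γ^3 + (75907)*γ^2 + (25821)*γ + (3348)) ^ 2 - 2 * γ ^ 2 * ((1600)*γ^8 + (11440)*γ^7 + (42544)*γ^6 + (92959)*γ^5 + (131507)*γ^4 + (124362)*γ^3 + (75907)*γ^2 + (25821)*γ + (3348)) * ((1600)*γ^9 + (13840)*γ^8 + (60304)*γ^7 + (160465)*γ^6 + (283397)*γ^5 + (342156)*γ^4 + (277477)*γ^3 + (138393)*γ^2 + (32400)*γ)) ^ 2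
      - (γ ^ 4 * ((1600)*γ^8 + (11440)*γ^7 + (42544)*γ^6 + (92959)*γ^5 + (131507)*γ^4 + (124362)*γ^3 + (75907)*γ^2 + (25821)*γ + (3348)) ^ 2 + 9 * γ ^ 2 * ((1600)*γ^8 + (11440)*γ^7 + (42544)*γ^6 + (92959)*γ^5 + (131507)*γ^4 + (124362)*γ^3 + (75907)*γ^2 + (25821)*γ + (3348)) * ((1600)*γ^9 + (13840)*γ^8 + (60304)*γ^7 + (160465)*γ^6 + (283397)*γ^5 + (342156)*γ^4 + (277477)*γ^3 + (138393)*γ^2 + (32400)*γ) + 24 * ((1600)*γ^9 + (13840)*γ^8 + (60304)*γ^7 + (160465)*γ^6 + (283397)*γ^5 + (342156)*γ^4 + (277477)*γ^3 + (138393)*γ^2 + (32400)*γ) ^ 2) * ((1600)*γ^9 + (13840)*γ^8 + (60304)*γ^7 + (160465)*γ^6 + (283397)*γ^5 + (342156)*γ^4 + (277477)*γ^3 + (138393)*γ^2 + (32400)*γ) ^ 2 := by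
    have e : ((γ ^ 2 + 6) * ((1600)*γ^9 + (13840)*γ^8 + (60304)*γ^7 + (160465)*γ^6 + (283397)*γ^5 + (342156)*γ^4 + (277477)*γ^3 + (138393)*γ^2 + (32400)*γ) ^ 2 - γ ^ 4 * ((1600)*γ^8 + (11440)*γ^7 + (42544)*γ^6 + (92959)*γ^5 + (131507)*γ^4 + (124362)*γ^3 + (75907)*γ^2 + (25821)*γ + (3348)) ^ 2 - 2 * γ ^ 2 * ((1600)*γ^8 + (11440)*γ^7 + (42544)*γ^6 + (92959)*γ^5 + (131507)*γ^4 + (124362)*γ^3 + (75907)*γ^2 + (25821)*γ + (3348)) * ((1600)*γ^9 + (13840)*γ^8 + (60304)*γ^7 + (160465)*γ^6 + (283397)*γ^5 + (342156)*γ^4 + (277477)*γ^3 + (138393)*γ^2 + (32400)*γ)) ^ 2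
        - (γ ^ 4 * ((1600)*γ^8 + (11440)*γ^7 + (42544)*γ^6 + (92959)*γ^5 + (131507)*γ^4 + (124362)*γ^3 + (75907)*γ^2 + (25821)*γ + (3348)) ^ 2 + 9 * γ ^ 2 * ((1600)*γ^8 + (11440)*γ^7 + (42544)*γ^6 + (92959)*γ^5 + (131507)*γ^4 + (124362)*γ^3 + (75907)*γ^2 + (25821)*γ + (3348)) * ((1600)*γ^9 + (13840)*γ^8 + (60304)*γ^7 + (160465)*γ^6 + (283397)*γ^5 + (342156)*γ^4 + (277477)*γ^3 + (138393)*γ^2 + (32400)*γ) + 24 * ((1600)*γ^9 + (13840)*γ^8 + (60304)*γ^7 + (160465)*γ^6 + (283397)*γ^5 + (342156)*γ^4 + (277477)*γ^3 + (138393)*γ^2 + (32400)*γ) ^ 2) * ((1600)*γ^9 + (13840)*γ^8 + (60304)*γ^7 + (160465)*γ^6 + (283397)*γ^5 + (342156)*γ^4 + (277477)*γ^3 + (138393)*γ^2 + (32400)*γ) ^ 2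
        = (24576000000000)*γ^36 + (924057600000000)*γ^35 + (17264062464000000)*γ^34 + (212815523020800000)*γ^33 + (1940640760089600000)*γ^32 + (13922211151042560000)*γ^31 + (81633411125458368000)*γ^30 + (401418742848759674880)*γ^29 + (1685974341321343786176)*γ^28 + (6130564305445987626624)*γ^27 + (19497855800787353520675)*γ^26 + (54665512174654631616717)*γ^25 + (135924067673009355491814)*γ^24 + (301112284735608246192468)*γ^23 + (596330869717593607421733)*γ^22 + (1058292480196243787012709)*γ^21 + (1685448840998297254971996)*γ^20 + (2410295472513314193455466)*γ^19 + (3094208052824513908308990)*γ^18 + (3561614497852997215639398)*γ^17 + (3668087675462135239913370)*γ^16 + (3369277912195513986782604)*γ^15 + (2747889758370828456083457)*γ^14 + (1977980713333562939936745)*γ^13 + (1246691311023973107988740)*γ^12 + (680862035904738299308494)*γ^11 + (317729203886551978627137)*γ^10 + (124309589902453914170535)*γ^9 + (39701606644861989226200)*γ^8 + (9949829344016514984000)*γ^7 + (1836595887383410560000)*γ^6 + (222180771813120000000)*γ^5 + (13223952691200000000)*γ^4 := by ring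
    rw [e]
    linarith [pow_pos hγ 2, pow_pos hγ 3, pow_pos hγ 4, pow_pos hγ 5, pow_pos hγ 6, pow_pos hγ 7, pow_pos hγ 8, pow_pos hγ 9, pow_pos hγ 10, pow_pos hγ 11, pow_pos hγ 12, pow_pos hγ 13, pow_pos hγ 14, pow_pos hγ 15, pow_pos hγ 16, pow_pos hγ 17, pow_pos hγ 18, pow_pos hγ 19, pow_pos hγ 20, pow_pos hγ 21, pow_pos hγ 22, pow_pos hγ 23, pow_pos hγ 24, pow_pos hγ 25, pow_pos hγ 26, pow_pos hγ 27, pow_pos hγ 28, pow_pos hγ 29, pow_pos hγ 30, pow_pos hγ 31, pow_pos hγ 32, pow_pos hγ 33, pow_pos hγ 34, pow_pos hγ 35, pow_pos hγ 36, hγ]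
  -- bound x ≤ xb
  have hx : 0 < (γ ^ 2 * a / b) := div_pos (mul_pos (pow_pos hγ 2) ha) hb
  have hxb : 0 < (γ ^ 2 * ((1600)*γ^8 + (11440)*γ^7 + (42544)*γ^6 + (92959)*γ^5 + (131507)*γ^4 + (124362)*γ^3 + (75907)*γ^2 + (25821)*γ + (3348)) / ((1600)*γ^9 + (13840)*γ^8 + (60304)*γ^7 + (160465)*γ^6 + (283397)*γ^5 + (342156)*γ^4 + (277477)*γ^3 + (138393)*γ^2 + (32400)*γ)) := div_pos (mul_pos (pow_pos hγ 2) hA2) hB2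
  have hxle : (γ ^ 2 * a / b) ≤ (γ ^ 2 * ((1600)*γ^8 + (11440)*γ^7 + (42544)*γ^6 + (92959)*γ^5 + (131507)*γ^4 + (124362)*γ^3 + (75907)*γ^2 + (25821)*γ + (3348)) / ((1600)*γ^9 + (13840)*γ^8 + (60304)*γ^7 + (160465)*γ^6 + (283397)*γ^5 + (342156)*γ^4 + (277477)*γ^3 + (138393)*γ^2 + (32400)*γ)) := by
    rw [div_le_div_iff₀ hb hB2]
    nlinarith [mul_le_mul_of_nonneg_left hE (le_of_lt (pow_pos hγ 2))]
  have hAxb : 0 < γ ^ 2 + 6 - (γ ^ 2 * ((1600)*γ^8 + (11440)*γ^7 + (42544)*γ^6 + (92959)*γ^5 + (131507)*γ^4 + (124362)*γ^3 + (75907)*γ^2 + (25821)*γ + (3348)) / ((1600)*γ^9 + (13840)*γ^8 + (60304)*γ^7 + (160465)*γ^6 + (283397)*γ^5 + (342156)*γ^4 + (277477)*γ^3 + (138393)*γ^2 + (32400)*γ)) ^ 2 - 2 * (γ ^ 2 * ((1600)*γ^8 + (11440)*γ^7 + (42544)*γ^6 + (92959)*γ^5 + (131507)*γ^4 + (124362)*γ^3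 + (75907)*γ^2 + (25821)*γ + (3348)) / ((1600)*γ^9 + (13840)*γ^8 + (60304)*γ^7 + (160465)*γ^6 + (283397)*γ^5 + (342156)*γ^4 + (277477)*γ^3 + (138393)*γ^2 + (32400)*γ)) := by
    have hid : γ ^ 2 + 6 - (γ ^ 2 * ((1600)*γ^8 + (11440)*γ^7 + (42544)*γ^6 + (92959)*γ^5 + (131507)*γ^4 + (124362)*γ^3 + (75907)*γ^2 + (25821)*γ + (3348)) / ((1600)*γ^9 + (13840)*γ^8 + (60304)*γ^7 + (160465)*γ^6 + (283397)*γ^5 + (342156)*γ^4 + (277477)*γ^3 + (138393)*γ^2 + (32400)*γ)) ^ 2 - 2 * (γ ^ 2 * ((1600)*γ^8 + (11440)*γ^7 + (42544)*γ^6 + (92959)*γ^5 + (131507)*γ^4 + (124362)*γ^3 + (75907)*γ^2 + (25821)*γ + (3348)) / ((1600)*γ^9 + (13840)*γ^8 + (60304)*γ^7 + (160465)*γ^6 + (283397)*γ^5 + (342156)*γ^4 + (277477)*γ^3 + (138393)*γ^2 + (32400)*γ))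
        = ((γ ^ 2 + 6) * ((1600)*γ^9 + (13840)*γ^8 + (60304)*γ^7 + (160465)*γ^6 + (283397)*γ^5 + (342156)*γ^4 + (277477)*γ^3 + (138393)*γ^2 + (32400)*γ) ^ 2 - γ ^ 4 * ((1600)*γ^8 + (11440)*γ^7 + (42544)*γ^6 + (92959)*γ^5 + (131507)*γ^4 + (124362)*γ^3 + (75907)*γ^2 + (25821)*γ + (3348)) ^ 2 - 2 * γ ^ 2 * ((1600)*γ^8 + (11440)*γ^7 + (42544)*γ^6 + (92959)*γ^5 + (131507)*γ^4 + (124362)*γ^3 + (75907)*γ^2 + (25821)*γ + (3348)) * ((1600)*γ^9 + (13840)*γ^8 + (60304)*γ^7 + (160465)*γ^6 + (283397)*γ^5 + (342156)*γ^4 + (277477)*γ^3 + (138393)*γ^2 + (32400)*γ)) / ((1600)*γ^9 + (13840)*γ^8 + (60304)*γ^7 + (160465)*γ^6 + (283397)*γ^5 + (342156)*γ^4 + (277477)*γ^3 + (138393)*γ^2 + (32400)*γ) ^ 2 := by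
      field_simp
    rw [hid]
    exact div_pos hP1 (pow_pos hB2 2)
  have hkey2 : (γ ^ 2 * ((1600)*γ^8 + (11440)*γ^7 + (42544)*γ^6 + (92959)*γ^5 + (131507)*γ^4 + (124362)*γ^3 + (75907)*γ^2 + (25821)*γ + (3348)) / ((1600)*γ^9 + (13840)*γ^8 + (60304)*γ^7 + (160465)*γ^6 + (283397)*γ^5 + (342156)*γ^4 + (277477)*γ^3 + (138393)*γ^2 + (32400)*γ)) ^ 2 + 9 * (γ ^ 2 * ((1600)*γ^8 + (11440)*γ^7 + (42544)*γ^6 + (92959)*γ^5 + (131507)*γ^4 + (124362)*γ^3 + (75907)*γ^2 + (25821)*γ + (3348)) / ((1600)*γ^9 + (13840)*γ^8 + (60304)*γ^7 + (160465)*γ^6 + (283397)*γ^5 + (342156)*γ^4 + (277477)*γ^3 + (138393)*γ^2 + (32400)*γ)) + 24 < (γ ^ 2 + 6 - (γ ^ 2 * ((1600)*γ^8 + (11440)*γ^7 + (42544)*γ^6 + (92959)*γ^5 + (131507)*γ^4 + (124362)*γ^3 + (75907)*γ^2 + (25821)*γ + (3348)) / ((1600)*γ^9 + (13840)*γ^8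 + (60304)*γ^7 + (160465)*γ^6 + (283397)*γ^5 + (342156)*γ^4 + (277477)*γ^3 + (138393)*γ^2 + (32400)*γ)) ^ 2 - 2 * (γ ^ 2 * ((1600)*γ^8 + (11440)*γ^7 + (42544)*γ^6 + (92959)*γ^5 + (131507)*γ^4 + (124362)*γ^3 + (75907)*γ^2 + (25821)*γ + (3348)) / ((1600)*γ^9 + (13840)*γ^8 + (60304)*γ^7 + (160465)*γ^6 + (283397)*γ^5 + (342156)*γ^4 + (277477)*γ^3 + (138393)*γ^2 + (32400)*γ))) ^ 2 := by
    have hid : (γ ^ 2 + 6 - (γ ^ 2 * ((1600)*γ^8 + (11440)*γ^7 + (42544)*γ^6 + (92959)*γ^5 + (131507)*γ^4 + (124362)*γ^3 + (75907)*γ^2 + (25821)*γ + (3348)) / ((1600)*γ^9 + (13840)*γ^8 + (60304)*γ^7 + (160465)*γ^6 + (283397)*γ^5 + (342156)*γ^4 + (277477)*γ^3 + (138393)*γ^2 + (32400)*γ)) ^ 2 - 2 * (γ ^ 2 * ((1600)*γ^8 + (11440)*γ^7 + (42544)*γ^6 + (92959)*γ^5 + (131507)*γ^4 + (124362)*γ^3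 + (75907)*γ^2 + (25821)*γ + (3348)) / ((1600)*γ^9 + (13840)*γ^8 + (60304)*γ^7 + (160465)*γ^6 + (283397)*γ^5 + (342156)*γ^4 + (277477)*γ^3 + (138393)*γ^2 + (32400)*γ))) ^ 2 - ((γ ^ 2 * ((1600)*γ^8 + (11440)*γ^7 + (42544)*γ^6 + (92959)*γ^5 + (131507)*γ^4 + (124362)*γ^3 + (75907)*γ^2 + (25821)*γ + (3348)) / ((1600)*γ^9 + (13840)*γ^8 + (60304)*γ^7 + (160465)*γ^6 + (283397)*γ^5 + (342156)*γ^4 + (277477)*γ^3 + (138393)*γ^2 + (32400)*γ)) ^ 2 + 9 * (γ ^ 2 * ((1600)*γ^8 + (11440)*γ^7 + (42544)*γ^6 + (92959)*γ^5 + (131507)*γ^4 + (124362)*γ^3 + (75907)*γ^2 + (25821)*γ + (3348)) / ((1600)*γ^9 + (13840)*γ^8 + (60304)*γ^7 + (160465)*γ^6 + (283397)*γ^5 + (342156)*γ^4 + (277477)*γ^3 + (138393)*γ^2 + (32400)*γ)) + 24)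
        = (((γ ^ 2 + 6) * ((1600)*γ^9 + (13840)*γ^8 + (60304)*γ^7 + (160465)*γ^6 + (283397)*γ^5 + (342156)*γ^4 + (277477)*γ^3 + (138393)*γ^2 + (32400)*γ) ^ 2 - γ ^ 4 * ((1600)*γ^8 + (11440)*γ^7 + (42544)*γ^6 + (92959)*γ^5 + (131507)*γ^4 + (124362)*γ^3 + (75907)*γ^2 + (25821)*γ + (3348)) ^ 2 - 2 * γ ^ 2 * ((1600)*γ^8 + (11440)*γ^7 + (42544)*γ^6 + (92959)*γ^5 + (131507)*γ^4 + (124362)*γ^3 + (75907)*γ^2 + (25821)*γ + (3348)) * ((1600)*γ^9 + (13840)*γ^8 + (60304)*γ^7 + (160465)*γ^6 + (283397)*γ^5 + (342156)*γ^4 + (277477)*γ^3 + (138393)*γ^2 + (32400)*γ)) ^ 2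
          - (γ ^ 4 * ((1600)*γ^8 + (11440)*γ^7 + (42544)*γ^6 + (92959)*γ^5 + (131507)*γ^4 + (124362)*γ^3 + (75907)*γ^2 + (25821)*γ + (3348)) ^ 2 + 9 * γ ^ 2 * ((1600)*γ^8 + (11440)*γ^7 + (42544)*γ^6 + (92959)*γ^5 + (131507)*γ^4 + (124362)*γ^3 + (75907)*γ^2 + (25821)*γ + (3348)) * ((1600)*γ^9 + (13840)*γ^8 + (60304)*γ^7 + (160465)*γ^6 + (283397)*γ^5 + (342156)*γ^4 + (277477)*γ^3 + (138393)*γ^2 + (32400)*γ) + 24 * ((1600)*γ^9 + (13840)*γ^8 + (60304)*γ^7 + (160465)*γ^6 + (283397)*γ^5 + (342156)*γ^4 + (277477)*γ^3 + (138393)*γ^2 + (32400)*γ) ^ 2) * ((1600)*γ^9 + (13840)*γ^8 + (60304)*γ^7 + (160465)*γ^6 + (283397)*γ^5 + (342156)*γ^4 + (277477)*γ^3 + (138393)*γ^2 + (32400)*γ) ^ 2) / ((1600)*γ^9 + (13840)*γ^8 + (60304)*γ^7 + (160465)*γ^6 + (283397)*γ^5 + (342156)*γ^4 + (277477)*γ^3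 + (138393)*γ^2 + (32400)*γ) ^ 4 := by
      field_simp
    have h := div_pos hP2 (pow_pos hB2 4)
    rw [← hid] at h
    linarith
  have hAmono : γ ^ 2 + 6 - (γ ^ 2 * ((1600)*γ^8 + (11440)*γ^7 + (42544)*γ^6 + (92959)*γ^5 + (131507)*γ^4 + (124362)*γ^3 + (75907)*γ^2 + (25821)*γ + (3348)) / ((1600)*γ^9 + (13840)*γ^8 + (60304)*γ^7 + (160465)*γ^6 + (283397)*γ^5 + (342156)*γ^4 + (277477)*γ^3 + (138393)*γ^2 + (32400)*γ)) ^ 2 - 2 * (γ ^ 2 * ((1600)*γ^8 + (11440)*γ^7 + (42544)*γ^6 + (92959)*γ^5 + (131507)*γ^4 + (124362)*γ^3 + (75907)*γ^2 + (25821)*γ + (3348)) / ((1600)*γ^9 + (13840)*γ^8 + (60304)*γ^7 + (160465)*γ^6 + (283397)*γ^5 + (342156)*γ^4 + (277477)*γ^3 + (138393)*γ^2 + (32400)*γ)) ≤ γ ^ 2 + 6 - (γ ^ 2 * a / b) ^ 2 - 2 * (γ ^ 2 * a / b) := by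
    nlinarith [mul_nonneg (sub_nonneg.mpr hxle) (by linarith : (0:ℝ) ≤ (γ ^ 2 * ((1600)*γ^8 + (11440)*γ^7 + (42544)*γ^6 + (92959)*γ^5 + (131507)*γ^4 + (124362)*γ^3 + (75907)*γ^2 + (25821)*γ + (3348)) / ((1600)*γ^9 + (13840)*γ^8 + (60304)*γ^7 + (160465)*γ^6 + (283397)*γ^5 + (342156)*γ^4 + (277477)*γ^3 + (138393)*γ^2 + (32400)*γ)) + (γ ^ 2 * a / b) + 2)]
  have hBmono : (γ ^ 2 * a / b) ^ 2 + 9 * (γ ^ 2 * a / b) + 24 ≤ (γ ^ 2 * ((1600)*γ^8 + (11440)*γ^7 + (42544)*γ^6 + (92959)*γ^5 + (131507)*γ^4 + (124362)*γ^3 + (75907)*γ^2 + (25821)*γ + (3348)) / ((1600)*γ^9 + (13840)*γ^8 + (60304)*γ^7 + (160465)*γ^6 + (283397)*γ^5 + (342156)*γ^4 + (277477)*γ^3 + (138393)*γ^2 + (32400)*γ)) ^ 2 + 9 * (γ ^ 2 * ((1600)*γ^8 + (11440)*γ^7 + (42544)*γ^6 + (92959)*γ^5 + (131507)*γ^4 +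 (124362)*γ^3 + (75907)*γ^2 + (25821)*γ + (3348)) / ((1600)*γ^9 + (13840)*γ^8 + (60304)*γ^7 + (160465)*γ^6 + (283397)*γ^5 + (342156)*γ^4 + (277477)*γ^3 + (138393)*γ^2 + (32400)*γ)) + 24 := by
    nlinarith [mul_nonneg (sub_nonneg.mpr hxle) (by linarith : (0:ℝ) ≤ (γ ^ 2 * ((1600)*γ^8 + (11440)*γ^7 + (42544)*γ^6 + (92959)*γ^5 + (131507)*γ^4 + (124362)*γ^3 + (75907)*γ^2 + (25821)*γ + (3348)) / ((1600)*γ^9 + (13840)*γ^8 + (60304)*γ^7 + (160465)*γ^6 + (283397)*γ^5 + (342156)*γ^4 + (277477)*γ^3 + (138393)*γ^2 + (32400)*γ)) + (γ ^ 2 * a / b) + 9)]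
  have hsq : (γ ^ 2 + 6 - (γ ^ 2 * ((1600)*γ^8 + (11440)*γ^7 + (42544)*γ^6 + (92959)*γ^5 + (131507)*γ^4 + (124362)*γ^3 + (75907)*γ^2 + (25821)*γ + (3348)) / ((1600)*γ^9 + (13840)*γ^8 + (60304)*γ^7 + (160465)*γ^6 + (283397)*γ^5 + (342156)*γ^4 + (277477)*γ^3 + (138393)*γ^2 + (32400)*γ)) ^ 2 - 2 * (γ ^ 2 * ((1600)*γ^8 + (11440)*γ^7 + (42544)*γ^6 + (92959)*γ^5 + (131507)*γ^4 + (124362)*γ^3 + (75907)*γ^2 + (25821)*γ + (3348)) / ((1600)*γ^9 + (13840)*γ^8 + (60304)*γ^7 + (160465)*γ^6 + (283397)*γ^5 + (342156)*γ^4 + (277477)*γ^3 + (138393)*γ^2 + (32400)*γ))) ^ 2 ≤ (γ ^ 2 + 6 - (γ ^ 2 * a / b) ^ 2 - 2 * (γ ^ 2 * a / b)) ^ 2 := by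
    nlinarith [hAxb, hAmono]
  have hN : 0 < (γ ^ 2 + 6 - (γ ^ 2 * a / b) ^ 2 - 2 * (γ ^ 2 * a / b)) ^ 2 - ((γ ^ 2 * a / b) ^ 2 + 9 * (γ ^ 2 * a / b) + 24) := by
    linarith
  have hfin := div_pos hN (pow_pos hγ 2)
  rw [hK1, hK2]
  refine lt_of_lt_of_eq hfin ?_
  rw [div_eq_iff (by positivity)]
  field_simp
  ring

end MonatomicGN

theorem monatomic_genuine_nonlinearity (γ : ℝ) (hγ : 0 < γ) :
    0 < γ ^ 2 * (besselK 1 γ / besselK 2 γ) ^ 4 + 4 * γ * (besselK 1 γ / besselK 2 γ) ^ 3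
        - (2 * γ ^ 2 + 9) * (besselK 1 γ / besselK 2 γ) ^ 2
        - (4 * γ + 33 / γ) * (besselK 1 γ / besselK 2 γ) + γ ^ 2 + 12 + 12 / γ ^ 2 :=
  MonatomicGN.main γ hγ
end

section
/- Let c > 0, m > 0, let n, n_L > 0 and set ρ = m·n, ρ_L = m·n_L. Let v, v_L ∈ (−c, c) with v ≠ v_L, let p, p_L, e, e_L > 0, and let s be a real number such that the Rankine–Hugoniot conditions hold: (i) s(ρc/√(c²−v²) − ρ_Lc/√(c²−v_L²)) = ρcv/√(c²−v²) − ρ_Lcv_L/√(c²−v_L²); (ii) s((e+p)v/(c²−v²) − (e_L+p_L)v_L/(c²−v_L²)) = (e+p)v²/(c²−v²) + p − (e_L+p_L)v_L²/(c²−v_L²) − p_L; (iii) s((e+p)v²/(c²−v²) + e − (e_L+p_L)v_L²/(c²−v_L²) − e_L) = (e+p)c²v/(c²−v²) − (e_L+p_L)c²v_L/(c²−v_L²). Then the Taub–Hugoniot relation holds: ((e+p)/n²)·(e+p_L) = ((e_L+p_L)/n_L²)·(e_L+p). -/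
set_option maxHeartbeats 1000000

theorem taub_hugoniot (c m n nL v vL p pL e eL s : ℝ)
    (hc : 0 < c) (hm : 0 < m) (hn : 0 < n) (hnL : 0 < nL)
    (hv : v ∈ Set.Ioo (-c) c) (hvL : vL ∈ Set.Ioo (-c) c) (hvv : v ≠ vL)
    (hp : 0 < p) (hpL : 0 < pL) (he : 0 < e) (heL : 0 < eL)
    (rh1 : s * ((m * n) * c / Real.sqrt (c ^ 2 - v ^ 2)
            - (m * nL) * c / Real.sqrt (c ^ 2 - vL ^ 2))
        = (m * n) * c * v / Real.sqrt (c ^ 2 - v ^ 2)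
            - (m * nL) * c * vL / Real.sqrt (c ^ 2 - vL ^ 2))
    (rh2 : s * ((e + p) * v / (c ^ 2 - v ^ 2) - (eL + pL) * vL / (c ^ 2 - vL ^ 2))
        = (e + p) * v ^ 2 / (c ^ 2 - v ^ 2) + p
            - (eL + pL) * vL ^ 2 / (c ^ 2 - vL ^ 2) - pL)
    (rh3 : s * ((e + p) * v ^ 2 / (c ^ 2 - v ^ 2) + e
            - (eL + pL) * vL ^ 2 / (c ^ 2 - vL ^ 2) - eL)
        = (e + p) * c ^ 2 * v / (c ^ 2 - v ^ 2)
            - (eL + pL) * c ^ 2 * vL / (c ^ 2 - vL ^ 2)) :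
    (e + p) / n ^ 2 * (e + pL) = (eL + pL) / nL ^ 2 * (eL + p) := by
  obtain ⟨hv1, hv2⟩ := hv
  obtain ⟨hvL1, hvL2⟩ := hvL
  have hcv : (0:ℝ) < c ^ 2 - v ^ 2 := by nlinarith
  have hcvL : (0:ℝ) < c ^ 2 - vL ^ 2 := by nlinarith
  set A := Real.sqrt (c ^ 2 - v ^ 2) with hAdef
  set B := Real.sqrt (c ^ 2 - vL ^ 2) with hBdef
  have hA0 : 0 < A := Real.sqrt_pos.mpr hcv
  have hB0 : 0 < B := Real.sqrt_pos.mpr hcvL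
  have hA2 : A ^ 2 = c ^ 2 - v ^ 2 := Real.sq_sqrt hcv.le
  have hB2 : B ^ 2 = c ^ 2 - vL ^ 2 := Real.sq_sqrt hcvL.le
  have hAne : A ≠ 0 := ne_of_gt hA0
  have hBne : B ≠ 0 := ne_of_gt hB0
  have hnne : n ≠ 0 := ne_of_gt hn
  have hnLne : nL ≠ 0 := ne_of_gt hnL
  have hcne : c ≠ 0 := ne_of_gt hc
  have hmne : m ≠ 0 := ne_of_gt hm
  -- clear denominators in rh1
  have e1 : n * B * (v - s) = nL * A * (vL - s) := by
    field_simp at rh1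
    have e1' : (m * c) * (n * B * (v - s)) = (m * c) * (nL * A * (vL - s)) := by
      linear_combination -(m * c) * rh1
    exact mul_left_cancel₀ (mul_ne_zero hmne hcne) e1'
  -- rewrite rh2/rh3 with A, B and clear denominators
  rw [← hA2, ← hB2] at rh2 rh3
  have hA2ne : A ^ 2 ≠ 0 := pow_ne_zero 2 hAne
  have hB2ne : B ^ 2 ≠ 0 := pow_ne_zero 2 hBne
  field_simp at rh2 rh3
  -- momentum equation
  have eM : (e + p) * v * (v - s) * B ^ 2 - (eL + pL) * vL * (vL - s) * A ^ 2
      = (pL - p) * A ^ 2 * B ^ 2 := by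
    linear_combination -rh2
  -- energy minus s*momentum in lab frame
  have eE' : c ^ 2 * ((e + p) * (v - s) * B ^ 2 - (eL + pL) * (vL - s) * A ^ 2)
      = s * (pL - p) * A ^ 2 * B ^ 2 := by
    linear_combination -rh3 + s * (e + p) * B ^ 2 * hA2 - s * (eL + pL) * A ^ 2 * hB2
  -- frame-invariant energy flux
  have eR : (e + p) * (v - s) * (c ^ 2 - s * v) * B ^ 2
      = (eL + pL) * (vL - s) * (c ^ 2 - s * vL) * A ^ 2 := by
    linear_combination eE' - s * eM
  -- shock-frame momentum
  have eMs : c ^ 2 * ((e + p) * (v - s) ^ 2 * B ^ 2 - (eL + pL) * (vL - s) ^ 2 * A ^ 2)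
      = (c ^ 2 - s ^ 2) * (pL - p) * A ^ 2 * B ^ 2 := by
    linear_combination c ^ 2 * eM - s * eE'
  -- combination needed for the lightlike case
  have eXmY : (c ^ 2 - s ^ 2) * ((e + p) * v * B ^ 2 - (eL + pL) * vL * A ^ 2)
      = s * A ^ 2 * B ^ 2 * (((e + p) - (eL + pL)) - 2 * (p - pL)) := by
    linear_combination -rh3 + s * eM
  have e1sq : n ^ 2 * B ^ 2 * (v - s) ^ 2 = nL ^ 2 * A ^ 2 * (vL - s) ^ 2 := by
    linear_combination (n * B * (v - s) + nL * A * (vL - s)) * e1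
  -- v ≠ s and vL ≠ s
  have hvs : v - s ≠ 0 := by
    intro h
    have h0 : nL * A * (vL - s) = 0 := by linear_combination -e1 + n * B * h
    rcases mul_eq_zero.mp h0 with h2 | h2
    · exact absurd h2 (mul_ne_zero hnLne hAne)
    · exact hvv (by linarith)
  have hvLs : vL - s ≠ 0 := by
    intro h
    have h0 : n * B * (v - s) = 0 := by linear_combination e1 + nL * A * h
    rcases mul_eq_zero.mp h0 with h2 | h2
    · exact absurd h2 (mul_ne_zero hnne hBne)
    · exact hvv (by linarith)
  by_cases hW : c ^ 2 - s ^ 2 = 0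
  · -- lightlike shock speed
    have hs : s ≠ 0 := by
      intro h
      rw [h] at hW
      nlinarith
    have q1 : (e + p) * (v - s) ^ 2 * B ^ 2 = (eL + pL) * (vL - s) ^ 2 * A ^ 2 := by
      have q1' : c ^ 2 * ((e + p) * (v - s) ^ 2 * B ^ 2)
          = c ^ 2 * ((eL + pL) * (vL - s) ^ 2 * A ^ 2) := by
        linear_combination eMs + (pL - p) * A ^ 2 * B ^ 2 * hW
      exact mul_left_cancel₀ (pow_ne_zero 2 hcne) q1'
    have q2 : (e + p) - (eL + pL) = 2 * (p - pL) := by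
      have q2' : (s * (A ^ 2 * B ^ 2)) * ((e + p) - (eL + pL))
          = (s * (A ^ 2 * B ^ 2)) * (2 * (p - pL)) := by
        linear_combination -eXmY + ((e + p) * v * B ^ 2 - (eL + pL) * vL * A ^ 2) * hW
      exact mul_left_cancel₀ (by positivity) q2'
    have q3 : (e + p) * nL ^ 2 = (eL + pL) * n ^ 2 := by
      have q3' : (A ^ 2 * (vL - s) ^ 2) * ((e + p) * nL ^ 2)
          = (A ^ 2 * (vL - s) ^ 2) * ((eL + pL) * n ^ 2) := by
        linear_combination n ^ 2 * q1 - (e + p) * e1sq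
      exact mul_left_cancel₀ (by positivity) q3'
    field_simp
    linear_combination (((e + p) + (eL + pL)) / 2) * q3
      + (((e + p) * nL ^ 2 + (eL + pL) * n ^ 2) / 2) * q2
  · -- generic case
    have key : (c ^ 2 - s ^ 2) * (A ^ 2 * B ^ 2)
        * ((e + p) ^ 2 * (v - s) ^ 2 * B ^ 2 - (eL + pL) ^ 2 * (vL - s) ^ 2 * A ^ 2
          - (p - pL) * ((e + p) * (v - s) ^ 2 * B ^ 2 + (eL + pL) * (vL - s) ^ 2 * A ^ 2))
        = 0 := by
      linear_combination
        ((e + p) * (v - s) * (c ^ 2 - s * v) * B ^ 2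
          + (eL + pL) * (vL - s) * (c ^ 2 - s * vL) * A ^ 2) * eR
        - ((e + p) * (v - s) ^ 2 * B ^ 2 + (eL + pL) * (vL - s) ^ 2 * A ^ 2) * eMs
        + (e + p) ^ 2 * (v - s) ^ 2 * (c ^ 2 - s ^ 2) * B ^ 4 * hA2
        - (eL + pL) ^ 2 * (vL - s) ^ 2 * (c ^ 2 - s ^ 2) * A ^ 4 * hB2
    have hU : (e + p) ^ 2 * (v - s) ^ 2 * B ^ 2 - (eL + pL) ^ 2 * (vL - s) ^ 2 * A ^ 2
        - (p - pL) * ((e + p) * (v - s) ^ 2 * B ^ 2 + (eL + pL) * (vL - s) ^ 2 * A ^ 2)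
        = 0 := by
      rcases mul_eq_zero.mp key with h | h
      · exact absurd h (mul_ne_zero hW (by positivity))
      · exact h
    have hT' : (nL ^ 2 * A ^ 2 * (vL - s) ^ 2)
        * ((e + p) ^ 2 * nL ^ 2 - (eL + pL) ^ 2 * n ^ 2
          - (p - pL) * ((e + p) * nL ^ 2 + (eL + pL) * n ^ 2)) = 0 := by
      linear_combination n ^ 2 * nL ^ 2 * hU
        - (e + p) * nL ^ 2 * ((e + p) - p + pL) * e1sq
    have hT : (e + p) ^ 2 * nL ^ 2 - (eL + pL) ^ 2 * n ^ 2
        - (p - pL) * ((e + p) * nL ^ 2 + (eL + pL) * n ^ 2) = 0 := by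
      rcases mul_eq_zero.mp hT' with h | h
      · exact absurd h (by positivity)
      · exact h
    field_simp
    linear_combination hT
end

section
/- Let c > 0, m > 0, let n, n_L > 0 and set ρ = m·n, ρ_L = m·n_L. Let v, v_L ∈ (−c, c) with v ≠ v_L, let p, p_L, e, e_L > 0, and let s be a real number such that the Rankine–Hugoniot conditions hold: (i) s(ρc/√(c²−v²) − ρ_Lc/√(c²−v_L²)) = ρcv/√(c²−v²) − ρ_Lcv_L/√(c²−v_L²); (ii) s((e+p)v/(c²−v²) − (e_L+p_L)v_L/(c²−v_L²)) = (e+p)v²/(c²−v²) + p − (e_L+p_L)v_L²/(c²−v_L²) − p_L; (iii) s((e+p)v²/(c²−v²) + e − (e_L+p_L)v_L²/(c²−v_L²) − e_L) = (e+p)c²v/(c²−v²) − (e_L+p_L)c²v_L/(c²−v_L²). Then the following two identities hold: n·(e_L+p_L)·(c² − v·v_L) = n_L·(e+p_L)·√(c²−v²)·√(c²−v_L²), and n·(p+e_L)·√(c²−v_L²)·√(c²−v²) = n_L·(e+p)·(c² − v·v_L). -/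
theorem rankine_hugoniot_identities (c m n nL v vL p pL e eL s : ℝ)
    (hc : 0 < c) (hm : 0 < m) (hn : 0 < n) (hnL : 0 < nL)
    (hv : v ∈ Set.Ioo (-c) c) (hvL : vL ∈ Set.Ioo (-c) c) (hvv : v ≠ vL)
    (hp : 0 < p) (hpL : 0 < pL) (he : 0 < e) (heL : 0 < eL)
    (rh1 : s * ((m * n) * c / Real.sqrt (c ^ 2 - v ^ 2)
            - (m * nL) * c / Real.sqrt (c ^ 2 - vL ^ 2))
        = (m * n) * c * v / Real.sqrt (c ^ 2 - v ^ 2)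
            - (m * nL) * c * vL / Real.sqrt (c ^ 2 - vL ^ 2))
    (rh2 : s * ((e + p) * v / (c ^ 2 - v ^ 2) - (eL + pL) * vL / (c ^ 2 - vL ^ 2))
        = (e + p) * v ^ 2 / (c ^ 2 - v ^ 2) + p
            - (eL + pL) * vL ^ 2 / (c ^ 2 - vL ^ 2) - pL)
    (rh3 : s * ((e + p) * v ^ 2 / (c ^ 2 - v ^ 2) + e
            - (eL + pL) * vL ^ 2 / (c ^ 2 - vL ^ 2) - eL)
        = (e + p) * c ^ 2 * v / (c ^ 2 - v ^ 2)
            - (eL + pL) * c ^ 2 * vL / (c ^ 2 - vL ^ 2)) :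
    n * (eL + pL) * (c ^ 2 - v * vL)
        = nL * (e + pL) * Real.sqrt (c ^ 2 - v ^ 2) * Real.sqrt (c ^ 2 - vL ^ 2) ∧
      n * (p + eL) * Real.sqrt (c ^ 2 - vL ^ 2) * Real.sqrt (c ^ 2 - v ^ 2)
        = nL * (e + p) * (c ^ 2 - v * vL) := by
  obtain ⟨hv1, hv2⟩ := hv
  obtain ⟨hvL1, hvL2⟩ := hvL
  have hx : (0:ℝ) < c - v := by linarith
  have hy : (0:ℝ) < c + v := by linarith
  have hxL : (0:ℝ) < c - vL := by linarith
  have hyL : (0:ℝ) < c + vL := by linarith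
  have hq : (0:ℝ) < c ^ 2 - v ^ 2 := by nlinarith
  have hqL : (0:ℝ) < c ^ 2 - vL ^ 2 := by nlinarith
  set w := Real.sqrt (c ^ 2 - v ^ 2) with hwdef
  set wL := Real.sqrt (c ^ 2 - vL ^ 2) with hwLdef
  have hwpos : 0 < w := Real.sqrt_pos.mpr hq
  have hwLpos : 0 < wL := Real.sqrt_pos.mpr hqL
  have hw2 : w ^ 2 = c ^ 2 - v ^ 2 := Real.sq_sqrt hq.le
  have hwL2 : wL ^ 2 = c ^ 2 - vL ^ 2 := Real.sq_sqrt hqL.le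
  have hD : c * (v - vL) ≠ 0 := by
    have : v - vL ≠ 0 := sub_ne_zero.mpr hvv
    positivity
  -- polynomial forms of rh2, rh3
  have H2 : s * ((e + p) * v * (c ^ 2 - vL ^ 2) - (eL + pL) * vL * (c ^ 2 - v ^ 2))
      = (e + p) * v ^ 2 * (c ^ 2 - vL ^ 2) + p * ((c ^ 2 - v ^ 2) * (c ^ 2 - vL ^ 2))
        - (eL + pL) * vL ^ 2 * (c ^ 2 - v ^ 2) - pL * ((c ^ 2 - v ^ 2) * (c ^ 2 - vL ^ 2)) := by
    field_simp at rh2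
    linear_combination rh2
  have H3 : s * ((e + p) * v ^ 2 * (c ^ 2 - vL ^ 2) + e * ((c ^ 2 - v ^ 2) * (c ^ 2 - vL ^ 2))
        - (eL + pL) * vL ^ 2 * (c ^ 2 - v ^ 2) - eL * ((c ^ 2 - v ^ 2) * (c ^ 2 - vL ^ 2)))
      = (e + p) * c ^ 2 * v * (c ^ 2 - vL ^ 2) - (eL + pL) * c ^ 2 * vL * (c ^ 2 - v ^ 2) := by
    field_simp at rh3
    linear_combination rh3
  -- mass equation, cleared
  have hE1 : n * (s - v) * wL = nL * (s - vL) * w := by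
    have hne : (m * c) ≠ 0 := by positivity
    refine mul_left_cancel₀ hne ?_
    field_simp at rh1
    linear_combination (m * c) * rh1
  -- characteristic forms
  have hP : s * ((e * c + p * v) * (c - vL) - (eL * c + pL * vL) * (c - v))
      = c * ((e * v + p * c) * (c - vL) - (eL * vL + pL * c) * (c - v)) := by
    have hne : ((c + v) * (c + vL)) ≠ 0 := by positivity
    refine mul_left_cancel₀ hne ?_
    linear_combination H3 + c * H2
  have hM : s * ((e * c - p * v) * (c + vL) - (eL * c - pL * vL) * (c + v))
      = c * ((e * v - p * c) * (c + vL) - (eL * vL - pL * c) * (c + v)) := by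
    have hne : ((c - v) * (c - vL)) ≠ 0 := by positivity
    refine mul_left_cancel₀ hne ?_
    linear_combination H3 - c * H2
  -- key bilinear relations
  have hE1A : n * wL * (c - v) * ((p - pL) * (c ^ 2 - v * vL) + (p + eL) * (c * (v - vL)))
      = nL * w * (c - vL) * ((p - pL) * (c ^ 2 - v * vL) + (e + pL) * (c * (v - vL))) := by
    linear_combination ((e * c + p * v) * (c - vL) - (eL * c + pL * vL) * (c - v)) * hE1
      - (n * wL - nL * w) * hP
  have hE1Ap : n * wL * (c + v) * ((p - pL) * (c ^ 2 - v * vL) - (p + eL) * (c * (v - vL)))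
      = nL * w * (c + vL) * ((p - pL) * (c ^ 2 - v * vL) - (e + pL) * (c * (v - vL))) := by
    linear_combination (n * wL - nL * w) * hM
      - ((e * c - p * v) * (c + vL) - (eL * c - pL * vL) * (c + v)) * hE1
  constructor
  · have hne : (2 * (c * (v - vL)) * ((c - vL) * (c + vL))) ≠ 0 := by
      apply mul_ne_zero (mul_ne_zero two_ne_zero hD)
      positivity
    refine mul_left_cancel₀ hne ?_
    linear_combination ((c + vL) * wL) * hE1A - ((c - vL) * wL) * hE1Ap
      - (n * (c - v) * (c + vL) * ((p - pL) * (c ^ 2 - v * vL) + (p + eL) * (c * (v - vL)))) * hwL2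
      + (n * (c + v) * (c - vL) * ((p - pL) * (c ^ 2 - v * vL) - (p + eL) * (c * (v - vL)))) * hwL2
  · have hne : (2 * (c * (v - vL)) * ((c - v) * (c + v))) ≠ 0 := by
      apply mul_ne_zero (mul_ne_zero two_ne_zero hD)
      positivity
    refine mul_left_cancel₀ hne ?_
    linear_combination ((c + v) * w) * hE1A - ((c - v) * w) * hE1Ap
      + (nL * (c + v) * (c - vL) * ((p - pL) * (c ^ 2 - v * vL) + (e + pL) * (c * (v - vL)))) * hw2
      - (nL * (c - v) * (c + vL) * ((p - pL) * (c ^ 2 - v * vL) - (e + pL) * (c * (v - vL)))) * hw2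
end
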